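/- arXiv:1609.02865 — 4 statements merged into one kernel-verified Lean document; each statement's English description precedes it below -/
import Mathlib

section
/- Let S be a non-discrete locally compact semitopological polycyclic monoid with finite generating set Λ, and let U₀ be a compact neighborhood of the zero 0 in S. Then the set S∖U₀ is finite. -/
set_option linter.unusedSectionVars false
set_option maxHeartbeats 1000000


/-- A polycyclic monoid: an inverse monoid `S` with a two-sided zero `0 ≠ 1`
(encoded via `MonoidWithZero`), with inversion `inv` (the unique inverse
in the sense of inverse semigroups), generated (as a semigroup) by a set `Λ`
with `x * inv x = 1` for `x ∈ Λ` and `x * inv y = 0` for distinct `x, y ∈ Λ`. -/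
structure IsPolycyclicMonoid (S : Type*) [MonoidWithZero S] (inv : S → S) (Λ : Set S) : Prop where
  inv_inverse : ∀ a : S, a * inv a * a = a ∧ inv a * a * inv a = inv a
  inv_unique : ∀ a b : S, a * b * a = a → b * a * b = b → b = inv a
  zero_ne_one : (0 : S) ≠ 1
  gen_unit : ∀ x ∈ Λ, x * inv x = 1
  gen_zero : ∀ x ∈ Λ, ∀ y ∈ Λ, x ≠ y → x * inv y = 0
  generates : Subsemigroup.closure (Λ ∪ inv '' Λ) = ⊤

/-- The Green `R`-class of `u`: the set of `x` with `xS = uS`. -/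
def greenR {S : Type*} [Mul S] (u : S) : Set S :=
  {x | {t | ∃ s, t = x * s} = {t | ∃ s, t = u * s}}

namespace Poly

variable {S : Type*} [MonoidWithZero S] {inv : S → S} {Λ : Set S}

/-- `l` is a word over the alphabet `Λ`. -/
def word (Λ : Set S) (l : List S) : Prop := ∀ y ∈ l, y ∈ Λ

/-- normal form `inv u * v`. -/
def el (inv : S → S) (u v : List S) : S := inv u.prod * v.prod

def winv (inv : S → S) (l : List S) : List S := (l.map inv).reverse

lemma word_nil : word Λ ([] : List S) := fun y hy => absurd hy List.not_mem_nil

lemma word_append {l m : List S} (h1 : word Λ l) (h2 : word Λ m) : word Λ (l ++ m) := by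
  intro y hy; rcases List.mem_append.mp hy with h | h
  · exact h1 y h
  · exact h2 y h

lemma word_of_append_left {l m : List S} (h : word Λ (l ++ m)) : word Λ l :=
  fun y hy => h y (List.mem_append_left _ hy)

lemma word_of_append_right {l m : List S} (h : word Λ (l ++ m)) : word Λ m :=
  fun y hy => h y (List.mem_append_right _ hy)

lemma word_singleton {z : S} (hz : z ∈ Λ) : word Λ [z] := by
  intro y hy; rcases List.mem_singleton.mp hy with rfl; exact hz

lemma word_take {l : List S} (h : word Λ l) (n : ℕ) : word Λ (l.take n) :=
  fun y hy => h y (List.take_subset n l hy)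

lemma word_drop {l : List S} (h : word Λ l) (n : ℕ) : word Λ (l.drop n) :=
  fun y hy => h y (List.drop_subset n l hy)

lemma word_replicate {x : S} (hx : x ∈ Λ) (n : ℕ) : word Λ (List.replicate n x) :=
  fun y hy => (List.eq_of_mem_replicate hy) ▸ hx

variable (hS : IsPolycyclicMonoid S inv Λ)
include hS

lemma inv_one : inv (1 : S) = 1 := by
  have h := (hS.inv_inverse 1).1
  simpa using h

lemma prod_winv {l : List S} (h : word Λ l) : l.prod * (winv inv l).prod = 1 := by
  induction l with
  | nil => simp [winv]
  | cons z t ih =>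
      have hw : winv inv (z :: t) = winv inv t ++ [inv z] := by
        simp [winv]
      rw [List.prod_cons, hw, List.prod_append, List.prod_singleton, mul_assoc,
        ← mul_assoc t.prod, ih (fun y hy => h y (List.mem_cons_of_mem _ hy)), one_mul,
        hS.gen_unit z (h z List.mem_cons_self)]

lemma inv_prod {l : List S} (h : word Λ l) : inv l.prod = (winv inv l).prod := by
  have hab : l.prod * (winv inv l).prod = 1 := prod_winv hS h
  refine (hS.inv_unique l.prod _ ?_ ?_).symm
  · rw [hab, one_mul]
  · rw [mul_assoc, hab, mul_one]

lemma prod_inv {l : List S} (h : word Λ l) : l.prod * inv l.prod = 1 := by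
  rw [inv_prod hS h]; exact prod_winv hS h

lemma inv_mul_inv {l m : List S} (h1 : word Λ l) (h2 : word Λ m) :
    inv l.prod * inv m.prod = inv ((m ++ l).prod) := by
  rw [inv_prod hS h1, inv_prod hS h2, inv_prod hS (word_append h2 h1)]
  simp [winv, List.reverse_append, List.prod_append]

lemma inv_concat {l : List S} {z : S} (h : word Λ l) (hz : z ∈ Λ) :
    inv ((l ++ [z]).prod) = inv z * inv l.prod := by
  rw [← inv_mul_inv hS (word_singleton hz) h, List.prod_singleton]

lemma cancel_append {c d m : List S} (hc : word Λ c) (hd : word Λ d) (hm : word Λ m) :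
    (c ++ m).prod * inv ((d ++ m).prod) = c.prod * inv d.prod := by
  induction m using List.reverseRecOn with
  | nil => simp
  | append_singleton m₀ z ih =>
      have hz : z ∈ Λ := hm z (List.mem_append_right _ (List.mem_singleton_self z))
      have hm₀ : word Λ m₀ := word_of_append_left hm
      rw [← List.append_assoc, ← List.append_assoc, List.prod_append,
        List.prod_singleton, inv_concat hS (word_append hd hm₀) hz, mul_assoc,
        ← mul_assoc z, hS.gen_unit z hz, one_mul]
      exact ih hm₀

/-- The fundamental reduction trichotomy for `c.prod * inv d.prod`. -/
lemma reduce : ∀ {c d : List S}, word Λ c → word Λ d →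
    (∃ e, word Λ e ∧ c = e ++ d ∧ c.prod * inv d.prod = e.prod) ∨
    (∃ e, word Λ e ∧ d = e ++ c ∧ c.prod * inv d.prod = inv e.prod) ∨
    (c.prod * inv d.prod = 0 ∧ ∃ y ∈ Λ, ∃ z ∈ Λ, y ≠ z) := by
  intro c d
  induction d using List.reverseRecOn generalizing c with
  | nil =>
      intro hc _
      exact Or.inl ⟨c, hc, by simp, by simp [inv_one hS]⟩
  | append_singleton d₀ z ih =>
      intro hc hd
      have hz : z ∈ Λ := hd z (List.mem_append_right _ (List.mem_singleton_self z))
      have hd₀ : word Λ d₀ := word_of_append_left hd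
      rcases List.eq_nil_or_concat c with rfl | ⟨c₀, y, rfl⟩
      · refine Or.inr (Or.inl ⟨d₀ ++ [z], hd, by simp, by simp⟩)
      · rw [List.concat_eq_append] at *
        have hy : y ∈ Λ := hc y (List.mem_append_right _ (List.mem_singleton_self y))
        have hc₀ : word Λ c₀ := word_of_append_left hc
        have hprod : (c₀ ++ [y]).prod * inv ((d₀ ++ [z]).prod)
            = c₀.prod * (y * inv z) * inv d₀.prod := by
          rw [List.prod_append, List.prod_singleton, inv_concat hS hd₀ hz]
          rw [mul_assoc, mul_assoc, mul_assoc, ← mul_assoc y]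
        by_cases hyz : y = z
        · subst hyz
          rw [hprod, hS.gen_unit y hy, mul_one]
          rcases ih hc₀ hd₀ with ⟨e, he, hce, hval⟩ | ⟨e, he, hde, hval⟩ | ⟨hval, hw⟩
          · exact Or.inl ⟨e, he, by rw [hce, List.append_assoc], hval⟩
          · exact Or.inr (Or.inl ⟨e, he, by rw [hde, List.append_assoc], hval⟩)
          · exact Or.inr (Or.inr ⟨hval, hw⟩)
        · refine Or.inr (Or.inr ⟨?_, y, hy, z, hz, hyz⟩)
          rw [hprod, hS.gen_zero y hy z hz hyz, mul_zero, zero_mul]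

lemma sandwich {u v : List S} (hu : word Λ u) (hv : word Λ v) :
    u.prod * el inv u v * inv v.prod = 1 := by
  unfold el
  rw [← mul_assoc, prod_inv hS hu, one_mul, prod_inv hS hv]

lemma el_ne_zero {u v : List S} (hu : word Λ u) (hv : word Λ v) : el inv u v ≠ 0 := by
  intro h
  have h1 := sandwich hS hu hv
  rw [h, mul_zero, zero_mul] at h1
  exact hS.zero_ne_one h1

lemma mem_closure_top (a : S) : a ∈ Subsemigroup.closure (Λ ∪ inv '' Λ) := by
  rw [hS.generates]; trivial

omit hS in
lemma el_mul_el (u v s t : List S) :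
    el inv u v * el inv s t = inv u.prod * ((v.prod * inv s.prod) * t.prod) := by
  simp [el, mul_assoc]

/-- Structure theorem: every element is zero or of the form `inv u * v`. -/
lemma struct (a : S) : a = 0 ∨ ∃ u v, word Λ u ∧ word Λ v ∧ a = el inv u v := by
  refine Subsemigroup.closure_induction ?_ ?_ (mem_closure_top hS a)
  · rintro x (hx | ⟨y, hy, rfl⟩)
    · exact Or.inr ⟨[], [x], word_nil, word_singleton hx, by simp [el, inv_one hS]⟩
    · exact Or.inr ⟨[y], [], word_singleton hy, word_nil, by simp [el]⟩
  · rintro a b _ _ (rfl | ⟨u, v, hu, hv, rfl⟩) hb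
    · exact Or.inl (zero_mul b)
    rcases hb with rfl | ⟨s, t, hs, ht, rfl⟩
    · exact Or.inl (mul_zero _)
    rw [el_mul_el]
    rcases reduce hS hv hs with ⟨e, he, _, hval⟩ | ⟨e, he, _, hval⟩ | ⟨hval, _⟩
    · refine Or.inr ⟨u, e ++ t, hu, word_append he ht, ?_⟩
      rw [hval]; simp [el, List.prod_append, mul_assoc]
    · refine Or.inr ⟨e ++ u, t, word_append he hu, ht, ?_⟩
      rw [hval, ← mul_assoc, inv_mul_inv hS hu he]; rfl
    · rw [hval, zero_mul, mul_zero]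
      exact Or.inl rfl

/-- There are two distinct generators. -/
lemma exists_pair : ∃ y ∈ Λ, ∃ z ∈ Λ, y ≠ z := by
  by_contra hcon
  push_neg at hcon
  have key : ∀ a : S, ∃ u v, word Λ u ∧ word Λ v ∧ a = el inv u v := by
    intro a
    refine Subsemigroup.closure_induction ?_ ?_ (mem_closure_top hS a)
    · rintro x (hx | ⟨y, hy, rfl⟩)
      · exact ⟨[], [x], word_nil, word_singleton hx, by simp [el, inv_one hS]⟩
      · exact ⟨[y], [], word_singleton hy, word_nil, by simp [el]⟩
    · rintro a b _ _ ⟨u, v, hu, hv, rfl⟩ ⟨s, t, hs, ht, rfl⟩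
      rw [el_mul_el]
      rcases reduce hS hv hs with ⟨e, he, _, hval⟩ | ⟨e, he, _, hval⟩ | ⟨_, y, hy, z, hz, hyz⟩
      · exact ⟨u, e ++ t, hu, word_append he ht, by
          rw [hval]; simp [el, List.prod_append, mul_assoc]⟩
      · exact ⟨e ++ u, t, word_append he hu, ht, by
          rw [hval, ← mul_assoc, inv_mul_inv hS hu he]; rfl⟩
      · exact absurd (hcon y hy z hz) hyz
  obtain ⟨u, v, hu, hv, h0⟩ := key 0
  exact el_ne_zero hS hu hv h0.symm

lemma pick_ne (z : S) : ∃ y ∈ Λ, y ≠ z := by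
  obtain ⟨a, ha, b, hb, hab⟩ := exists_pair hS
  by_cases h : a = z
  · exact ⟨b, hb, by rw [← h]; exact hab.symm⟩
  · exact ⟨a, ha, h⟩

/-- `inv w * w ≠ 1` for nonempty words. -/
lemma eps_ne_one {w : List S} (hw : word Λ w) (hne : w ≠ []) :
    inv w.prod * w.prod ≠ 1 := by
  intro h1
  obtain ⟨z, rest, rfl⟩ : ∃ z rest, w = z :: rest := by
    cases w with
    | nil => exact absurd rfl hne
    | cons z rest => exact ⟨z, rest, rfl⟩
  have hz : z ∈ Λ := hw z List.mem_cons_self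
  have hrest : word Λ rest := fun y hy => hw y (List.mem_cons_of_mem _ hy)
  set a := (z :: rest).prod with ha
  have hab : a * inv a = 1 := prod_inv hS hw
  have hzr : z * (rest.prod * inv a) = 1 := by
    rw [← mul_assoc, ← List.prod_cons, ← ha, hab]
  have hinvz : rest.prod * inv a = inv z := by
    refine hS.inv_unique z _ ?_ ?_
    · rw [hzr, one_mul]
    · rw [mul_assoc, hzr, mul_one]
  obtain ⟨y, hy, hyz⟩ := pick_ne hS z
  have h0 : y * inv z = 0 := hS.gen_zero y hy z hz hyz
  have hyr : y * rest.prod = 0 := by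
    have : y * rest.prod * (inv a * a) = 0 := by
      rw [← mul_assoc, mul_assoc y, hinvz, h0, zero_mul]
    rwa [h1, mul_one] at this
  have hy0 : y = 0 := by
    have := prod_winv hS hrest
    calc y = y * (rest.prod * (winv inv rest).prod) := by rw [this, mul_one]
    _ = y * rest.prod * (winv inv rest).prod := by rw [mul_assoc]
    _ = 0 := by rw [hyr, zero_mul]
  have := hS.gen_unit y hy
  rw [hy0, zero_mul] at this
  exact hS.zero_ne_one this

lemma word_eq_nil {w : List S} (hw : word Λ w) (h : w.prod = 1) : w = [] := by
  by_contra hne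
  exact eps_ne_one hS hw hne (by rw [h, inv_one hS, one_mul])

lemma eq_one_of_inv_eq_one {a : S} (h : inv a = 1) : a = 1 := by
  have h2 := (hS.inv_inverse a).2
  rw [h, one_mul, mul_one] at h2
  exact h2

lemma cancel_eq {c d : List S} (hc : word Λ c) (hd : word Λ d)
    (h : c.prod * inv d.prod = 1) : c = d := by
  rcases reduce hS hc hd with ⟨e, he, hce, hval⟩ | ⟨e, he, hde, hval⟩ | ⟨hval, _⟩
  · rw [hval] at h
    rw [hce, word_eq_nil hS he h, List.nil_append]
  · rw [hval] at h
    rw [hde, word_eq_nil hS he (eq_one_of_inv_eq_one hS h), List.nil_append]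
  · rw [hval] at h
    exact absurd h hS.zero_ne_one

lemma pp_one {e₁ e₂ : List S} (h1 : word Λ e₁) (h2 : word Λ e₂)
    (h : e₁.prod * e₂.prod = 1) : e₁ = [] ∧ e₂ = [] := by
  rw [← List.prod_append] at h
  have := word_eq_nil hS (word_append h1 h2) h
  exact List.append_eq_nil_iff.mp this

lemma qq_one {e₁ e₂ : List S} (h1 : word Λ e₁) (h2 : word Λ e₂)
    (h : inv e₁.prod * inv e₂.prod = 1) : e₁ = [] ∧ e₂ = [] := by
  rw [inv_mul_inv hS h1 h2] at h
  have := word_eq_nil hS (word_append h2 h1) (eq_one_of_inv_eq_one hS h)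
  have := List.append_eq_nil_iff.mp this
  exact ⟨this.2, this.1⟩

lemma qp_one {e₁ e₂ : List S} (h1 : word Λ e₁) (h2 : word Λ e₂)
    (h : inv e₁.prod * e₂.prod = 1) : e₁ = [] ∧ e₂ = [] := by
  have h2' : e₁.prod = e₂.prod := by
    conv_lhs => rw [← mul_one e₁.prod, ← h, ← mul_assoc, prod_inv hS h1, one_mul]
  have h3 : e₁.prod * inv e₂.prod = 1 := by rw [h2', prod_inv hS h2]
  obtain rfl := cancel_eq hS h1 h2 h3
  constructor <;>
  · by_contra hne
    exact eps_ne_one hS h1 hne h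

/-- Uniqueness of normal forms. -/
lemma uniq {u v s t : List S} (hu : word Λ u) (hv : word Λ v) (hs : word Λ s)
    (ht : word Λ t) (h : el inv u v = el inv s t) : u = s ∧ v = t := by
  have E1 : (s.prod * inv u.prod) * (v.prod * inv t.prod) = 1 := by
    have h1 : s.prod * el inv u v * inv t.prod = 1 := by
      rw [h]; exact sandwich hS hs ht
    rw [← h1]; simp [el, mul_assoc]
  have E2 : (u.prod * inv s.prod) * (t.prod * inv v.prod) = 1 := by
    have h1 : u.prod * el inv s t * inv v.prod = 1 := by
      rw [← h]; exact sandwich hS hu hv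
    rw [← h1]; simp [el, mul_assoc]
  rcases reduce hS hv ht with ⟨e₂, he₂, hd₂, hval₂⟩ | ⟨e₂, he₂, hd₂, hval₂⟩ | ⟨hval₂, _⟩
  rotate_right
  · rw [hval₂, mul_zero] at E1; exact absurd E1 hS.zero_ne_one
  all_goals
    rcases reduce hS hs hu with ⟨e₁, he₁, hd₁, hval₁⟩ | ⟨e₁, he₁, hd₁, hval₁⟩ | ⟨hval₁, _⟩
  rotate_left 2
  · rw [hval₁, zero_mul] at E1; exact absurd E1 hS.zero_ne_one
  rotate_left 2
  · rw [hval₁, zero_mul] at E1; exact absurd E1 hS.zero_ne_one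
  · -- s = e₁ ++ u, v = e₂ ++ t, e₁.prod * e₂.prod = 1
    rw [hval₁, hval₂] at E1
    obtain ⟨h1, h2⟩ := pp_one hS he₁ he₂ E1
    subst h1; subst h2
    simpa using ⟨hd₁.symm, hd₂⟩
  · -- u = e₁ ++ s, v = e₂ ++ t, inv e₁.prod * e₂.prod = 1
    rw [hval₁, hval₂] at E1
    obtain ⟨h1, h2⟩ := qp_one hS he₁ he₂ E1
    subst h1; subst h2
    simpa using ⟨hd₁, hd₂⟩
  · -- s = e₁ ++ u, t = e₂ ++ v, e₁.prod * inv e₂.prod = 1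
    rw [hval₁, hval₂] at E1
    obtain rfl := cancel_eq hS he₁ he₂ E1
    by_cases hne : e₁ = []
    · subst hne; simpa using ⟨hd₁.symm, hd₂.symm⟩
    · exfalso
      have hA : u.prod * inv s.prod = inv e₁.prod := by
        rw [hd₁]
        have := cancel_append hS (c := []) (d := e₁) (m := u) word_nil he₁ hu
        simpa using this
      have hB : t.prod * inv v.prod = e₁.prod := by
        rw [hd₂]
        have := cancel_append hS (c := e₁) (d := []) (m := v) he₁ word_nil hv
        simpa [inv_one hS] using this
      rw [hA, hB] at E2
      exact eps_ne_one hS he₁ hne E2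
  · -- u = e₁ ++ s, t = e₂ ++ v, inv e₁.prod * inv e₂.prod = 1
    rw [hval₁, hval₂] at E1
    obtain ⟨h1, h2⟩ := qq_one hS he₁ he₂ E1
    subst h1; subst h2
    simpa using ⟨hd₁, hd₂.symm⟩

omit hS in
lemma el_append_right (u v w : List S) :
    el inv u v * w.prod = el inv u (v ++ w) := by
  simp [el, List.prod_append, mul_assoc]

lemma el_nil_nil : el inv ([] : List S) [] = 1 := by simp [el, inv_one hS]

lemma el_strip_right {u v : List S} {z : S} (hz : z ∈ Λ) :
    el inv u (v ++ [z]) * inv z = el inv u v := by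
  simp only [el, List.prod_append, List.prod_singleton, mul_assoc]
  rw [hS.gen_unit z hz, mul_one]

lemma el_strip_left {u v : List S} {z : S} (hu : word Λ u) (hz : z ∈ Λ) :
    z * el inv (u ++ [z]) v = el inv u v := by
  rw [el, inv_concat hS hu hz, ← mul_assoc, ← mul_assoc, hS.gen_unit z hz, one_mul]; rfl

lemma el_lmul {w γ δ : List S} (hγ : word Λ γ) :
    el inv w γ * el inv γ δ = el inv w δ := by
  simp only [el_mul_el]
  rw [prod_inv hS hγ, one_mul]; rfl

omit hS in
lemma q_mul_prod (w r : List S) : el inv w [] * r.prod = el inv w r := by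
  simp [el]

lemma el_left_decomp (s w : List S) : el inv s w = inv s.prod * el inv [] w := by
  simp [el, inv_one hS, mul_assoc]

lemma kill_left {u₀ : List S} (v : List S) {y z : S} (hu₀ : word Λ u₀) (hz : z ∈ Λ)
    (hy : y ∈ Λ) (hyz : y ≠ z) : y * el inv (u₀ ++ [z]) v = 0 := by
  rw [el, inv_concat hS hu₀ hz, ← mul_assoc, ← mul_assoc, hS.gen_zero y hy z hz hyz,
    zero_mul, zero_mul]

lemma kill_right {v₀ : List S} {y z : S} (hz : z ∈ Λ) (hy : y ∈ Λ) (hzy : z ≠ y) :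
    y * el inv [] (v₀ ++ [z]) * inv y = 0 := by
  rw [el, List.prod_nil, inv_one hS, one_mul, List.prod_append, List.prod_singleton, mul_assoc, mul_assoc,
    hS.gen_zero z hz y hy hzy, mul_zero, mul_zero]

section Topology

variable [TopologicalSpace S] [T2Space S]
variable (hΛ : Λ.Finite)
variable (hl : ∀ a : S, Continuous (fun x : S => a * x))
variable (hr : ∀ a : S, Continuous (fun x : S => x * a))

include hΛ hl hr

lemma isolated_one : IsOpen {(1 : S)} := by
  classical
  set V : Set S := ⋂ y ∈ Λ, (fun s => y * s * inv y) ⁻¹' {(0 : S)}ᶜ with hV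
  have hopen : IsOpen V :=
    Set.Finite.isOpen_biInter hΛ
      (fun y _ => (isOpen_compl_singleton).preimage ((hr (inv y)).comp (hl y)))
  have h1V : (1 : S) ∈ V := by
    refine Set.mem_iInter₂.mpr fun y hy => ?_
    simp only [Set.mem_preimage, Set.mem_compl_iff, Set.mem_singleton_iff, mul_one]
    rw [hS.gen_unit y hy]
    exact fun h => hS.zero_ne_one h.symm
  have hsub : V ⊆ {1} := by
    intro a ha
    have hmem : ∀ y ∈ Λ, y * a * inv y ≠ 0 := by
      intro y hy
      have := Set.mem_iInter₂.mp ha y hy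
      simpa using this
    rcases struct hS a with rfl | ⟨u, v, hu, hv, rfl⟩
    · obtain ⟨y, hy, -⟩ := exists_pair hS
      exact absurd (by rw [mul_zero, zero_mul]) (hmem y hy)
    · rcases List.eq_nil_or_concat u with rfl | ⟨u₀, z, rfl⟩
      · rcases List.eq_nil_or_concat v with rfl | ⟨v₀, z, rfl⟩
        · simp [el_nil_nil hS]
        · rw [List.concat_eq_append] at *
          exfalso
          have hz : z ∈ Λ := hv z (List.mem_append_right _ (List.mem_singleton_self z))
          obtain ⟨y, hy, hyz⟩ := pick_ne hS z
          exact hmem y hy (kill_right hS hz hy (Ne.symm hyz))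
      · rw [List.concat_eq_append] at *
        exfalso
        have hz : z ∈ Λ := hu z (List.mem_append_right _ (List.mem_singleton_self z))
        have hu₀ : word Λ u₀ := word_of_append_left hu
        obtain ⟨y, hy, hyz⟩ := pick_ne hS z
        refine hmem y hy ?_
        rw [kill_left hS v hu₀ hz hy hyz, zero_mul]
  have hVeq : V = {1} := Set.Subset.antisymm hsub (by simpa using h1V)
  rw [← hVeq]; exact hopen

lemma isolated_nonzero (a : S) (ha : a ≠ 0) : IsOpen {a} := by
  classical
  rcases struct hS a with rfl | ⟨u, v, hu, hv, rfl⟩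
  · exact absurd rfl ha
  have hgc : Continuous (fun s : S => u.prod * s * inv v.prod) :=
    (hr (inv v.prod)).comp (hl u.prod)
  set O := (fun s : S => u.prod * s * inv v.prod) ⁻¹' {1} with hO
  have hOopen : IsOpen O := (isolated_one hS hΛ hl hr).preimage hgc
  have haO : el inv u v ∈ O := by
    have := sandwich hS hu hv
    simpa [hO] using this
  set FS : Set S := (fun t => el inv (u.drop t) (v.drop t)) '' (Set.Icc 1 u.length) with hFS
  have hFSfin : FS.Finite := (Set.finite_Icc _ _).image _
  have hsub : O ⊆ {el inv u v} ∪ FS := by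
    intro s hsO
    have hs1 : u.prod * s * inv v.prod = 1 := hsO
    rcases struct hS s with rfl | ⟨u', v', hu', hv', rfl⟩
    · rw [mul_zero, zero_mul] at hs1; exact absurd hs1 hS.zero_ne_one
    have hE : (u.prod * inv u'.prod) * (v'.prod * inv v.prod) = 1 := by
      rw [← hs1]; simp [el, mul_assoc]
    rcases reduce hS hu hu' with ⟨e₁, he₁, hd₁, hval₁⟩ | ⟨e₁, he₁, hd₁, hval₁⟩ | ⟨hval₁, -⟩
    rotate_right
    · rw [hval₁, zero_mul] at hE; exact absurd hE hS.zero_ne_one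
    · rcases reduce hS hv' hv with ⟨e₂, he₂, hd₂, hval₂⟩ | ⟨e₂, he₂, hd₂, hval₂⟩ | ⟨hval₂, -⟩
      rotate_right
      · rw [hval₂, mul_zero] at hE; exact absurd hE hS.zero_ne_one
      · rw [hval₁, hval₂] at hE
        obtain ⟨r1, r2⟩ := pp_one hS he₁ he₂ hE
        subst r1; subst r2
        simp only [List.nil_append] at hd₁ hd₂
        left; rw [hd₁, hd₂]; rfl
      · rw [hval₁, hval₂] at hE
        obtain rfl := cancel_eq hS he₁ he₂ hE
        by_cases hne : e₁ = []
        · subst hne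
          simp only [List.nil_append] at hd₁ hd₂
          left; rw [hd₁, hd₂]; rfl
        · right
          refine ⟨e₁.length, ⟨Nat.one_le_iff_ne_zero.mpr (by simpa using hne), ?_⟩, ?_⟩
          · rw [hd₁]; simp
          · simp only [hd₁, hd₂]
            simp [List.drop_left]
    · rcases reduce hS hv' hv with ⟨e₂, he₂, hd₂, hval₂⟩ | ⟨e₂, he₂, hd₂, hval₂⟩ | ⟨hval₂, -⟩
      rotate_right
      · rw [hval₂, mul_zero] at hE; exact absurd hE hS.zero_ne_one
      · rw [hval₁, hval₂] at hE
        obtain ⟨r1, r2⟩ := qp_one hS he₁ he₂ hE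
        subst r1; subst r2
        simp only [List.nil_append] at hd₁ hd₂
        left; rw [hd₁, hd₂]; rfl
      · rw [hval₁, hval₂] at hE
        obtain ⟨r1, r2⟩ := qq_one hS he₁ he₂ hE
        subst r1; subst r2
        simp only [List.nil_append] at hd₁ hd₂
        left; rw [hd₁, hd₂]; rfl
  have hfin2 : (FS \ {el inv u v}).Finite := hFSfin.subset Set.diff_subset
  have hkey : {el inv u v} = O ∩ (FS \ {el inv u v})ᶜ := by
    apply Set.Subset.antisymm
    · intro s hs
      rcases Set.mem_singleton_iff.mp hs with rfl
      exact ⟨haO, by simp⟩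
    · rintro s ⟨hsO, hsc⟩
      rcases hsub hsO with hs | hs
      · exact hs
      · by_contra hne
        exact hsc ⟨hs, hne⟩
  rw [hkey]
  exact hOopen.inter hfin2.isClosed.isOpen_compl

lemma not_isOpen_zero (hnd : ¬ DiscreteTopology S) : ¬ IsOpen {(0 : S)} := by
  intro h
  refine hnd (discreteTopology_iff_isOpen_singleton.mpr fun a => ?_)
  by_cases ha : a = 0
  · subst ha; exact h
  · exact isolated_nonzero hS hΛ hl hr a ha

lemma nhds_infinite (hnd : ¬ DiscreteTopology S) {N : Set S} (hN : N ∈ nhds (0 : S)) :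
    N.Infinite := by
  intro hfin
  have hd : (N \ {0}).Finite := hfin.subset Set.diff_subset
  have hO : IsOpen (interior N ∩ (N \ {0})ᶜ) := isOpen_interior.inter hd.isClosed.isOpen_compl
  have h0 : (0 : S) ∈ interior N ∩ (N \ {0})ᶜ :=
    ⟨mem_interior_iff_mem_nhds.mpr hN, fun h => h.2 rfl⟩
  have hsub : interior N ∩ (N \ {0})ᶜ ⊆ {0} := by
    rintro s ⟨hs1, hs2⟩
    by_contra hne
    exact hs2 ⟨interior_subset hs1, hne⟩
  have : ({0} : Set S) = interior N ∩ (N \ {0})ᶜ :=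
    Set.Subset.antisymm (by simpa using h0) hsub
  exact not_isOpen_zero hS hΛ hl hr hnd (this ▸ hO)

variable (hnd : ¬ DiscreteTopology S)
variable {U₀ : Set S} (hU : U₀ ∈ nhds (0 : S)) (hUc : IsCompact U₀)

include hU hUc

omit hnd hU in
/-- A compact set minus an open neighborhood of zero is finite. -/
lemma compl_open_finite {N : Set S} (hNo : IsOpen N) (hN0 : (0 : S) ∈ N) :
    (U₀ \ N).Finite := by
  have hclosed : IsClosed (U₀ \ N) := (hUc.isClosed).inter (isClosed_compl_iff.mpr hNo)
  have hcpt : IsCompact (U₀ \ N) :=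
    IsCompact.of_isClosed_subset hUc hclosed Set.inter_subset_left
  have hdisc : DiscreteTopology (U₀ \ N : Set S) := by
    refine discreteTopology_iff_isOpen_singleton.mpr fun a => ?_
    have hne : (a : S) ≠ 0 := fun h => a.2.2 (h ▸ hN0)
    have : ({a} : Set (U₀ \ N : Set S)) = Subtype.val ⁻¹' {(a : S)} := by
      ext b; simp [Subtype.val_inj]
    rw [this]
    exact (isolated_nonzero hS hΛ hl hr _ hne).preimage continuous_subtype_val
  exact hcpt.finite (isDiscrete_iff_discreteTopology.mpr hdisc)

omit hnd in
lemma excL_finite (c : S) : {s | s ∈ U₀ ∧ c * s ∉ interior U₀}.Finite := by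
  have h0 : (0 : S) ∈ interior U₀ := mem_interior_iff_mem_nhds.mpr hU
  have hNopen : IsOpen ((fun s : S => c * s) ⁻¹' interior U₀) :=
    isOpen_interior.preimage (hl c)
  have hN0 : (0 : S) ∈ (fun s : S => c * s) ⁻¹' interior U₀ := by
    simp only [Set.mem_preimage, mul_zero]; exact h0
  have := compl_open_finite hS hΛ hl hr hUc hNopen hN0
  exact this.subset (fun s hs => ⟨hs.1, hs.2⟩)

omit hnd in
lemma excR_finite (d : S) : {s | s ∈ U₀ ∧ s * d ∉ interior U₀}.Finite := by
  have h0 : (0 : S) ∈ interior U₀ := mem_interior_iff_mem_nhds.mpr hU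
  have hNopen : IsOpen ((fun s : S => s * d) ⁻¹' interior U₀) :=
    isOpen_interior.preimage (hr d)
  have hN0 : (0 : S) ∈ (fun s : S => s * d) ⁻¹' interior U₀ := by
    simp only [Set.mem_preimage, zero_mul]; exact h0
  have := compl_open_finite hS hΛ hl hr hUc hNopen hN0
  exact this.subset (fun s hs => ⟨hs.1, hs.2⟩)

omit hΛ hl hr hnd hUc in
/-- Descent on the `u`-side: strip a suffix `γ` of the first word. -/
lemma desc_u (γ : List S) (hγ : word Λ γ) (μ θ : List S) (hμ : word Λ μ)
    (h : el inv (μ ++ γ) θ ∈ interior U₀) :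
    el inv μ θ ∈ interior U₀ ∨
      ∃ t < γ.length, el inv (μ ++ γ.take (t + 1)) θ ∈
        ⋃ z ∈ Λ, {s | s ∈ U₀ ∧ z * s ∉ interior U₀} := by
  induction γ using List.reverseRecOn generalizing μ with
  | nil => left; simpa using h
  | append_singleton γ₀ z ih =>
      have hz : z ∈ Λ := hγ z (List.mem_append_right _ (List.mem_singleton_self z))
      have hγ₀ : word Λ γ₀ := word_of_append_left hγ
      have hcur : el inv ((μ ++ γ₀) ++ [z]) θ ∈ interior U₀ := by
        rwa [List.append_assoc]
      by_cases hzv : z * el inv ((μ ++ γ₀) ++ [z]) θ ∈ interior U₀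
      · have hstep : z * el inv ((μ ++ γ₀) ++ [z]) θ = el inv (μ ++ γ₀) θ :=
          el_strip_left hS (word_append hμ hγ₀) hz
        rw [hstep] at hzv
        rcases ih hγ₀ μ hμ hzv with h1 | ⟨t, ht, hmem⟩
        · exact Or.inl h1
        · refine Or.inr ⟨t, ?_, ?_⟩
          · simp only [List.length_append, List.length_singleton]; omega
          · rwa [List.take_append_of_le_length (by omega)]
      · refine Or.inr ⟨γ₀.length, ?_, ?_⟩
        · simp
        · have htake : (γ₀ ++ [z]).take (γ₀.length + 1) = γ₀ ++ [z] := by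
            apply List.take_of_length_le; simp
          rw [htake, ← List.append_assoc]
          refine Set.mem_biUnion hz ⟨interior_subset hcur, hzv⟩

omit hΛ hl hr hnd hUc in
/-- Descent on the `v`-side: strip a suffix `ξ` of the second word. -/
lemma desc_v (ξ : List S) (hξ : word Λ ξ) (w ρ : List S)
    (h : el inv w (ρ ++ ξ) ∈ interior U₀) :
    el inv w ρ ∈ interior U₀ ∨
      ∃ t < ξ.length, el inv w (ρ ++ ξ.take (t + 1)) ∈
        ⋃ z ∈ Λ, {s | s ∈ U₀ ∧ s * inv z ∉ interior U₀} := by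
  induction ξ using List.reverseRecOn generalizing ρ with
  | nil => left; simpa using h
  | append_singleton ξ₀ z ih =>
      have hz : z ∈ Λ := hξ z (List.mem_append_right _ (List.mem_singleton_self z))
      have hξ₀ : word Λ ξ₀ := word_of_append_left hξ
      have hcur : el inv w ((ρ ++ ξ₀) ++ [z]) ∈ interior U₀ := by
        rwa [List.append_assoc]
      by_cases hzv : el inv w ((ρ ++ ξ₀) ++ [z]) * inv z ∈ interior U₀
      · have hstep : el inv w ((ρ ++ ξ₀) ++ [z]) * inv z = el inv w (ρ ++ ξ₀) :=
          el_strip_right hS hz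
        rw [hstep] at hzv
        rcases ih hξ₀ ρ hzv with h1 | ⟨t, ht, hmem⟩
        · exact Or.inl h1
        · refine Or.inr ⟨t, ?_, ?_⟩
          · simp only [List.length_append, List.length_singleton]; omega
          · rwa [List.take_append_of_le_length (by omega)]
      · refine Or.inr ⟨ξ₀.length, ?_, ?_⟩
        · simp
        · have htake : (ξ₀ ++ [z]).take (ξ₀.length + 1) = ξ₀ ++ [z] := by
            apply List.take_of_length_le; simp
          rw [htake, ← List.append_assoc]
          exact Set.mem_biUnion hz ⟨interior_subset hcur, hzv⟩

omit hΛ hl hr hnd hU hUc in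
lemma avoid {F : Set S} (hF : F.Finite) {f : ℕ → S} (hf : Function.Injective f) (N : ℕ) :
    ∃ n, N ≤ n ∧ f n ∉ F := by
  have h1 : ((f ⁻¹' F) ∪ Set.Iio N).Finite := (hF.preimage hf.injOn).union (Set.finite_Iio N)
  obtain ⟨n, hn⟩ := h1.infinite_compl.nonempty
  rw [Set.mem_compl_iff, Set.mem_union, not_or] at hn
  exact ⟨n, by simpa using hn.2, hn.1⟩

omit hΛ hl hr hnd hU hUc in
lemma avoid' {M : Set ℕ} (hM : M.Infinite) {F : Set S} (hF : F.Finite) {f : ℕ → S}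
    (hf : Function.Injective f) : ∃ m ∈ M, f m ∉ F := by
  obtain ⟨m, hm⟩ := (hM.diff (hF.preimage hf.injOn)).nonempty
  exact ⟨m, hm.1, hm.2⟩

omit hΛ hl hr hnd hU hUc in
lemma el_rep_inj_left {s r : List S} {x : S} (hs : word Λ s) (hrw : word Λ r) (hx : x ∈ Λ) :
    Function.Injective (fun n => el inv (s ++ List.replicate n x) r) := by
  intro n m h
  have h1 := (uniq hS (word_append hs (word_replicate hx n)) hrw
    (word_append hs (word_replicate hx m)) hrw h).1
  have h2 := congrArg List.length h1
  simp only [List.length_append, List.length_replicate] at h2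
  omega

omit hΛ hl hr hnd hU hUc in
lemma el_rep_inj_right {s r : List S} {x : S} (hs : word Λ s) (hrw : word Λ r) (hx : x ∈ Λ) :
    Function.Injective (fun n => el inv s (r ++ List.replicate n x)) := by
  intro n m h
  have h1 := (uniq hS hs (word_append hrw (word_replicate hx n)) hs
    (word_append hrw (word_replicate hx m)) h).2
  have h2 := congrArg List.length h1
  simp only [List.length_append, List.length_replicate] at h2
  omega

omit hΛ hl hr hnd hU hUc in
lemma el_rep_inj_pure {x : S} (hx : x ∈ Λ) :
    Function.Injective (fun n => el inv (List.replicate n x) ([] : List S)) := by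
  intro n m h
  have h1 := (uniq hS (word_replicate hx n) word_nil (word_replicate hx m) word_nil h).1
  have h2 := congrArg List.length h1
  simpa using h2

omit hS hΛ hl hr hnd hU hUc in
lemma el_append_one (u v : List S) (z : S) : el inv u v * z = el inv u (v ++ [z]) := by
  have := el_append_right (inv := inv) u v [z]
  simpa using this

omit hnd in
lemma endgameB (x : S) (hx : x ∈ Λ)
    (hQB : {a : S | (∃ w, word Λ w ∧ a = el inv w []) ∧ a ∉ interior U₀}.Finite) :
    (U₀ᶜ).Finite := by
  classical
  have hVU : interior U₀ ⊆ U₀ := interior_subset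
  have h0V : (0 : S) ∈ interior U₀ := mem_interior_iff_mem_nhds.mpr hU
  have hQr : ∀ r : List S, word Λ r →
      {a : S | (∃ w, word Λ w ∧ a = el inv w r) ∧ a ∉ interior U₀}.Finite := by
    intro r hrw
    have himg : {a : S | (∃ w, word Λ w ∧ a = el inv w r) ∧ a ∉ interior U₀} ⊆
        (fun b => b * r.prod) ''
          ({a : S | (∃ w, word Λ w ∧ a = el inv w []) ∧ a ∉ interior U₀} ∪
           {s | s ∈ U₀ ∧ s * r.prod ∉ interior U₀}) := by
      rintro a ⟨⟨w, hw, rfl⟩, haV⟩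
      refine ⟨el inv w [], ?_, q_mul_prod w r⟩
      by_cases hb : el inv w [] ∈ interior U₀
      · exact Or.inr ⟨hVU hb, by rw [q_mul_prod]; exact haV⟩
      · exact Or.inl ⟨⟨w, hw, rfl⟩, hb⟩
    exact (((hQB.union (excR_finite hS hΛ hl hr hU hUc r.prod)).image _).subset himg)
  have key : ∀ a ∈ U₀ᶜ, ∃ f ∈ {s | s ∈ U₀ ∧ x * s ∉ interior U₀},
      ∃ s r : List S, ∃ j : ℕ, word Λ s ∧ word Λ r ∧ 1 ≤ j ∧
        a = el inv s r ∧ el inv (s ++ List.replicate j x) r = f := by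
    intro a haA
    have ha0 : a ≠ 0 := fun h => haA (h ▸ (hVU h0V))
    obtain ⟨s, r, hs, hrw, rfl⟩ := (struct hS a).resolve_left ha0
    have hbinj : Function.Injective (fun i => el inv (s ++ List.replicate i x) r) :=
      el_rep_inj_left hS hs hrw hx
    have hex : ∃ i, el inv (s ++ List.replicate i x) r ∈ U₀ := by
      obtain ⟨i, -, hi⟩ := avoid hS (hQr r hrw) hbinj 0
      refine ⟨i, ?_⟩
      by_contra hiU
      exact hi ⟨⟨_, word_append hs (word_replicate hx i), rfl⟩, fun hv => hiU (hVU hv)⟩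
    set j := Nat.find hex with hj
    have hjU : el inv (s ++ List.replicate j x) r ∈ U₀ := Nat.find_spec hex
    have hj1 : 1 ≤ j := by
      rcases Nat.eq_zero_or_pos j with h0 | h1
      · exfalso
        rw [h0] at hjU
        simp only [List.replicate_zero, List.append_nil] at hjU
        exact haA hjU
      · exact h1
    have hbj : x * el inv (s ++ List.replicate j x) r ∉ interior U₀ := by
      intro hmem
      have hsplit : s ++ List.replicate j x = (s ++ List.replicate (j-1) x) ++ [x] := by
        have hj' : j = (j-1) + 1 := by omega
        rw [List.append_assoc, ← List.replicate_succ', ← hj']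
      have hstep : x * el inv (s ++ List.replicate j x) r
          = el inv (s ++ List.replicate (j-1) x) r := by
        rw [hsplit]
        exact el_strip_left hS (word_append hs (word_replicate hx (j-1))) hx
      rw [hstep] at hmem
      exact (Nat.find_min hex (by omega : j - 1 < j)) (hVU hmem)
    exact ⟨_, ⟨hjU, hbj⟩, s, r, j, hs, hrw, hj1, rfl, rfl⟩
  have hfinF : {s : S | s ∈ U₀ ∧ x * s ∉ interior U₀}.Finite := excL_finite hS hΛ hl hr hU hUc x
  have hcover : U₀ᶜ ⊆ ⋃ f ∈ {s : S | s ∈ U₀ ∧ x * s ∉ interior U₀},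
      {a : S | ∃ s r : List S, ∃ j : ℕ, word Λ s ∧ word Λ r ∧ 1 ≤ j ∧
        a = el inv s r ∧ el inv (s ++ List.replicate j x) r = f} := by
    intro a ha
    obtain ⟨f, hf, s, r, j, h1, h2, h3, h4, h5⟩ := key a ha
    exact Set.mem_biUnion hf ⟨s, r, j, h1, h2, h3, h4, h5⟩
  refine Set.Finite.subset (hfinF.biUnion fun f _ => ?_) hcover
  by_cases hne : {a : S | ∃ s r : List S, ∃ j : ℕ, word Λ s ∧ word Λ r ∧ 1 ≤ j ∧
        a = el inv s r ∧ el inv (s ++ List.replicate j x) r = f}.Nonempty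
  · obtain ⟨a₀, s₀, r₀, j₀, hs₀, hr₀, hj₀, ha₀, hf₀⟩ := hne
    refine Set.Finite.subset ((Set.finite_Iic (s₀ ++ List.replicate j₀ x).length).image
      (fun t => el inv ((s₀ ++ List.replicate j₀ x).take t) r₀)) ?_
    rintro a ⟨s, r, j, hs, hrw, hj, rfl, hf⟩
    have he : el inv (s ++ List.replicate j x) r = el inv (s₀ ++ List.replicate j₀ x) r₀ := by
      rw [hf, hf₀]
    obtain ⟨hw, hre⟩ := uniq hS (word_append hs (word_replicate hx j)) hrw
      (word_append hs₀ (word_replicate hx j₀)) hr₀ he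
    subst hre
    refine ⟨s.length, ?_, ?_⟩
    · rw [← hw]
      simp only [Set.mem_Iic, List.length_append, List.length_replicate]
      omega
    · simp only [← hw, List.take_left]
  · rw [Set.not_nonempty_iff_eq_empty] at hne
    rw [hne]
    exact Set.finite_empty

omit hnd in
lemma endgameA (x : S) (hx : x ∈ Λ)
    (hQA : {a : S | (∃ w, word Λ w ∧ a = el inv [] w) ∧ a ∉ interior U₀}.Finite) :
    (U₀ᶜ).Finite := by
  classical
  have hVU : interior U₀ ⊆ U₀ := interior_subset
  have h0V : (0 : S) ∈ interior U₀ := mem_interior_iff_mem_nhds.mpr hU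
  have hQs : ∀ s : List S, word Λ s →
      {a : S | (∃ w, word Λ w ∧ a = el inv s w) ∧ a ∉ interior U₀}.Finite := by
    intro s hsw
    have himg : {a : S | (∃ w, word Λ w ∧ a = el inv s w) ∧ a ∉ interior U₀} ⊆
        (fun b => inv s.prod * b) ''
          ({a : S | (∃ w, word Λ w ∧ a = el inv [] w) ∧ a ∉ interior U₀} ∪
           {b | b ∈ U₀ ∧ inv s.prod * b ∉ interior U₀}) := by
      rintro a ⟨⟨w, hw, rfl⟩, haV⟩
      refine ⟨el inv [] w, ?_, (el_left_decomp hS s w).symm⟩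
      by_cases hb : el inv [] w ∈ interior U₀
      · exact Or.inr ⟨hVU hb, by rw [← el_left_decomp hS s w]; exact haV⟩
      · exact Or.inl ⟨⟨w, hw, rfl⟩, hb⟩
    exact (((hQA.union (excL_finite hS hΛ hl hr hU hUc (inv s.prod))).image _).subset himg)
  have key : ∀ a ∈ U₀ᶜ, ∃ f ∈ {s : S | s ∈ U₀ ∧ s * inv x ∉ interior U₀},
      ∃ s r : List S, ∃ j : ℕ, word Λ s ∧ word Λ r ∧ 1 ≤ j ∧
        a = el inv s r ∧ el inv s (r ++ List.replicate j x) = f := by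
    intro a haA
    have ha0 : a ≠ 0 := fun h => haA (h ▸ (hVU h0V))
    obtain ⟨s, r, hs, hrw, rfl⟩ := (struct hS a).resolve_left ha0
    have hbinj : Function.Injective (fun i => el inv s (r ++ List.replicate i x)) :=
      el_rep_inj_right hS hs hrw hx
    have hex : ∃ i, el inv s (r ++ List.replicate i x) ∈ U₀ := by
      obtain ⟨i, -, hi⟩ := avoid hS (hQs s hs) hbinj 0
      refine ⟨i, ?_⟩
      by_contra hiU
      exact hi ⟨⟨_, word_append hrw (word_replicate hx i), rfl⟩, fun hv => hiU (hVU hv)⟩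
    set j := Nat.find hex with hj
    have hjU : el inv s (r ++ List.replicate j x) ∈ U₀ := Nat.find_spec hex
    have hj1 : 1 ≤ j := by
      rcases Nat.eq_zero_or_pos j with h0 | h1
      · exfalso
        rw [h0] at hjU
        simp only [List.replicate_zero, List.append_nil] at hjU
        exact haA hjU
      · exact h1
    have hbj : el inv s (r ++ List.replicate j x) * inv x ∉ interior U₀ := by
      intro hmem
      have hsplit : r ++ List.replicate j x = (r ++ List.replicate (j-1) x) ++ [x] := by
        have hj' : j = (j-1) + 1 := by omega
        rw [List.append_assoc, ← List.replicate_succ', ← hj']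
      have hstep : el inv s (r ++ List.replicate j x) * inv x
          = el inv s (r ++ List.replicate (j-1) x) := by
        rw [hsplit]
        exact el_strip_right hS hx
      rw [hstep] at hmem
      exact (Nat.find_min hex (by omega : j - 1 < j)) (hVU hmem)
    exact ⟨_, ⟨hjU, hbj⟩, s, r, j, hs, hrw, hj1, rfl, rfl⟩
  have hfinF : {s : S | s ∈ U₀ ∧ s * inv x ∉ interior U₀}.Finite :=
    excR_finite hS hΛ hl hr hU hUc (inv x)
  have hcover : U₀ᶜ ⊆ ⋃ f ∈ {s : S | s ∈ U₀ ∧ s * inv x ∉ interior U₀},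
      {a : S | ∃ s r : List S, ∃ j : ℕ, word Λ s ∧ word Λ r ∧ 1 ≤ j ∧
        a = el inv s r ∧ el inv s (r ++ List.replicate j x) = f} := by
    intro a ha
    obtain ⟨f, hf, s, r, j, h1, h2, h3, h4, h5⟩ := key a ha
    exact Set.mem_biUnion hf ⟨s, r, j, h1, h2, h3, h4, h5⟩
  refine Set.Finite.subset (hfinF.biUnion fun f _ => ?_) hcover
  by_cases hne : {a : S | ∃ s r : List S, ∃ j : ℕ, word Λ s ∧ word Λ r ∧ 1 ≤ j ∧
        a = el inv s r ∧ el inv s (r ++ List.replicate j x) = f}.Nonempty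
  · obtain ⟨a₀, s₀, r₀, j₀, hs₀, hr₀, hj₀, ha₀, hf₀⟩ := hne
    refine Set.Finite.subset ((Set.finite_Iic (r₀ ++ List.replicate j₀ x).length).image
      (fun t => el inv s₀ ((r₀ ++ List.replicate j₀ x).take t))) ?_
    rintro a ⟨s, r, j, hs, hrw, hj, rfl, hf⟩
    have he : el inv s (r ++ List.replicate j x) = el inv s₀ (r₀ ++ List.replicate j₀ x) := by
      rw [hf, hf₀]
    obtain ⟨hse, hw⟩ := uniq hS hs (word_append hrw (word_replicate hx j))
      hs₀ (word_append hr₀ (word_replicate hx j₀)) he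
    subst hse
    refine ⟨r.length, ?_, ?_⟩
    · rw [← hw]
      simp only [Set.mem_Iic, List.length_append, List.length_replicate]
      omega
    · simp only [← hw, List.take_left]
  · rw [Set.not_nonempty_iff_eq_empty] at hne
    rw [hne]
    exact Set.finite_empty

omit hnd in
lemma goodBranch (x : S) (hx : x ∈ Λ)
    (hgood : ∃ s₀ : S, s₀ ∈ U₀ ∧ s₀ ≠ 0 ∧ ∀ n : ℕ, s₀ * (List.replicate n x).prod ∈ U₀) :
    {a : S | (∃ w, word Λ w ∧ a = el inv w []) ∧ a ∉ interior U₀}.Finite := by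
  classical
  have hVU : interior U₀ ⊆ U₀ := interior_subset
  obtain ⟨s₀, hsU, hs0, hchain⟩ := hgood
  obtain ⟨γ, δ, hγ, hδ, rfl⟩ := (struct hS s₀).resolve_left hs0
  have hsnU : ∀ n, el inv γ (δ ++ List.replicate n x) ∈ U₀ := by
    intro n
    rw [← el_append_right]
    exact hchain n
  have hsninj : Function.Injective (fun n => el inv γ (δ ++ List.replicate n x)) :=
    el_rep_inj_right hS hγ hδ hx
  -- the blocking union
  have hEfin : (⋃ z ∈ Λ, {s : S | s ∈ U₀ ∧ s * inv z ∉ interior U₀}).Finite :=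
    hΛ.biUnion fun z _ => excR_finite hS hΛ hl hr hU hUc (inv z)
  have hcov : {a : S | (∃ w, word Λ w ∧ a = el inv w []) ∧ a ∉ interior U₀} ⊆
      ⋃ e ∈ (⋃ z ∈ Λ, {s : S | s ∈ U₀ ∧ s * inv z ∉ interior U₀}),
        {a : S | ∃ w π, word Λ w ∧ word Λ π ∧ a = el inv w [] ∧ e = el inv w π} := by
    rintro a ⟨⟨w, hw, rfl⟩, haV⟩
    obtain ⟨n, hn1, hn2⟩ := avoid hS (excL_finite hS hΛ hl hr hU hUc (el inv w γ)) hsninj 0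
    have hbv : el inv w γ * el inv γ (δ ++ List.replicate n x) ∈ interior U₀ := by
      by_contra hc
      exact hn2 ⟨hsnU n, hc⟩
    rw [el_lmul hS hγ] at hbv
    have hdesc := desc_v hS hU (δ ++ List.replicate n x)
      (word_append hδ (word_replicate hx n)) w [] (by rw [List.nil_append]; exact hbv)
    rcases hdesc with h1 | ⟨t, ht, hmem⟩
    · exact absurd h1 haV
    · rw [List.nil_append] at hmem
      exact Set.mem_biUnion hmem
        ⟨w, (δ ++ List.replicate n x).take (t+1), hw,
          word_take (word_append hδ (word_replicate hx n)) _, rfl, rfl⟩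
  refine Set.Finite.subset (hEfin.biUnion fun e _ => ?_) hcov
  apply Set.Subsingleton.finite
  rintro a₁ ⟨w₁, π₁, hw₁, hπ₁, rfl, he₁⟩ a₂ ⟨w₂, π₂, hw₂, hπ₂, rfl, he₂⟩
  have heq : el inv w₁ π₁ = el inv w₂ π₂ := by rw [← he₁, ← he₂]
  rw [(uniq hS hw₁ hπ₁ hw₂ hπ₂ heq).1]

omit hnd in
lemma badBranch (hnd : ¬ DiscreteTopology S) (x : S) (hx : x ∈ Λ)
    (hbad : ∀ s : S, s ∈ U₀ → s ≠ 0 → ∃ n : ℕ, s * (List.replicate n x).prod ∉ U₀) :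
    {a : S | (∃ w, word Λ w ∧ a = el inv [] w) ∧ a ∉ interior U₀}.Finite := by
  classical
  have hVU : interior U₀ ⊆ U₀ := interior_subset
  have h0V : (0 : S) ∈ interior U₀ := mem_interior_iff_mem_nhds.mpr hU
  have hVinf : (interior U₀ \ {0}).Infinite :=
    (nhds_infinite hS hΛ hl hr hnd (isOpen_interior.mem_nhds h0V)).diff (Set.finite_singleton 0)
  have hPfin : {s : S | s ∈ U₀ ∧ s * x ∉ interior U₀}.Finite := excR_finite hS hΛ hl hr hU hUc x
  have hray : ∀ s ∈ interior U₀ \ {0}, ∃ p ∈ {s : S | s ∈ U₀ ∧ s * x ∉ interior U₀},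
      ∃ k : ℕ, s = p * inv ((List.replicate k x).prod) := by
    intro s hs
    have hex : ∃ n, s * (List.replicate n x).prod ∉ U₀ := hbad s (hVU hs.1) hs.2
    have hn₀ : s * (List.replicate (Nat.find hex) x).prod ∉ U₀ := Nat.find_spec hex
    have hpos : 1 ≤ Nat.find hex := by
      rcases Nat.eq_zero_or_pos (Nat.find hex) with h0 | h1
      · exfalso; apply hn₀; rw [h0]; simpa using hVU hs.1
      · exact h1
    set n₀ := Nat.find hex with hn₀def
    have hpU : s * (List.replicate (n₀-1) x).prod ∈ U₀ := by
      by_contra hc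
      exact (Nat.find_min hex (by omega : n₀ - 1 < n₀)) hc
    have hrepsplit : List.replicate n₀ x = List.replicate (n₀-1) x ++ [x] := by
      have h' : n₀ = (n₀-1) + 1 := by omega
      rw [← List.replicate_succ', ← h']
    have hpxeq : (s * (List.replicate (n₀-1) x).prod) * x = s * (List.replicate n₀ x).prod := by
      rw [mul_assoc, hrepsplit, List.prod_append, List.prod_singleton]
    have hpx : (s * (List.replicate (n₀-1) x).prod) * x ∉ interior U₀ := fun hc =>
      hn₀ (hVU (hpxeq ▸ hc))
    refine ⟨_, ⟨hpU, hpx⟩, n₀ - 1, ?_⟩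
    rw [mul_assoc, prod_inv hS (word_replicate hx (n₀-1)), mul_one]
  have hKex : ∃ p ∈ {s : S | s ∈ U₀ ∧ s * x ∉ interior U₀},
      {k : ℕ | p * inv ((List.replicate k x).prod) ∈ interior U₀ \ {0}}.Infinite := by
    by_contra hcon
    push_neg at hcon
    apply hVinf
    have hsub : interior U₀ \ {0} ⊆ ⋃ p ∈ {s : S | s ∈ U₀ ∧ s * x ∉ interior U₀},
        (fun k => p * inv ((List.replicate k x).prod)) ''
          {k : ℕ | p * inv ((List.replicate k x).prod) ∈ interior U₀ \ {0}} := by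
      intro s hs
      obtain ⟨p, hp, k, rfl⟩ := hray s hs
      exact Set.mem_biUnion hp ⟨k, hs, rfl⟩
    exact (hPfin.biUnion fun p hp => (hcon p hp).image _).subset hsub
  obtain ⟨p, hpP, hKp⟩ := hKex
  have hp0 : p ≠ 0 := by
    obtain ⟨k, hk⟩ := hKp.nonempty
    intro h
    rw [Set.mem_setOf_eq, h, zero_mul] at hk
    exact hk.2 rfl
  obtain ⟨γ, δ, hγ, hδ, rfl⟩ := (struct hS p).resolve_left hp0
  have hassoc : ∀ k : ℕ, el inv γ δ * inv ((List.replicate k x).prod)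
      = inv γ.prod * (δ.prod * inv ((List.replicate k x).prod)) := by
    intro k; rw [el, mul_assoc]
  obtain ⟨k₀, hk₀K⟩ := (hKp.diff (Set.finite_Iic δ.length)).nonempty
  have hk₀mem : el inv γ δ * inv ((List.replicate k₀ x).prod) ∈ interior U₀ \ {0} := hk₀K.1
  have hk₀gt : δ.length < k₀ := by
    have := hk₀K.2
    simpa using this
  obtain ⟨j, rfl⟩ : ∃ j, δ = List.replicate j x := by
    refine ⟨δ.length, ?_⟩
    rcases reduce hS hδ (word_replicate hx k₀) with ⟨e, he, hde, hval⟩ | ⟨e, he, hde, hval⟩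
      | ⟨hval, -⟩
    · exfalso
      have := congrArg List.length hde
      simp only [List.length_append, List.length_replicate] at this
      omega
    · refine List.eq_replicate_iff.mpr ⟨rfl, fun b hb => ?_⟩
      exact List.eq_of_mem_replicate (hde ▸ List.mem_append_right e hb)
    · exfalso
      apply hk₀mem.2
      rw [Set.mem_singleton_iff, hassoc k₀, hval, mul_zero]
  rw [List.length_replicate] at hk₀gt
  set M := {m : ℕ | 1 ≤ m ∧
    el inv γ (List.replicate j x) * inv ((List.replicate (m + j) x).prod)
      ∈ interior U₀ \ {0}} with hM
  have hMinf : M.Infinite := by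
    have h1 : ({k : ℕ | el inv γ (List.replicate j x) * inv ((List.replicate k x).prod)
        ∈ interior U₀ \ {0}} \ Set.Iic j).Infinite := by
      refine hKp.diff ?_
      have := Set.finite_Iic j
      simpa using this
    have h2 : (fun k => k - j) '' ({k : ℕ | el inv γ (List.replicate j x) *
        inv ((List.replicate k x).prod) ∈ interior U₀ \ {0}} \ Set.Iic j) ⊆ M := by
      rintro m ⟨k, ⟨hk1, hk2⟩, rfl⟩
      simp only [Set.mem_Iic, not_le] at hk2
      refine ⟨(by omega : 1 ≤ k - j), ?_⟩
      show el inv γ (List.replicate j x) * inv ((List.replicate ((k - j) + j) x).prod)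
        ∈ interior U₀ \ {0}
      rw [show k - j + j = k from by omega]
      exact hk1
    refine Set.Infinite.mono h2 (h1.image ?_)
    intro a ha b hb hab
    simp only at hab
    simp only [Set.mem_diff, Set.mem_Iic, not_le] at ha hb
    omega
  have hMel : ∀ m ∈ M, el inv (List.replicate m x ++ γ) [] ∈ interior U₀ := by
    intro m hm
    have hmid : (List.replicate j x).prod * inv ((List.replicate (m + j) x).prod)
        = inv ((List.replicate m x).prod) := by
      rw [List.replicate_add]
      have := cancel_append hS (c := ([] : List S)) (d := List.replicate m x)
        (m := List.replicate j x) word_nil (word_replicate hx m) (word_replicate hx j)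
      simpa using this
    have hval : el inv γ (List.replicate j x) * inv ((List.replicate (m + j) x).prod)
        = el inv (List.replicate m x ++ γ) [] := by
      rw [hassoc, hmid, inv_mul_inv hS hγ (word_replicate hx m)]
      simp [el]
    have hmem := hm.2
    rw [hval] at hmem
    exact hmem.1
  set φ := fun m : ℕ => el inv (List.replicate m x) ([] : List S) with hφ
  have hφinj : Function.Injective φ := el_rep_inj_pure hS hx
  have hEfin : (⋃ z ∈ Λ, {s : S | s ∈ U₀ ∧ z * s ∉ interior U₀}).Finite :=
    hΛ.biUnion fun z _ => excL_finite hS hΛ hl hr hU hUc z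
  have hM₁inf : {m | m ∈ M ∧ φ m ∈ interior U₀}.Infinite := by
    by_contra hfin
    rw [Set.not_infinite] at hfin
    have hM'inf : (M \ {m | m ∈ M ∧ φ m ∈ interior U₀}).Infinite := hMinf.diff hfin
    apply hM'inf
    have hblock : (M \ {m | m ∈ M ∧ φ m ∈ interior U₀}) ⊆
        ⋃ e ∈ (⋃ z ∈ Λ, {s : S | s ∈ U₀ ∧ z * s ∉ interior U₀}),
          {m : ℕ | ∃ t < γ.length, e = el inv (List.replicate m x ++ γ.take (t+1)) []} := by
      rintro m ⟨hmM, hmn⟩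
      have hnot : φ m ∉ interior U₀ := fun hc => hmn ⟨hmM, hc⟩
      rcases desc_u hS hU γ hγ (List.replicate m x) [] (word_replicate hx m)
        (hMel m hmM) with h1 | ⟨t, ht, hmem⟩
      · exact absurd h1 hnot
      · exact Set.mem_biUnion hmem ⟨t, ht, rfl⟩
    refine Set.Finite.subset (hEfin.biUnion fun e _ => ?_) hblock
    by_cases hne : {m : ℕ | ∃ t < γ.length,
        e = el inv (List.replicate m x ++ γ.take (t+1)) []}.Nonempty
    · obtain ⟨m₀, t₀, ht₀, he₀⟩ := hne
      refine Set.Finite.subset ((Set.finite_Iio γ.length).image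
        (fun t => (List.replicate m₀ x ++ γ.take (t₀+1)).length - (t+1))) ?_
      rintro m ⟨t, ht, hee⟩
      have hW : List.replicate m x ++ γ.take (t+1) = List.replicate m₀ x ++ γ.take (t₀+1) := by
        have := uniq hS (word_append (word_replicate hx m) (word_take hγ _)) word_nil
          (word_append (word_replicate hx m₀) (word_take hγ _)) word_nil (by rw [← hee, ← he₀])
        exact this.1
      refine ⟨t, ht, ?_⟩
      have hlen := congrArg List.length hW
      simp only [List.length_append, List.length_replicate, List.length_take] at hlen ⊢
      omega
    · rw [Set.not_nonempty_iff_eq_empty] at hne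
      rw [hne]
      exact Set.finite_empty
  have hQAcov : {a : S | (∃ w, word Λ w ∧ a = el inv [] w) ∧ a ∉ interior U₀} ⊆
      ⋃ e ∈ (⋃ z ∈ Λ, {s : S | s ∈ U₀ ∧ z * s ∉ interior U₀}),
        {a : S | ∃ w k, word Λ w ∧ 1 ≤ k ∧ a = el inv [] w ∧
          e = el inv (List.replicate k x) w} := by
    rintro a ⟨⟨w, hw, rfl⟩, haV⟩
    obtain ⟨m, hmM₁, hm2⟩ := avoid' hS hM₁inf (excR_finite hS hΛ hl hr hU hUc w.prod) hφinj
    have h1 : el inv (List.replicate m x) [] * w.prod ∈ interior U₀ := by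
      by_contra hc
      exact hm2 ⟨hVU hmM₁.2, hc⟩
    rw [q_mul_prod] at h1
    rcases desc_u hS hU (List.replicate m x) (word_replicate hx m) [] w word_nil
      (by rw [List.nil_append]; exact h1) with h2 | ⟨t, ht, hmem⟩
    · exact absurd h2 haV
    · have htlt : t < m := by simpa using ht
      have htake : (([] : List S) ++ (List.replicate m x).take (t+1))
          = List.replicate (t+1) x := by
        rw [List.nil_append, List.take_replicate]
        congr 1
        omega
      rw [htake] at hmem
      exact Set.mem_biUnion hmem ⟨w, t+1, hw, by omega, rfl, rfl⟩
  refine Set.Finite.subset (hEfin.biUnion fun e _ => ?_) hQAcov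
  apply Set.Subsingleton.finite
  rintro a₁ ⟨w₁, k₁, hw₁, hk₁, rfl, he₁⟩ a₂ ⟨w₂, k₂, hw₂, hk₂, rfl, he₂⟩
  have heq : el inv (List.replicate k₁ x) w₁ = el inv (List.replicate k₂ x) w₂ := by
    rw [← he₁, ← he₂]
  rw [(uniq hS (word_replicate hx k₁) hw₁ (word_replicate hx k₂) hw₂ heq).2]

end Topology

end Poly

/-- If the generating set is finite, the complement of a compact
neighborhood of zero in a non-discrete locally compact semitopological polycyclic
monoid is finite. -/
theorem stmt11 {S : Type*} [MonoidWithZero S] (inv : S → S) (Λ : Set S)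
    (hS : IsPolycyclicMonoid S inv Λ) (hΛ : Λ.Finite)
    [TopologicalSpace S] [T2Space S] [LocallyCompactSpace S]
    (hl : ∀ a : S, Continuous (fun x : S => a * x))
    (hr : ∀ a : S, Continuous (fun x : S => x * a))
    (hnd : ¬ DiscreteTopology S)
    (U₀ : Set S) (hU : U₀ ∈ nhds (0 : S)) (hUc : IsCompact U₀) :
    (U₀ᶜ).Finite := by
  classical
  obtain ⟨x, hx, -⟩ := Poly.exists_pair hS
  by_cases hgood : ∃ s₀ : S, s₀ ∈ U₀ ∧ s₀ ≠ 0 ∧ ∀ n : ℕ, s₀ * (List.replicate n x).prod ∈ U₀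
  · exact Poly.endgameB hS hΛ hl hr hU hUc x hx
      (Poly.goodBranch hS hΛ hl hr hU hUc x hx hgood)
  · push_neg at hgood
    exact Poly.endgameA hS hΛ hl hr hU hUc x hx
      (Poly.badBranch hS hΛ hl hr hU hUc hnd x hx hgood)
end

section
/- Let S be a non-discrete locally compact semitopological polycyclic monoid with generating set Λ (of arbitrary cardinality), and let U₀ be a compact neighborhood of the zero 0 in S. Then the set R_1∖U₀ is finite, where R_1 = {x ∈ S : xS = S} is the Green R-class of the unit. -/
set_option linter.unusedSectionVars false
set_option linter.unusedVariables false
set_option maxHeartbeats 1000000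



namespace PolyPf

variable {S : Type*} [MonoidWithZero S] {inv : S → S} {Λ : Set S}

/-- letters -/
abbrev L (Λ : Set S) := {x : S // x ∈ Λ}

/-- product of a positive word -/
def pos (l : List (L Λ)) : S := (l.map Subtype.val).prod

/-- product of the inverted word (reverse order of inverses) -/
def neg (inv : S → S) (l : List (L Λ)) : S := (l.reverse.map (fun x => inv x.1)).prod

variable (hS : IsPolycyclicMonoid S inv Λ)

section basic

@[simp] lemma pos_nil : pos ([] : List (L Λ)) = 1 := rfl

@[simp] lemma neg_nil : neg inv ([] : List (L Λ)) = 1 := rfl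

lemma pos_append (a b : List (L Λ)) : pos (a ++ b) = pos a * pos b := by
  simp [pos, List.prod_append]

lemma neg_append (a b : List (L Λ)) : neg inv (a ++ b) = neg inv b * neg inv a := by
  simp [neg, List.reverse_append, List.prod_append]

@[simp] lemma pos_single (r : L Λ) : pos [r] = (r : S) := by simp [pos]

@[simp] lemma neg_single (r : L Λ) : neg inv [r] = inv (r : S) := by simp [neg]

lemma pos_concat (a : List (L Λ)) (r : L Λ) : pos (a ++ [r]) = pos a * r := by
  simp [pos_append]

lemma neg_concat (a : List (L Λ)) (r : L Λ) : neg inv (a ++ [r]) = inv (r : S) * neg inv a := by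
  simp [neg_append]

lemma pos_cons (r : L Λ) (a : List (L Λ)) : pos (r :: a) = (r : S) * pos a := by
  simp [pos]

include hS in
lemma pn : ∀ l : List (L Λ), pos l * neg inv l = 1 := by
  intro l
  induction l using List.reverseRecOn with
  | nil => simp
  | append_singleton l r ih =>
      rw [pos_concat, neg_concat, mul_assoc, ← mul_assoc (r : S), hS.gen_unit r.1 r.2, one_mul, ih]

include hS in
/-- key sandwich identity -/
lemma sandwich (x y : S) (l : List (L Λ)) : (x * pos l) * (neg inv l * y) = x * y := by
  have : x * pos l * (neg inv l * y) = x * (pos l * neg inv l) * y := by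
    rw [mul_assoc, mul_assoc, mul_assoc]
  rw [this, pn hS, mul_one]

/-- the element a⁻¹ b -/
def el (inv : S → S) (a b : List (L Λ)) : S := neg inv a * pos b

@[simp] lemma el_nil_nil : el inv ([] : List (L Λ)) [] = 1 := by simp [el]

lemma el_nil (b : List (L Λ)) : el inv [] b = pos b := by simp [el]

include hS in
lemma pos_mul_el (a b : List (L Λ)) : pos a * el inv a b = pos b := by
  have := sandwich hS 1 (pos b) a
  simpa [el, mul_assoc] using this

include hS in
lemma el_mul_neg (a b : List (L Λ)) : el inv a b * neg inv b = neg inv a := by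
  have := sandwich hS (neg inv a) 1 b
  simpa [el, mul_assoc] using this

include hS in
lemma sand_one (a b : List (L Λ)) : pos a * el inv a b * neg inv b = 1 := by
  rw [pos_mul_el hS, pn hS]

include hS in
lemma el_ne_zero (a b : List (L Λ)) : el inv a b ≠ 0 := by
  intro h
  have h1 := sand_one hS a b
  rw [h, mul_zero, zero_mul] at h1
  exact hS.zero_ne_one h1

include hS in
lemma PN : ∀ (b c : List (L Λ)),
    (∃ b', b = b' ++ c ∧ pos b * neg inv c = pos b') ∨
    (∃ c', c = c' ++ b ∧ pos b * neg inv c = neg inv c') ∨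
    (pos b * neg inv c = 0 ∧ ∃ r s : L Λ, (r : S) ≠ (s : S)) := by
  intro b
  induction b using List.reverseRecOn with
  | nil =>
      intro c
      right; left
      exact ⟨c, by simp, by simp⟩
  | append_singleton b₀ r ih =>
      intro c
      induction c using List.reverseRecOn with
      | nil =>
          left
          exact ⟨b₀ ++ [r], by simp, by simp⟩
      | append_singleton c₀ s _ =>
          have hval : pos (b₀ ++ [r]) * neg inv (c₀ ++ [s])
              = pos b₀ * ((r : S) * inv (s : S)) * neg inv c₀ := by
            rw [pos_concat, neg_concat, mul_assoc, ← mul_assoc (r : S), ← mul_assoc,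
              ← mul_assoc]
          by_cases hrs : (r : S) = (s : S)
          · have hr1 : (r : S) * inv (s : S) = 1 := by rw [hrs]; exact hS.gen_unit s.1 s.2
            have hval2 : pos (b₀ ++ [r]) * neg inv (c₀ ++ [s]) = pos b₀ * neg inv c₀ := by
              rw [hval, hr1, mul_one]
            have hsub : r = s := Subtype.ext hrs
            rcases ih c₀ with ⟨b', hb, hv⟩ | ⟨c', hc, hv⟩ | ⟨hv, hpay⟩
            · left
              refine ⟨b', ?_, by rw [hval2, hv]⟩
              rw [hb, hsub, List.append_assoc]
            · right; left
              refine ⟨c', ?_, by rw [hval2, hv]⟩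
              rw [hc, hsub, List.append_assoc]
            · right; right
              exact ⟨by rw [hval2, hv], hpay⟩
          · right; right
            constructor
            · rw [hval, hS.gen_zero r.1 r.2 s.1 s.2 hrs, mul_zero, zero_mul]
            · exact ⟨r, s, hrs⟩

include hS in
lemma el_mul (a b c d : List (L Λ)) :
    (∃ b', b = b' ++ c ∧ el inv a b * el inv c d = el inv a (b' ++ d)) ∨
    (∃ c', c = c' ++ b ∧ el inv a b * el inv c d = el inv (c' ++ a) d) ∨
    (el inv a b * el inv c d = 0 ∧ ∃ r s : L Λ, (r : S) ≠ (s : S)) := by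
  have hval : el inv a b * el inv c d = neg inv a * (pos b * neg inv c) * pos d := by
    rw [el, el, mul_assoc, ← mul_assoc (pos b), ← mul_assoc, ← mul_assoc]
  rcases PN hS b c with ⟨b', hb, hv⟩ | ⟨c', hc, hv⟩ | ⟨hv, hpay⟩
  · left
    refine ⟨b', hb, ?_⟩
    rw [hval, hv, el, pos_append, mul_assoc]
  · right; left
    refine ⟨c', hc, ?_⟩
    rw [hval, hv, el, neg_append, mul_assoc]
  · right; right
    refine ⟨?_, hpay⟩
    rw [hval, hv, mul_zero, zero_mul]

include hS in
lemma two_letters : ∃ p q : L Λ, (p : S) ≠ (q : S) := by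
  by_contra h
  push_neg at h
  -- the set of elements of the form `el a b` is a subsemigroup
  set T : Subsemigroup S :=
    { carrier := {s | ∃ a b : List (L Λ), s = el inv a b}
      mul_mem' := by
        rintro x y ⟨a, b, rfl⟩ ⟨c, d, rfl⟩
        rcases el_mul hS a b c d with ⟨b', _, hv⟩ | ⟨c', _, hv⟩ | ⟨_, r, s, hrs⟩
        · exact ⟨a, b' ++ d, hv⟩
        · exact ⟨c' ++ a, d, hv⟩
        · exact absurd (h r s) hrs } with hT
  have hgen : (Λ ∪ inv '' Λ) ⊆ (T : Set S) := by
    rintro x (hx | ⟨y, hy, rfl⟩)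
    · exact ⟨[], [⟨x, hx⟩], by simp [el_nil]⟩
    · exact ⟨[⟨y, hy⟩], [], by simp [el]⟩
  have hle : Subsemigroup.closure (Λ ∪ inv '' Λ) ≤ T := Subsemigroup.closure_le.mpr hgen
  rw [hS.generates] at hle
  obtain ⟨a, b, hab⟩ := hle (Subsemigroup.mem_top (0 : S))
  exact el_ne_zero hS a b hab.symm

include hS in
lemma other_letter (r : L Λ) : ∃ s : L Λ, (s : S) ≠ (r : S) := by
  obtain ⟨p, q, hpq⟩ := two_letters hS
  by_cases h : (p : S) = (r : S)
  · exact ⟨q, by rw [← h]; exact hpq.symm⟩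
  · exact ⟨p, h⟩

include hS in
lemma inv_one : inv (1 : S) = 1 := (hS.inv_unique 1 1 (by simp) (by simp)).symm

include hS in
lemma negpos_one : ∀ l : List (L Λ), neg inv l * pos l = 1 → l = [] := by
  intro l
  induction l using List.reverseRecOn with
  | nil => intro _; rfl
  | append_singleton l₀ r ih =>
      intro h
      exfalso
      rw [neg_concat, pos_concat, mul_assoc, ← mul_assoc (neg inv l₀)] at h
      -- h : inv r * (neg l₀ * pos l₀ * r) = 1
      have hrr : (r : S) * inv (r : S) = 1 := hS.gen_unit r.1 r.2
      have e1 := congrArg (fun x => (r : S) * x) h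
      simp only [mul_one] at e1
      rw [← mul_assoc, hrr, one_mul] at e1
      -- e1 : neg l₀ * pos l₀ * r = r
      have e2 := congrArg (fun x => x * inv (r : S)) e1
      rw [mul_assoc, hrr, mul_one] at e2
      -- e2 : neg l₀ * pos l₀ = 1
      have hl₀ : l₀ = [] := ih e2
      subst hl₀
      simp only [neg_nil, pos_nil, one_mul, mul_one] at h
      -- h : inv r * r = 1
      obtain ⟨s, hs⟩ := other_letter hS r
      have h0 : (s : S) * inv (r : S) = 0 := hS.gen_zero s.1 s.2 r.1 r.2 hs
      have hs0 : (s : S) = 0 := by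
        calc (s : S) = (s : S) * (inv (r : S) * (r : S)) := by rw [h, mul_one]
          _ = ((s : S) * inv (r : S)) * (r : S) := by rw [mul_assoc]
          _ = 0 := by rw [h0, zero_mul]
      have : (0 : S) = 1 := by
        rw [← hS.gen_unit s.1 s.2, hs0, zero_mul]
      exact hS.zero_ne_one this

include hS in
lemma neg_eq_inv_pos (l : List (L Λ)) : neg inv l = inv (pos l) := by
  apply hS.inv_unique
  · rw [pn hS, one_mul]
  · rw [mul_assoc, pn hS, mul_one]

include hS in
lemma pos_eq_inv_neg (l : List (L Λ)) : pos l = inv (neg inv l) := by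
  apply hS.inv_unique
  · rw [mul_assoc, pn hS, mul_one]
  · rw [pn hS, one_mul]

include hS in
lemma pos_one (l : List (L Λ)) (hl : pos l = 1) : l = [] := by
  have hnl : neg inv l = 1 := by rw [neg_eq_inv_pos hS, hl, inv_one hS]
  exact negpos_one hS l (by rw [hnl, hl, one_mul])

include hS in
lemma neg_one (l : List (L Λ)) (hl : neg inv l = 1) : l = [] := by
  have hpl : pos l = 1 := by rw [pos_eq_inv_neg hS, hl, inv_one hS]
  exact negpos_one hS l (by rw [hl, hpl, one_mul])

include hS in
lemma pos_inj : ∀ x y : List (L Λ), pos x = pos y → x = y := by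
  intro x y hxy
  have h1 : pos x * neg inv y = 1 := by rw [hxy, pn hS]
  rcases PN hS x y with ⟨b', hb, hv⟩ | ⟨c', hc, hv⟩ | ⟨hv, _⟩
  · have : b' = [] := pos_one hS b' (by rw [← hv, h1])
    rw [hb, this, List.nil_append]
  · have : c' = [] := neg_one hS c' (by rw [← hv, h1])
    rw [hc, this, List.nil_append]
  · rw [hv] at h1
    exact absurd h1 hS.zero_ne_one

include hS in
lemma pad_inj (e c d : List (L Λ)) (h : el inv (e ++ c) (e ++ d) = el inv c d) : e = [] := by
  have h1 : pos c * el inv (e ++ c) (e ++ d) = neg inv e * pos e * pos d := by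
    rw [el, neg_append, pos_append]
    calc pos c * (neg inv c * neg inv e * (pos e * pos d))
        = (pos c * neg inv c) * (neg inv e * (pos e * pos d)) := by
          rw [mul_assoc, mul_assoc]
      _ = neg inv e * (pos e * pos d) := by rw [pn hS, one_mul]
      _ = neg inv e * pos e * pos d := by rw [mul_assoc]
  have h2 : pos c * el inv c d = pos d := pos_mul_el hS c d
  rw [h, h2] at h1
  -- pos d = neg e * pos e * pos d
  have h3 : (neg inv e * pos e) * (pos d * neg inv d) = pos d * neg inv d := by
    rw [← mul_assoc, ← h1]
  rw [pn hS, mul_one] at h3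
  exact negpos_one hS e h3

include hS in
lemma el_inj (a b c d : List (L Λ)) (h : el inv a b = el inv c d) : a = c ∧ b = d := by
  have h1 : pos b = (pos a * neg inv c) * pos d := by
    have := pos_mul_el hS a b
    rw [h] at this
    rw [← this, el, ← mul_assoc]
  rcases PN hS a c with ⟨a', ha, hv⟩ | ⟨c', hc, hv⟩ | ⟨hv, _⟩
  · rw [hv, ← pos_append] at h1
    have hb : b = a' ++ d := pos_inj hS _ _ h1
    have : a' = [] := by
      apply pad_inj hS a' c d
      rw [← ha, ← hb, h]
    subst this
    rw [List.nil_append] at ha hb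
    exact ⟨ha, hb⟩
  · rw [hv] at h1
    have h2 : pos (c' ++ b) = pos d := by
      rw [pos_append]
      rw [h1]
      calc pos c' * (neg inv c' * pos d) = (pos c' * neg inv c') * pos d := by rw [mul_assoc]
        _ = pos d := by rw [pn hS, one_mul]
    have hd : d = c' ++ b := (pos_inj hS _ _ h2).symm
    have : c' = [] := by
      apply pad_inj hS c' a b
      rw [← hc, ← hd, h]
    subst this
    rw [List.nil_append] at hc hd
    exact ⟨hc.symm, hd.symm⟩
  · rw [hv, zero_mul] at h1
    exfalso
    have := pn hS b
    rw [h1, zero_mul] at this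
    exact hS.zero_ne_one this

include hS in
lemma el_one (a b : List (L Λ)) (h : el inv a b = 1) : a = [] ∧ b = [] := by
  have := el_inj hS a b [] [] (by rw [h, el_nil_nil])
  exact this

include hS in
lemma fiber_sub (a b c d : List (L Λ)) (h : pos a * el inv c d * neg inv b = 1) :
    ∃ e, a = e ++ c ∧ b = e ++ d := by
  have hval : pos a * el inv c d * neg inv b = (pos a * neg inv c) * (pos d * neg inv b) := by
    rw [el]
    rw [mul_assoc, mul_assoc, mul_assoc]
  rw [hval] at h
  rcases PN hS a c with ⟨a', ha, hv⟩ | ⟨c', hc, hv⟩ | ⟨hv, _⟩ <;>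
    rcases PN hS d b with ⟨d', hd, hw⟩ | ⟨b', hb, hw⟩ | ⟨hw, _⟩
  · -- pos a' * pos d' = 1
    rw [hv, hw, ← pos_append] at h
    have := pos_one hS _ h
    rcases List.append_eq_nil_iff.mp this with ⟨h1, h2⟩
    subst h1; subst h2
    rw [List.nil_append] at ha hd
    exact ⟨[], by simp [ha], by simp [hd]⟩
  · -- pos a' * neg b' = 1
    rw [hv, hw] at h
    rcases PN hS a' b' with ⟨x, hx, hu⟩ | ⟨y, hy, hu⟩ | ⟨hu, _⟩
    · rw [hu] at h
      have := pos_one hS _ h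
      subst this
      rw [List.nil_append] at hx
      refine ⟨a', by rw [ha], by rw [hb, hx]⟩
    · rw [hu] at h
      have := neg_one hS _ h
      subst this
      rw [List.nil_append] at hy
      refine ⟨a', by rw [ha], by rw [hb, ← hy]⟩
    · rw [hu] at h
      exact absurd h hS.zero_ne_one
  · rw [hw, mul_zero] at h
    exact absurd h hS.zero_ne_one
  · -- neg c' * pos d' = el c' d' = 1
    rw [hv, hw] at h
    have := el_one hS c' d' h
    rcases this with ⟨h1, h2⟩
    subst h1; subst h2
    rw [List.nil_append] at hc hd
    exact ⟨[], by simp [hc], by simp [hd]⟩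
  · -- neg c' * neg b' = neg (b' ++ c') = 1
    rw [hv, hw, ← neg_append] at h
    have := neg_one hS _ h
    rcases List.append_eq_nil_iff.mp this with ⟨h1, h2⟩
    subst h1; subst h2
    rw [List.nil_append] at hc hb
    exact ⟨[], by simp [hc], by simp [hb]⟩
  · rw [hw, mul_zero] at h
    exact absurd h hS.zero_ne_one
  · rw [hv, zero_mul] at h
    exact absurd h hS.zero_ne_one
  · rw [hv, zero_mul] at h
    exact absurd h hS.zero_ne_one
  · rw [hv, zero_mul] at h
    exact absurd h hS.zero_ne_one

include hS in
lemma gen_rep (s : S) : s = 0 ∨ ∃ a b : List (L Λ), s = el inv a b := by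
  set T : Subsemigroup S :=
    { carrier := {s | s = 0 ∨ ∃ a b : List (L Λ), s = el inv a b}
      mul_mem' := by
        rintro x y (rfl | ⟨a, b, rfl⟩) hy
        · rcases hy with rfl | ⟨c, d, rfl⟩ <;> simp
        · rcases hy with rfl | ⟨c, d, rfl⟩
          · simp
          · rcases el_mul hS a b c d with ⟨b', _, hv⟩ | ⟨c', _, hv⟩ | ⟨hv, _⟩
            · exact Or.inr ⟨a, b' ++ d, hv⟩
            · exact Or.inr ⟨c' ++ a, d, hv⟩
            · exact Or.inl hv } with hT
  have hgen : (Λ ∪ inv '' Λ) ⊆ (T : Set S) := by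
    rintro x (hx | ⟨y, hy, rfl⟩)
    · exact Or.inr ⟨[], [⟨x, hx⟩], by simp [el_nil]⟩
    · exact Or.inr ⟨[⟨y, hy⟩], [], by simp [el]⟩
  have hle : Subsemigroup.closure (Λ ∪ inv '' Λ) ≤ T := Subsemigroup.closure_le.mpr hgen
  rw [hS.generates] at hle
  exact hle (Subsemigroup.mem_top s)

include hS in
lemma greenR_char (x : S) : x ∈ greenR (1 : S) ↔ ∃ w : List (L Λ), x = pos w := by
  constructor
  · intro hx
    have hone : (1 : S) ∈ {t | ∃ s, t = x * s} := by
      rw [hx]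
      exact ⟨1, (one_mul 1).symm⟩
    obtain ⟨s, hs⟩ := hone
    rcases gen_rep hS x with rfl | ⟨a, b, rfl⟩
    · rw [zero_mul] at hs
      exact absurd hs.symm hS.zero_ne_one
    · rcases gen_rep hS s with rfl | ⟨c, d, rfl⟩
      · rw [mul_zero] at hs
        exact absurd hs.symm hS.zero_ne_one
      · rcases el_mul hS a b c d with ⟨b', _, hv⟩ | ⟨c', _, hv⟩ | ⟨hv, _⟩
        · rw [hv] at hs
          have := el_one hS _ _ hs.symm
          refine ⟨b, ?_⟩
          rw [this.1, el_nil]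
        · rw [hv] at hs
          have h0 := el_one hS _ _ hs.symm
          have ha : a = [] := by
            have := h0.1
            exact (List.append_eq_nil_iff.mp this).2
          refine ⟨b, ?_⟩
          rw [ha, el_nil]
        · rw [hv] at hs
          exact absurd hs.symm hS.zero_ne_one
  · rintro ⟨w, rfl⟩
    show {t | ∃ s, t = pos w * s} = {t | ∃ s, t = 1 * s}
    ext t
    simp only [Set.mem_setOf_eq, one_mul]
    constructor
    · rintro ⟨s, rfl⟩
      exact ⟨pos w * s, rfl⟩
    · intro _
      exact ⟨neg inv w * t, by rw [← mul_assoc, pn hS, one_mul]⟩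

end basic

section topo

variable [TopologicalSpace S] [T2Space S]
variable (hl : ∀ a : S, Continuous (fun x : S => a * x))
variable (hr : ∀ a : S, Continuous (fun x : S => x * a))

include hl hr in
lemma contL (u v : S) : Continuous fun t : S => u * t * v := (hr v).comp (hl u)

include hS hl hr in
lemma conj_nonzero (r : L Λ) (a b : List (L Λ))
    (h : (r : S) * el inv a b * inv (r : S) ≠ 0) :
    (a = [] ∨ ∃ a₀, a = a₀ ++ [r]) ∧ (b = [] ∨ ∃ b₀, b = b₀ ++ [r]) := by
  have hval : (r : S) * el inv a b * inv (r : S)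
      = (pos [r] * neg inv a) * (pos b * neg inv [r]) := by
    rw [el, pos_single, neg_single, mul_assoc, mul_assoc, mul_assoc]
  rw [hval] at h
  have h1 : pos [r] * neg inv a ≠ 0 := fun hz => h (by rw [hz, zero_mul])
  have h2 : pos b * neg inv [r] ≠ 0 := fun hz => h (by rw [hz, mul_zero])
  constructor
  · rcases PN hS [r] a with ⟨b', hb, _⟩ | ⟨c', hc, _⟩ | ⟨hv, _⟩
    · -- [r] = b' ++ a
      rcases a with _ | ⟨x, xs⟩
      · exact Or.inl rfl
      · right
        cases b' with
        | nil =>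
            simp only [List.nil_append, List.cons.injEq] at hb
            exact ⟨[], by rw [List.nil_append, hb.1, hb.2]⟩
        | cons y ys =>
            exfalso
            simp only [List.cons_append, List.cons.injEq] at hb
            exact List.cons_ne_nil _ _ (List.append_eq_nil_iff.mp hb.2.symm).2
    · exact Or.inr ⟨c', hc⟩
    · exact absurd hv h1
  · rcases PN hS b [r] with ⟨b', hb, _⟩ | ⟨c', hc, _⟩ | ⟨hv, _⟩
    · exact Or.inr ⟨b', hb⟩
    · -- [r] = c' ++ b
      rcases b with _ | ⟨x, xs⟩
      · exact Or.inl rfl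
      · right
        cases c' with
        | nil =>
            simp only [List.nil_append, List.cons.injEq] at hc
            exact ⟨[], by rw [List.nil_append, hc.1, hc.2]⟩
        | cons y ys =>
            exfalso
            simp only [List.cons_append, List.cons.injEq] at hc
            exact List.cons_ne_nil _ _ (List.append_eq_nil_iff.mp hc.2.symm).2
    · exact absurd hv h2

include hS hl hr in
lemma one_isolated : IsOpen ({(1 : S)} : Set S) := by
  obtain ⟨p, q, hpq⟩ := two_letters hS
  set E : Set S := (fun t : S => (p : S) * t * inv (p : S)) ⁻¹' {(0:S)}ᶜ ∩
      ((fun t : S => (q : S) * t * inv (q : S)) ⁻¹' {(0:S)}ᶜ) with hE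
  have hEopen : IsOpen E :=
    ((contL hl hr _ _).isOpen_preimage _ isOpen_compl_singleton).inter
      ((contL hl hr _ _).isOpen_preimage _ isOpen_compl_singleton)
  have hone : (1 : S) ∈ E := by
    simp only [hE, Set.mem_inter_iff, Set.mem_preimage, Set.mem_compl_iff,
      Set.mem_singleton_iff, mul_one, hS.gen_unit p.1 p.2, hS.gen_unit q.1 q.2]
    exact ⟨fun h => hS.zero_ne_one h.symm, fun h => hS.zero_ne_one h.symm⟩
  have hsub : E ⊆ {1} := by
    intro t ht
    obtain ⟨htp, htq⟩ := ht
    have htp' : (p : S) * t * inv (p : S) ≠ 0 := by simpa using htp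
    have htq' : (q : S) * t * inv (q : S) ≠ 0 := by simpa using htq
    rcases gen_rep hS t with rfl | ⟨a, b, rfl⟩
    · exact absurd (by rw [mul_zero, zero_mul]) htp'
    · have hp := conj_nonzero hS hl hr p a b htp'
      have hq := conj_nonzero hS hl hr q a b htq'
      have hanil : a = [] := by
        rcases hp.1 with h | ⟨a₀, rfl⟩
        · exact h
        · rcases hq.1 with h | ⟨a₁, he⟩
          · exact h
          · exfalso
            have := congrArg List.reverse he
            simp only [List.reverse_append, List.reverse_cons, List.reverse_nil,
              List.nil_append, List.cons_append, List.cons.injEq] at this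
            exact hpq (congrArg Subtype.val this.1)
      have hbnil : b = [] := by
        rcases hp.2 with h | ⟨b₀, rfl⟩
        · exact h
        · rcases hq.2 with h | ⟨b₁, he⟩
          · exact h
          · exfalso
            have := congrArg List.reverse he
            simp only [List.reverse_append, List.reverse_cons, List.reverse_nil,
              List.nil_append, List.cons_append, List.cons.injEq] at this
            exact hpq (congrArg Subtype.val this.1)
      rw [hanil, hbnil, el_nil_nil]
      rfl
  have : E = {1} := Set.Subset.antisymm hsub (by simpa using hone)
  rw [← this]
  exact hEopen

lemma open_finite_isolated {O : Set S} (hO : IsOpen O) (hfin : O.Finite) {x : S}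
    (hx : x ∈ O) : IsOpen ({x} : Set S) := by
  have : ({x} : Set S) = O \ (O \ {x}) := by
    ext y
    constructor
    · rintro rfl
      exact ⟨hx, fun hy => hy.2 rfl⟩
    · rintro ⟨hyO, hy⟩
      by_contra hne
      exact hy ⟨hyO, hne⟩
  rw [this]
  exact hO.sdiff ((hfin.subset Set.diff_subset).isClosed)

include hS hl hr in
lemma isolated_nonzero (a b : List (L Λ)) : IsOpen ({el inv a b} : Set S) := by
  set O : Set S := (fun t : S => pos a * t * neg inv b) ⁻¹' {(1:S)} with hO
  have hOopen : IsOpen O :=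
    (contL hl hr _ _).isOpen_preimage _ (one_isolated hS hl hr)
  have hOfin : O.Finite := by
    apply Set.Finite.subset (Set.Finite.image
      (f := fun k => el inv (a.drop k) (b.drop k)) (Set.finite_Iic a.length))
    intro t ht
    have h : pos a * t * neg inv b = 1 := ht
    have ht0 : t ≠ 0 := by
      intro rfl0
      rw [rfl0, mul_zero, zero_mul] at h
      exact hS.zero_ne_one h
    rcases gen_rep hS t with rfl | ⟨c, d, rfl⟩
    · exact absurd rfl ht0
    · obtain ⟨e, hae, hbe⟩ := fiber_sub hS a b c d h
      refine ⟨e.length, by simp [hae, Nat.le_add_right], ?_⟩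
      show el inv (a.drop e.length) (b.drop e.length) = el inv c d
      rw [hae, hbe, List.drop_left, List.drop_left]
  have hmem : el inv a b ∈ O := sand_one hS a b
  exact open_finite_isolated hOopen hOfin hmem

include hS hl hr in
lemma zero_not_isolated (hnd : ¬ DiscreteTopology S) : ¬ IsOpen ({(0 : S)} : Set S) := by
  intro h0
  apply hnd
  apply discreteTopology_iff_isOpen_singleton.mpr
  intro x
  rcases gen_rep hS x with rfl | ⟨a, b, rfl⟩
  · exact h0
  · exact isolated_nonzero hS hl hr a b

include hS in
lemma mul_strip (β e f : List (L Λ)) : pos (β ++ e) * el inv e f = pos (β ++ f) := by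
  rw [el, pos_append, pos_append]
  exact sandwich hS (pos β) (pos f) e

include hS in
lemma el_mul_letter (a b : List (L Λ)) (r : L Λ) : el inv a b * (r : S) = el inv a (b ++ [r]) := by
  rw [el, el, mul_assoc, pos_concat]

section withU

variable (U₀ : Set S) (hU : U₀ ∈ nhds (0 : S)) (hUc : IsCompact U₀)

include hS hl hr hUc in
lemma star (V : Set S) (hV : IsOpen V) (h0V : (0:S) ∈ V) : (U₀ \ V).Finite := by
  rw [Set.diff_eq]
  have hA : IsCompact (U₀ ∩ Vᶜ) := hUc.inter_right hV.isClosed_compl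
  have hiso : ∀ x : S, x ∈ U₀ ∩ Vᶜ → IsOpen ({x} : Set S) := by
    intro x hx
    rcases gen_rep hS x with rfl | ⟨a, b, rfl⟩
    · exact absurd h0V hx.2
    · exact isolated_nonzero hS hl hr a b
  obtain ⟨t, ht⟩ := hA.elim_finite_subcover (fun x : ↥(U₀ ∩ Vᶜ) => ({(x : S)} : Set S))
    (fun x => hiso x.1 x.2) (fun x hx => Set.mem_iUnion.mpr ⟨⟨x, hx⟩, rfl⟩)
  exact Set.Finite.subset (t.finite_toSet.biUnion (fun i _ => Set.finite_singleton _)) ht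

include hS hl hr hU hUc in
lemma badfin (u v : S) : {t | t ∈ U₀ ∧ u * t * v ∉ U₀}.Finite := by
  set V := (fun t : S => u * t * v) ⁻¹' interior U₀ with hV
  have hVopen : IsOpen V := (contL hl hr u v).isOpen_preimage _ isOpen_interior
  have h0V : (0:S) ∈ V := by
    show u * 0 * v ∈ interior U₀
    rw [mul_zero, zero_mul]
    exact mem_interior_iff_mem_nhds.mpr hU
  apply Set.Finite.subset (star hS hl hr U₀ hUc V hVopen h0V)
  rintro t ⟨htU, htn⟩
  exact ⟨htU, fun hVt => htn (interior_subset hVt)⟩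

include hS hl hr hU hUc in
lemma delta_fin (e f : List (L Λ)) :
    {β : List (L Λ) | pos (β ++ e) ∈ U₀ ∧ pos (β ++ f) ∉ U₀}.Finite := by
  have hinj : Function.Injective (fun β : List (L Λ) => pos (β ++ e)) := by
    intro x y hxy
    exact List.append_cancel_right (pos_inj hS _ _ hxy)
  apply Set.Finite.subset (Set.Finite.preimage (f := fun β : List (L Λ) => pos (β ++ e))
    hinj.injOn (badfin hS hl hr U₀ hU hUc 1 (el inv e f)))
  intro β hβ
  show pos (β ++ e) ∈ {t | t ∈ U₀ ∧ 1 * t * (el inv e f) ∉ U₀}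
  refine ⟨hβ.1, ?_⟩
  rw [one_mul, mul_strip hS]
  exact hβ.2

include hS hl hr hU hUc in
lemma lpad_fin (d : List (L Λ)) :
    {w : List (L Λ) | pos w ∈ U₀ ∧ pos (d ++ w) ∉ U₀}.Finite := by
  have hinj : Function.Injective (fun w : List (L Λ) => pos w) :=
    fun x y hxy => pos_inj hS _ _ hxy
  apply Set.Finite.subset (Set.Finite.preimage (f := fun w : List (L Λ) => pos w)
    hinj.injOn (badfin hS hl hr U₀ hU hUc (pos d) 1))
  intro w hw
  show pos w ∈ {t | t ∈ U₀ ∧ (pos d) * t * 1 ∉ U₀}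
  refine ⟨hw.1, ?_⟩
  rw [mul_one, ← pos_append]
  exact hw.2

include hS hl hr hU hUc in
lemma strip_fin (c : List (L Λ)) :
    {b : List (L Λ) | el inv c b ∈ U₀ ∧ pos b ∉ U₀}.Finite := by
  have hinj : Function.Injective (fun b : List (L Λ) => el inv c b) :=
    fun x y hxy => (el_inj hS _ _ _ _ hxy).2
  apply Set.Finite.subset (Set.Finite.preimage (f := fun b : List (L Λ) => el inv c b)
    hinj.injOn (badfin hS hl hr U₀ hU hUc (pos c) 1))
  intro b hb
  show el inv c b ∈ {t | t ∈ U₀ ∧ (pos c) * t * 1 ∉ U₀}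
  refine ⟨hb.1, ?_⟩
  rw [mul_one, pos_mul_el hS]
  exact hb.2

include hS hl hr hU hUc in
lemma main (hnd : ¬ DiscreteTopology S) : (greenR (1 : S) \ U₀).Finite := by
  by_contra hfin
  obtain ⟨p, q, hpq⟩ := two_letters hS
  -- the set of "bad" positive words
  have hBinf : {w : List (L Λ) | pos w ∉ U₀}.Infinite := by
    intro hBfin
    apply hfin
    apply Set.Finite.subset (hBfin.image (fun w => pos w))
    rintro x ⟨hxg, hxU⟩
    obtain ⟨w, rfl⟩ := (greenR_char hS x).mp hxg
    exact ⟨w, hxU, rfl⟩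
  set Bw : Set (List (L Λ)) := {w | pos w ∉ U₀} with hBw
  -- 0 is not isolated
  have h0 : ¬ IsOpen ({(0:S)} : Set S) := zero_not_isolated hS hl hr hnd
  -- U₀ is infinite
  have hU0inf : U₀.Infinite := by
    intro hUfin
    apply h0
    have hclosed : IsClosed (U₀ \ {0}) := (hUfin.subset Set.diff_subset).isClosed
    have heq : ({(0:S)} : Set S) = interior U₀ ∩ (U₀ \ {0})ᶜ := by
      ext y
      constructor
      · rintro rfl
        exact ⟨mem_interior_iff_mem_nhds.mpr hU, fun hy => hy.2 rfl⟩
      · rintro ⟨hyi, hyn⟩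
        by_contra hne
        exact hyn ⟨interior_subset hyi, hne⟩
    rw [heq]
    exact isOpen_interior.inter hclosed.isOpen_compl
  -- the set of representing pairs is infinite
  set F1 : Set (List (L Λ) × List (L Λ)) := {ab | el inv ab.1 ab.2 ∈ U₀} with hF1
  have hF1inf : F1.Infinite := by
    intro hfinF
    apply hU0inf
    apply Set.Finite.subset ((hfinF.image (fun ab => el inv ab.1 ab.2)).insert 0)
    intro t htU
    rcases gen_rep hS t with rfl | ⟨a, b, rfl⟩
    · exact Set.mem_insert _ _
    · exact Set.mem_insert_of_mem _ ⟨(a, b), htU, rfl⟩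
  -- some first coordinate has infinite multiplicity
  have hmult : ∃ c : List (L Λ), {b | el inv c b ∈ U₀}.Infinite := by
    by_cases hfst : (Prod.fst '' F1).Finite
    · by_contra hno
      push_neg at hno
      apply hF1inf
      have hsub : F1 ⊆ ⋃ a ∈ Prod.fst '' F1, (fun b => (a, b)) '' {b | el inv a b ∈ U₀} := by
        rintro ⟨a, b⟩ hab
        exact Set.mem_biUnion ⟨(a, b), hab, rfl⟩ ⟨b, hab, rfl⟩
      exact Set.Finite.subset
        (hfst.biUnion (fun a _ => ((hno a).image _))) hsub
    · have hbad := badfin hS hl hr U₀ hU hUc 1 (p : S)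
      set AF : Set (List (L Λ)) :=
        ⋃ f ∈ {t | t ∈ U₀ ∧ 1 * t * (p : S) ∉ U₀}, {a | ∃ b, el inv a b = f} with hAF
      have hAFfin : AF.Finite := hbad.biUnion (fun f _ => Set.Subsingleton.finite (by
        rintro a₁ ⟨b₁, h₁⟩ a₂ ⟨b₂, h₂⟩
        exact (el_inj hS a₁ b₁ a₂ b₂ (h₁.trans h₂.symm)).1))
      have hfst' : (Prod.fst '' F1).Infinite := hfst
      have hne : ((Prod.fst '' F1) \ AF).Nonempty :=
        Set.Infinite.nonempty (hfst'.diff hAFfin)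
      obtain ⟨a, ⟨⟨a', b⟩, hab, ha'⟩, haA⟩ := hne
      simp only at ha'
      subst ha'
      have horb : ∀ k, el inv a' (b ++ List.replicate k p) ∈ U₀ := by
        intro k
        induction k with
        | zero => rw [List.replicate_zero, List.append_nil]; exact hab
        | succ n ih =>
            have hnotbad : el inv a' (b ++ List.replicate n p) ∉
                {t | t ∈ U₀ ∧ 1 * t * (p : S) ∉ U₀} := by
              intro hmem
              exact haA (Set.mem_biUnion hmem ⟨b ++ List.replicate n p, rfl⟩)
            have hstep : 1 * el inv a' (b ++ List.replicate n p) * (p : S) ∈ U₀ := by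
              by_contra hcon
              exact hnotbad ⟨ih, hcon⟩
            rw [one_mul, el_mul_letter hS, List.append_assoc] at hstep
            rw [List.replicate_succ']
            rw [← List.append_assoc]
            rw [← List.append_assoc] at hstep
            exact hstep
      refine ⟨a', Set.infinite_of_injective_forall_mem
        (f := fun k => b ++ List.replicate k p) ?_ horb⟩
      intro k₁ k₂ hk
      have := congrArg List.length hk
      simpa using this
  obtain ⟨c₀, hc₀⟩ := hmult
  -- the set of good positive words is infinite
  set Gw : Set (List (L Λ)) := {w | pos w ∈ U₀} with hGw
  have hGinf : Gw.Infinite := by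
    apply Set.Infinite.mono (s := {b | el inv c₀ b ∈ U₀} \ {b | el inv c₀ b ∈ U₀ ∧ pos b ∉ U₀})
    · intro b hb
      by_contra hbG
      exact hb.2 ⟨hb.1, hbG⟩
    · exact hc₀.diff (strip_fin hS hl hr U₀ hU hUc c₀)
  -- B-ray
  have hFqB := delta_fin hS hl hr U₀ hU hUc [q] []
  set FqB : Set (List (L Λ)) := {β | pos (β ++ [q]) ∈ U₀ ∧ pos (β ++ []) ∉ U₀} with hFqBdef
  have hblockBfin : (⋃ y ∈ FqB, {w : List (L Λ) | ∃ k, w ++ List.replicate k q = y}).Finite := by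
    apply hFqB.biUnion
    intro y _
    apply Set.Finite.subset ((Set.finite_Iic y.length).image (fun n => y.take n))
    rintro w ⟨k, hk⟩
    refine ⟨w.length, ?_, ?_⟩
    · have := congrArg List.length hk
      simp only [List.length_append] at this
      exact Set.mem_Iic.mpr (by omega)
    · show List.take w.length y = w
      rw [← hk]
      exact List.take_left ..
  obtain ⟨w₀, hw₀B, hw₀nb⟩ := Set.Infinite.nonempty (hBinf.diff hblockBfin)
  have rayB : ∀ k, pos (w₀ ++ List.replicate k q) ∉ U₀ := by
    intro k
    induction k with
    | zero => rw [List.replicate_zero, List.append_nil]; exact hw₀B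
    | succ n ih =>
        intro hcon
        apply hw₀nb
        refine Set.mem_biUnion (t := fun y => {w : List (L Λ) | ∃ k, w ++ List.replicate k q = y})
          (x := w₀ ++ List.replicate n q) ?_ ⟨n, rfl⟩
        refine ⟨?_, ?_⟩
        · rw [List.replicate_succ', ← List.append_assoc] at hcon
          exact hcon
        · rw [List.append_nil]
          exact ih
  -- G-ray
  have hFqG := delta_fin hS hl hr U₀ hU hUc [] [q]
  set FqG : Set (List (L Λ)) := {β | pos (β ++ []) ∈ U₀ ∧ pos (β ++ [q]) ∉ U₀} with hFqGdef
  have hblockGfin : (⋃ y ∈ FqG, {w : List (L Λ) | ∃ k, w ++ List.replicate k q = y}).Finite := by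
    apply hFqG.biUnion
    intro y _
    apply Set.Finite.subset ((Set.finite_Iic y.length).image (fun n => y.take n))
    rintro w ⟨k, hk⟩
    refine ⟨w.length, ?_, ?_⟩
    · have := congrArg List.length hk
      simp only [List.length_append] at this
      exact Set.mem_Iic.mpr (by omega)
    · show List.take w.length y = w
      rw [← hk]
      exact List.take_left ..
  obtain ⟨g₀, hg₀G, hg₀nb⟩ := Set.Infinite.nonempty (hGinf.diff hblockGfin)
  have rayG : ∀ k, pos (g₀ ++ List.replicate k q) ∈ U₀ := by
    intro k
    induction k with
    | zero => rw [List.replicate_zero, List.append_nil]; exact hg₀G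
    | succ n ih =>
        by_contra hcon
        apply hg₀nb
        refine Set.mem_biUnion (t := fun y => {w : List (L Λ) | ∃ k, w ++ List.replicate k q = y})
          (x := g₀ ++ List.replicate n q) ?_ ⟨n, rfl⟩
        refine ⟨?_, ?_⟩
        · rw [List.append_nil]
          exact ih
        · rw [List.replicate_succ', ← List.append_assoc] at hcon
          exact hcon
  -- letters of w₀ together with q
  set Lset : Set (L Λ) := insert q {r | r ∈ w₀} with hLset
  have hLfin : Lset.Finite := (w₀.finite_toSet).insert q
  set F2 : Set (List (L Λ)) := ⋃ r ∈ Lset, {w | pos w ∈ U₀ ∧ pos ([r] ++ w) ∉ U₀} with hF2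
  have hF2fin : F2.Finite := hLfin.biUnion (fun r _ => lpad_fin hS hl hr U₀ hU hUc [r])
  obtain ⟨N, hN⟩ := (hF2fin.image List.length).bddAbove
  set m₀ : ℕ := N + 1 with hm₀
  set τ : List (L Λ) := g₀ ++ List.replicate m₀ q with hτ
  have hτG : pos τ ∈ U₀ := rayG m₀
  have hτlen : m₀ ≤ τ.length := by
    simp only [hτ, List.length_append, List.length_replicate]
    omega
  -- choose the starting point of the chain
  have hDτ := delta_fin hS hl hr U₀ hU hUc τ []
  have hrayinj : Function.Injective (fun j : ℕ => w₀ ++ List.replicate j q) := by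
    intro k₁ k₂ hk
    have := congrArg List.length hk
    simpa using this
  obtain ⟨x, ⟨j, rfl⟩, hj⟩ :=
    Set.Infinite.nonempty ((Set.infinite_range_of_injective hrayinj).diff hDτ)
  have hxB : pos ((w₀ ++ List.replicate j q) ++ τ) ∉ U₀ := by
    intro hmem
    exact hj ⟨hmem, by rw [List.append_nil]; exact rayB j⟩
  -- descending chain along the word w₀ ++ q^j
  have chain : ∀ z : List (L Λ), (∀ r ∈ z, r ∈ Lset) → pos (z ++ τ) ∉ U₀ → pos τ ∉ U₀ := by
    intro z
    induction z with
    | nil => intro _ h; simpa using h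
    | cons r z' ih =>
        intro hrs h
        apply ih (fun r' hr' => hrs r' (List.mem_cons_of_mem _ hr'))
        by_contra hcon
        have hmemF : (z' ++ τ) ∈ F2 := by
          apply Set.mem_biUnion (hrs r List.mem_cons_self)
          refine ⟨hcon, ?_⟩
          rw [List.singleton_append]
          rw [List.cons_append] at h
          exact h
        have hlen : (z' ++ τ).length ≤ N :=
          hN (Set.mem_image_of_mem List.length hmemF)
        have hge : m₀ ≤ (z' ++ τ).length := by
          calc m₀ ≤ τ.length := hτlen
            _ ≤ (z' ++ τ).length := by simp [List.length_append]
        omega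
  have hletters : ∀ r ∈ w₀ ++ List.replicate j q, r ∈ Lset := by
    intro r hr
    rcases List.mem_append.mp hr with h | h
    · exact Set.mem_insert_of_mem _ h
    · rw [List.eq_of_mem_replicate h]
      exact Set.mem_insert _ _
  exact (chain (w₀ ++ List.replicate j q) hletters hxB) hτG

end withU

end topo

end PolyPf


/-- For an arbitrary generating set, a compact neighborhood of zero in a
non-discrete locally compact semitopological polycyclic monoid contains all but
finitely many elements of the R-class of the unit. -/
theorem stmt12 {S : Type*} [MonoidWithZero S] (inv : S → S) (Λ : Set S)
    (hS : IsPolycyclicMonoid S inv Λ)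
    [TopologicalSpace S] [T2Space S] [LocallyCompactSpace S]
    (hl : ∀ a : S, Continuous (fun x : S => a * x))
    (hr : ∀ a : S, Continuous (fun x : S => x * a))
    (hnd : ¬ DiscreteTopology S)
    (U₀ : Set S) (hU : U₀ ∈ nhds (0 : S)) (hUc : IsCompact U₀) :
    (greenR (1 : S) \ U₀).Finite :=
  PolyPf.main hS hl hr U₀ hU hUc hnd
end

section
/- Let S be a non-discrete locally compact semitopological polycyclic monoid with generating set Λ (of arbitrary cardinality), and let U₀ be a compact neighborhood of the zero 0 in S. Then for every x ∈ S, the neighborhood U₀ contains all but finitely many points of the Green R-class R_x. -/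
namespace Poly13

variable {S : Type*} [MonoidWithZero S]

def prW (Λ : Set S) : List ↥Λ → S := fun l => l.foldr (fun a acc => acc * (a : S)) 1

def nrW (inv : S → S) (Λ : Set S) : List ↥Λ → S :=
  fun l => l.foldr (fun a acc => inv (a : S) * acc) 1

def encW (inv : S → S) (Λ : Set S) (g h : List ↥Λ) : S := nrW inv Λ g * prW Λ h

variable {inv : S → S} {Λ : Set S}

@[simp] lemma prW_nil : prW Λ [] = 1 := rfl
@[simp] lemma prW_cons (a : ↥Λ) (t : List ↥Λ) : prW Λ (a :: t) = prW Λ t * (a : S) := rfl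
@[simp] lemma nrW_nil : nrW inv Λ [] = 1 := rfl
@[simp] lemma nrW_cons (a : ↥Λ) (t : List ↥Λ) :
    nrW inv Λ (a :: t) = inv (a : S) * nrW inv Λ t := rfl

lemma prW_append (l₁ l₂ : List ↥Λ) : prW Λ (l₁ ++ l₂) = prW Λ l₂ * prW Λ l₁ := by
  induction l₁ with
  | nil => simp
  | cons a t ih => simp [ih, mul_assoc]

lemma nrW_append (l₁ l₂ : List ↥Λ) :
    nrW inv Λ (l₁ ++ l₂) = nrW inv Λ l₁ * nrW inv Λ l₂ := by
  induction l₁ with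
  | nil => simp
  | cons a t ih => simp [ih, mul_assoc]

variable (hS : IsPolycyclicMonoid S inv Λ)
include hS

lemma unit' (a : ↥Λ) : (a : S) * inv a = 1 := hS.gen_unit a a.2

lemma zero' {a b : ↥Λ} (hab : a ≠ b) : (a : S) * inv b = 0 :=
  hS.gen_zero a a.2 b b.2 (fun h => hab (Subtype.ext h))

lemma prW_mul_nrW (l : List ↥Λ) : prW Λ l * nrW inv Λ l = 1 := by
  induction l with
  | nil => simp
  | cons a t ih =>
    simp only [prW_cons, nrW_cons]
    rw [mul_assoc, ← mul_assoc (a : S), unit' hS, one_mul, ih]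

lemma prW_cancel (g r : List ↥Λ) : prW Λ (g ++ r) * nrW inv Λ g = prW Λ r := by
  rw [prW_append, mul_assoc, prW_mul_nrW hS, mul_one]

lemma nrW_cancel (h r : List ↥Λ) : prW Λ h * nrW inv Λ (h ++ r) = nrW inv Λ r := by
  rw [nrW_append, ← mul_assoc, prW_mul_nrW hS, one_mul]

lemma mid (h g : List ↥Λ) :
    (∃ r, h = g ++ r ∧ prW Λ h * nrW inv Λ g = prW Λ r) ∨
    (∃ r, g = h ++ r ∧ prW Λ h * nrW inv Λ g = nrW inv Λ r) ∨
    prW Λ h * nrW inv Λ g = 0 := by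
  induction h generalizing g with
  | nil =>
    right; left; exact ⟨g, rfl, by simp⟩
  | cons a t ih =>
    cases g with
    | nil => left; exact ⟨a :: t, rfl, by simp⟩
    | cons b s =>
      by_cases hab : a = b
      · subst hab
        have key : prW Λ (a :: t) * nrW inv Λ (a :: s) = prW Λ t * nrW inv Λ s := by
          simp only [prW_cons, nrW_cons]
          rw [mul_assoc, ← mul_assoc (a : S), unit' hS, one_mul]
        rcases ih s with ⟨r, hr, he⟩ | ⟨r, hr, he⟩ | he
        · left; exact ⟨r, by rw [hr]; rfl, key.trans he⟩
        · right; left; exact ⟨r, by rw [hr]; rfl, key.trans he⟩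
        · right; right; exact key.trans he
      · right; right
        simp only [prW_cons, nrW_cons]
        rw [mul_assoc, ← mul_assoc (a : S), zero' hS hab, zero_mul, mul_zero]

lemma prW_ne_zero (l : List ↥Λ) : prW Λ l ≠ 0 := fun h0 => by
  have := prW_mul_nrW hS l
  rw [h0, zero_mul] at this
  exact hS.zero_ne_one this

lemma nrW_ne_zero (l : List ↥Λ) : nrW inv Λ l ≠ 0 := fun h0 => by
  have := prW_mul_nrW hS l
  rw [h0, mul_zero] at this
  exact hS.zero_ne_one this

lemma encW_ne_zero (g h : List ↥Λ) : encW inv Λ g h ≠ 0 := fun h0 => by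
  have : prW Λ g * (nrW inv Λ g * prW Λ h) * nrW inv Λ h = 1 := by
    rw [← mul_assoc, prW_mul_nrW hS, one_mul, prW_mul_nrW hS]
  rw [encW] at h0
  rw [h0, mul_zero, zero_mul] at this
  exact hS.zero_ne_one this

lemma nr_cancel_left {g : List ↥Λ} {a b : S} (h : nrW inv Λ g * a = nrW inv Λ g * b) : a = b := by
  have h2 := congrArg (fun t => prW Λ g * t) h
  simp only [← mul_assoc, prW_mul_nrW hS, one_mul] at h2
  exact h2

lemma pr_cancel_right {h : List ↥Λ} {a b : S} (he : a * prW Λ h = b * prW Λ h) : a = b := by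
  have h2 := congrArg (fun t => t * nrW inv Λ h) he
  simp only [mul_assoc, prW_mul_nrW hS, mul_one] at h2
  exact h2


omit hS in
lemma comp_of_subsing (hsub : ∀ a b : ↥Λ, a = b) :
    ∀ l m : List ↥Λ, (∃ r, l = m ++ r) ∨ (∃ r, m = l ++ r) := by
  intro l
  induction l with
  | nil => intro m; right; exact ⟨m, rfl⟩
  | cons a t ih =>
    intro m
    cases m with
    | nil => left; exact ⟨a :: t, rfl⟩
    | cons b s =>
      obtain rfl : a = b := hsub a b
      rcases ih s with ⟨r, hr⟩ | ⟨r, hr⟩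
      · left; exact ⟨r, by rw [hr]; rfl⟩
      · right; exact ⟨r, by rw [hr]; rfl⟩

include hS in
lemma exists_pair : ∃ a b : ↥Λ, a ≠ b := by
  by_contra hcon
  push_neg at hcon
  have hrep : ∀ s : S, s ∈ Subsemigroup.closure (Λ ∪ inv '' Λ) →
      ∃ g h, s = encW inv Λ g h := by
    intro s hs
    induction hs using Subsemigroup.closure_induction with
    | mem x hx =>
      rcases hx with hx | ⟨y, hy, rfl⟩
      · exact ⟨[], [⟨x, hx⟩], by simp [encW]⟩
      · exact ⟨[⟨y, hy⟩], [], by simp [encW]⟩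
    | mul x y hx hy ihx ihy =>
      obtain ⟨g, h, rfl⟩ := ihx
      obtain ⟨g', h', rfl⟩ := ihy
      rcases comp_of_subsing hcon h g' with ⟨r, rfl⟩ | ⟨r, rfl⟩
      · exact ⟨g, h' ++ r, by
          rw [encW, encW, encW, mul_assoc, ← mul_assoc (prW Λ (g' ++ r)),
            prW_cancel hS, ← prW_append]⟩
      · exact ⟨g ++ r, h', by
          rw [encW, encW, encW, mul_assoc, ← mul_assoc (prW Λ h),
            nrW_cancel hS, ← mul_assoc, ← nrW_append]⟩
  have h0 : (0 : S) ∈ Subsemigroup.closure (Λ ∪ inv '' Λ) := by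
    rw [hS.generates]; exact Subsemigroup.mem_top 0
  obtain ⟨g, h, h0'⟩ := hrep 0 h0
  exact encW_ne_zero hS g h h0'.symm

include hS in
lemma rep (s : S) : s = 0 ∨ ∃ g h, s = encW inv Λ g h := by
  have hs : s ∈ Subsemigroup.closure (Λ ∪ inv '' Λ) := by
    rw [hS.generates]; exact Subsemigroup.mem_top s
  induction hs using Subsemigroup.closure_induction with
  | mem x hx =>
    rcases hx with hx | ⟨y, hy, rfl⟩
    · exact Or.inr ⟨[], [⟨x, hx⟩], by simp [encW]⟩
    · exact Or.inr ⟨[⟨y, hy⟩], [], by simp [encW]⟩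
  | mul x y hx hy ihx ihy =>
    rcases ihx with rfl | ⟨g, h, rfl⟩
    · exact Or.inl (zero_mul y)
    rcases ihy with rfl | ⟨g', h', rfl⟩
    · exact Or.inl (mul_zero _)
    rcases mid hS h g' with ⟨r, rfl, he⟩ | ⟨r, rfl, he⟩ | he
    · refine Or.inr ⟨g, h' ++ r, ?_⟩
      rw [encW, encW, encW, mul_assoc, ← mul_assoc (prW Λ (g' ++ r)), he, ← prW_append]
    · refine Or.inr ⟨g ++ r, h', ?_⟩
      rw [encW, encW, encW, mul_assoc, ← mul_assoc (prW Λ h), he, ← mul_assoc, ← nrW_append]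
    · refine Or.inl ?_
      rw [encW, encW, mul_assoc, ← mul_assoc (prW Λ h), he, zero_mul, mul_zero]

include hS in
lemma prW_eq_one {l : List ↥Λ} (h1 : prW Λ l = 1) : l = [] := by
  cases l with
  | nil => rfl
  | cons a t =>
    exfalso
    obtain ⟨p, q, hpq⟩ := exists_pair hS
    obtain ⟨σ, hσ⟩ : ∃ σ : ↥Λ, σ ≠ a := by
      by_cases hap : a = p
      · exact ⟨q, fun hqa => hpq (by rw [← hap, ← hqa])⟩
      · exact ⟨p, fun hpa => hap hpa.symm⟩
    have h2 : prW Λ t * ((a : S) * inv (σ : S)) = inv (σ : S) := by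
      have h3 := congrArg (fun z => z * inv (σ : S)) h1
      simpa [mul_assoc] using h3
    rw [zero' hS (Ne.symm hσ), mul_zero] at h2
    have h3 := unit' hS σ
    rw [← h2, mul_zero] at h3
    exact hS.zero_ne_one h3

include hS in
lemma nrW_eq_one {l : List ↥Λ} (h1 : nrW inv Λ l = 1) : l = [] := by
  have h2 := prW_mul_nrW hS l
  rw [h1, mul_one] at h2
  exact prW_eq_one hS h2

include hS in
lemma prW_injective {l l' : List ↥Λ} (h : prW Λ l = prW Λ l') : l = l' := by
  have h2 : prW Λ l * nrW inv Λ l' = 1 := by rw [h, prW_mul_nrW hS]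
  rcases mid hS l l' with ⟨r, hr, he⟩ | ⟨r, hr, he⟩ | he
  · rw [he] at h2
    obtain rfl := prW_eq_one hS h2
    rw [List.append_nil] at hr
    exact hr
  · rw [he] at h2
    obtain rfl := nrW_eq_one hS h2
    rw [List.append_nil] at hr
    exact hr.symm
  · rw [he] at h2
    exact absurd h2 hS.zero_ne_one

include hS in
lemma nrW_injective {l l' : List ↥Λ} (h : nrW inv Λ l = nrW inv Λ l') : l = l' := by
  have h2 : prW Λ l * nrW inv Λ l' = 1 := by rw [← h, prW_mul_nrW hS]
  rcases mid hS l l' with ⟨r, hr, he⟩ | ⟨r, hr, he⟩ | he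
  · rw [he] at h2
    obtain rfl := prW_eq_one hS h2
    rw [List.append_nil] at hr
    exact hr
  · rw [he] at h2
    obtain rfl := nrW_eq_one hS h2
    rw [List.append_nil] at hr
    exact hr.symm
  · rw [he] at h2
    exact absurd h2 hS.zero_ne_one

include hS in
lemma nr_pr_eq_one {a b : List ↥Λ} (h1 : nrW inv Λ a * prW Λ b = 1) :
    a = [] ∧ b = [] := by
  have hab : prW Λ b = prW Λ a := by
    have h2 := congrArg (fun z => prW Λ a * z) h1
    simpa [← mul_assoc, prW_mul_nrW hS] using h2
  obtain rfl : b = a := prW_injective hS hab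
  cases b with
  | nil => exact ⟨rfl, rfl⟩
  | cons α t =>
    exfalso
    obtain ⟨p, q, hpq⟩ := exists_pair hS
    obtain ⟨σ, hσ⟩ : ∃ σ : ↥Λ, σ ≠ α := by
      by_cases hap : α = p
      · exact ⟨q, fun hqa => hpq (by rw [← hap, ← hqa])⟩
      · exact ⟨p, fun hpa => hap hpa.symm⟩
    have h2 := congrArg (fun z => z * inv (σ : S)) h1
    simp only [one_mul] at h2
    rw [mul_assoc, prW_cons, mul_assoc, zero' hS (Ne.symm hσ), mul_zero, mul_zero] at h2
    have h3 := unit' hS σ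
    rw [← h2, mul_zero] at h3
    exact hS.zero_ne_one h3

include hS in
lemma encW_inj {g h g' h' : List ↥Λ}
    (E : encW inv Λ g h = encW inv Λ g' h') : g = g' ∧ h = h' := by
  have step1 : prW Λ h' = prW Λ g' * nrW inv Λ g * prW Λ h := by
    have h2 := congrArg (fun z => prW Λ g' * z) E
    simp only [encW] at h2
    rw [← mul_assoc, ← mul_assoc, prW_mul_nrW hS, one_mul] at h2
    exact h2.symm
  rcases mid hS g' g with ⟨r, hr, he⟩ | ⟨r, hr, he⟩ | he
  · -- g' = g ++ r
    have hh : prW Λ h' = prW Λ (h ++ r) := by rw [step1, he, ← prW_append]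
    obtain rfl : h' = h ++ r := prW_injective hS hh
    subst hr
    have htrans : nrW inv Λ (g ++ r) * prW Λ (h ++ r)
        = nrW inv Λ g * ((nrW inv Λ r * prW Λ r) * prW Λ h) := by
      rw [nrW_append, prW_append, mul_assoc, mul_assoc]
    rw [encW, encW, htrans] at E
    have E3 := nr_cancel_left hS E
    have E4' : (1 : S) * prW Λ h = (nrW inv Λ r * prW Λ r) * prW Λ h := by
      rw [one_mul]; exact E3
    have E4 : (1 : S) = nrW inv Λ r * prW Λ r := pr_cancel_right hS E4'
    obtain ⟨rfl, -⟩ := nr_pr_eq_one hS E4.symm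
    exact ⟨by simp, by simp⟩
  · -- g = g' ++ r
    have hh : prW Λ (h' ++ r) = prW Λ h := by
      rw [prW_append, step1, he, ← mul_assoc, prW_mul_nrW hS, one_mul]
    obtain rfl : h' ++ r = h := prW_injective hS hh
    subst hr
    have htrans : nrW inv Λ (g' ++ r) * prW Λ (h' ++ r)
        = nrW inv Λ g' * ((nrW inv Λ r * prW Λ r) * prW Λ h') := by
      rw [nrW_append, prW_append, mul_assoc, mul_assoc]
    rw [encW, encW, htrans] at E
    have E3 := nr_cancel_left hS E
    have E4' : (nrW inv Λ r * prW Λ r) * prW Λ h' = (1 : S) * prW Λ h' := by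
      rw [one_mul]; exact E3
    have E4 : nrW inv Λ r * prW Λ r = (1 : S) := pr_cancel_right hS E4'
    obtain ⟨rfl, -⟩ := nr_pr_eq_one hS E4
    exact ⟨by simp, by simp⟩
  · rw [he, zero_mul] at step1
    exact absurd step1 (prW_ne_zero hS h')


section Topo

variable [TopologicalSpace S] [T2Space S]
variable (hlc : ∀ a : S, Continuous (fun x : S => a * x))
variable (hrc : ∀ a : S, Continuous (fun x : S => x * a))

include hS hlc hrc in
lemma isOpen_one : IsOpen ({(1 : S)} : Set S) := by
  obtain ⟨p, q, hpq⟩ := exists_pair hS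
  have hopen : ∀ c : ↥Λ, IsOpen {s : S | (c : S) * s * inv (c : S) ≠ 0} := by
    intro c
    have hcont : Continuous (fun s : S => (c : S) * s * inv (c : S)) :=
      (hrc (inv (c : S))).comp (hlc (c : S))
    have hpre : {s : S | (c : S) * s * inv (c : S) ≠ 0}
        = (fun s : S => (c : S) * s * inv (c : S)) ⁻¹' ({0}ᶜ) := rfl
    rw [hpre]
    exact hcont.isOpen_preimage _ (isOpen_compl_iff.mpr isClosed_singleton)
  have key : ∀ (c : ↥Λ) (w z : List ↥Λ),
      (c : S) * encW inv Λ w z * inv (c : S) ≠ 0 →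
      (w = [] ∨ ∃ a t, w = a :: t ∧ a = c) ∧ (z = [] ∨ ∃ b t, z = b :: t ∧ b = c) := by
    intro c w z hne
    constructor
    · cases w with
      | nil => exact Or.inl rfl
      | cons a t =>
        by_cases hac : a = c
        · exact Or.inr ⟨a, t, rfl, hac⟩
        · exfalso
          apply hne
          simp only [encW, nrW_cons]
          rw [← mul_assoc, ← mul_assoc, zero' hS (fun hx : c = a => hac hx.symm)]
          rw [zero_mul, zero_mul, zero_mul]
    · cases z with
      | nil => exact Or.inl rfl
      | cons b t =>
        by_cases hbc : b = c
        · exact Or.inr ⟨b, t, rfl, hbc⟩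
        · exfalso
          apply hne
          simp only [encW, prW_cons]
          rw [mul_assoc, mul_assoc, mul_assoc, zero' hS hbc]
          rw [mul_zero, mul_zero, mul_zero]
  have heq : ({(1 : S)} : Set S)
      = {s : S | (p : S) * s * inv (p : S) ≠ 0} ∩ {s : S | (q : S) * s * inv (q : S) ≠ 0} := by
    apply Set.eq_of_subset_of_subset
    · intro s hs
      rw [Set.mem_singleton_iff] at hs
      subst hs
      constructor <;>
        · simp only [Set.mem_setOf_eq, mul_one]
          rw [unit' hS]
          exact fun hx => hS.zero_ne_one hx.symm
    · rintro s ⟨hp, hq⟩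
      rcases rep hS s with rfl | ⟨w, z, rfl⟩
      · exact absurd (by rw [mul_zero, zero_mul]) hp
      · obtain ⟨hw1, hz1⟩ := key p w z hp
        obtain ⟨hw2, hz2⟩ := key q w z hq
        have hw : w = [] := by
          rcases hw1 with h1 | ⟨a, t, rfl, rfl⟩
          · exact h1
          · rcases hw2 with h2 | ⟨b, t', he, rfl⟩
            · exact absurd h2 (by simp)
            · exact absurd ((List.cons_eq_cons.mp he).1) hpq
        have hz : z = [] := by
          rcases hz1 with h1 | ⟨a, t, rfl, rfl⟩
          · exact h1
          · rcases hz2 with h2 | ⟨b, t', he, rfl⟩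
            · exact absurd h2 (by simp)
            · exact absurd ((List.cons_eq_cons.mp he).1) hpq
        subst hw; subst hz
        simp [encW]
  rw [heq]
  exact (hopen p).inter (hopen q)

include hS hlc hrc in
lemma isOpen_enc (g h : List ↥Λ) : IsOpen ({encW inv Λ g h} : Set S) := by
  classical
  have hFcont : Continuous (fun s : S => prW Λ g * s * nrW inv Λ h) :=
    (hrc (nrW inv Λ h)).comp (hlc (prW Λ g))
  have hFopen : IsOpen ((fun s : S => prW Λ g * s * nrW inv Λ h) ⁻¹' {1}) :=
    hFcont.isOpen_preimage _ (isOpen_one hS hlc hrc)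
  set Fn : Set S := Set.image2 (fun i j => encW inv Λ (g.take i) (h.take j))
      (Set.Iic g.length) (Set.Iic h.length) with hFn
  have hFnfin : Fn.Finite := Set.Finite.image2 _ (Set.finite_Iic _) (Set.finite_Iic _)
  have memFin : ∀ (w z r ρ : List ↥Λ), g = w ++ r → h = z ++ ρ → encW inv Λ w z ∈ Fn := by
    intro w z r ρ hgw hzh
    have h1 : w.length ≤ g.length := by rw [hgw, List.length_append]; omega
    have h2 : z.length ≤ h.length := by rw [hzh, List.length_append]; omega
    have h3 : encW inv Λ (g.take w.length) (h.take z.length) = encW inv Λ w z := by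
      rw [hgw, hzh, List.take_left, List.take_left]
    exact h3 ▸ Set.mem_image2_of_mem h1 h2
  have hsub : (fun s : S => prW Λ g * s * nrW inv Λ h) ⁻¹' {1} ⊆ Fn := by
    intro s hs
    simp only [Set.mem_preimage, Set.mem_singleton_iff] at hs
    rcases rep hS s with rfl | ⟨w, z, rfl⟩
    · rw [mul_zero, zero_mul] at hs
      exact absurd hs hS.zero_ne_one
    · rw [encW] at hs
      have hassoc : (prW Λ g * nrW inv Λ w) * (prW Λ z * nrW inv Λ h)
          = prW Λ g * (nrW inv Λ w * prW Λ z) * nrW inv Λ h := by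
        rw [mul_assoc, mul_assoc, mul_assoc]
      have hs2 : (prW Λ g * nrW inv Λ w) * (prW Λ z * nrW inv Λ h) = 1 := hassoc.trans hs
      rcases mid hS g w with ⟨r, hgw, hA⟩ | ⟨r, hgw, hA⟩ | hA
      · -- g = w ++ r
        rcases mid hS z h with ⟨ρ, hzh, hB⟩ | ⟨ρ, hzh, hB⟩ | hB
        · -- z = h ++ ρ : show ρ = [] and r = []
          rw [hA, hB, ← prW_append] at hs2
          obtain hnil := prW_eq_one hS hs2
          obtain ⟨hρ, hrr⟩ := List.append_eq_nil_iff.mp hnil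
          subst hρ
          rw [List.append_nil] at hzh
          exact memFin w z r [] hgw (by rw [hzh, List.append_nil])
        · -- h = z ++ ρ
          exact memFin w z r ρ hgw hzh
        · rw [hA, hB, mul_zero] at hs2
          exact absurd hs2 hS.zero_ne_one
      · -- w = g ++ r
        rcases mid hS z h with ⟨ρ, hzh, hB⟩ | ⟨ρ, hzh, hB⟩ | hB
        · rw [hA, hB] at hs2
          obtain ⟨hrr, hρ⟩ := nr_pr_eq_one hS hs2
          subst hrr; subst hρ
          rw [List.append_nil] at hgw
          rw [List.append_nil] at hzh
          exact memFin w z [] [] (by rw [hgw, List.append_nil]) (by rw [hzh, List.append_nil])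
        · rw [hA, hB, ← nrW_append] at hs2
          obtain hnil := nrW_eq_one hS hs2
          obtain ⟨hrr, hρ⟩ := List.append_eq_nil_iff.mp hnil
          subst hrr
          rw [List.append_nil] at hgw
          exact memFin w z [] ρ (by rw [hgw, List.append_nil]) hzh
        · rw [hA, hB, mul_zero] at hs2
          exact absurd hs2 hS.zero_ne_one
      · rw [hA, zero_mul] at hs2
        exact absurd hs2 hS.zero_ne_one
  have hmem : encW inv Λ g h ∈ (fun s : S => prW Λ g * s * nrW inv Λ h) ⁻¹' {1} := by
    simp only [Set.mem_preimage, Set.mem_singleton_iff, encW]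
    rw [← mul_assoc, prW_mul_nrW hS, one_mul, prW_mul_nrW hS]
  have heq : ({encW inv Λ g h} : Set S)
      = (fun s : S => prW Λ g * s * nrW inv Λ h) ⁻¹' {1} \ (Fn \ {encW inv Λ g h}) := by
    apply Set.eq_of_subset_of_subset
    · intro s hs
      rw [Set.mem_singleton_iff] at hs
      subst hs
      exact ⟨hmem, fun hc => hc.2 rfl⟩
    · rintro s ⟨h1, h2⟩
      by_contra hne
      exact h2 ⟨hsub h1, hne⟩
  rw [heq]
  exact hFopen.sdiff ((hFnfin.subset Set.diff_subset).isClosed)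

include hS hlc hrc in
lemma not_isOpen_zero (hnd : ¬ DiscreteTopology S) : ¬ IsOpen ({(0 : S)} : Set S) := by
  intro h0
  apply hnd
  apply discreteTopology_iff_isOpen_singleton.mpr
  intro a
  rcases rep hS a with rfl | ⟨g, h, rfl⟩
  · exact h0
  · exact isOpen_enc hS hlc hrc g h

include hS hlc hrc in
lemma compact_diff_finite {K V : Set S} (hK : IsCompact K) (hV : IsOpen V)
    (h0V : (0 : S) ∈ V) : (K \ V).Finite := by
  classical
  have hKV : IsCompact (K \ V) := hK.diff hV
  have hopen : ∀ a : S, IsOpen {b : S | b = a ∧ a ≠ 0} := by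
    intro a
    by_cases ha : a = 0
    · have he : {b : S | b = a ∧ a ≠ 0} = ∅ := by ext b; simp [ha]
      rw [he]; exact isOpen_empty
    · have he : {b : S | b = a ∧ a ≠ 0} = {a} := by ext b; simp [ha]
      rw [he]
      rcases rep hS a with rfl | ⟨g, h, rfl⟩
      · exact absurd rfl ha
      · exact isOpen_enc hS hlc hrc g h
  have hcover : K \ V ⊆ ⋃ a : S, {b : S | b = a ∧ a ≠ 0} := by
    intro b hb
    have hb0 : b ≠ 0 := fun hx => hb.2 (hx ▸ h0V)
    exact Set.mem_iUnion.mpr ⟨b, rfl, hb0⟩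
  obtain ⟨F, hF⟩ := hKV.elim_finite_subcover _ hopen hcover
  refine Set.Finite.subset (F.finite_toSet.biUnion (fun a _ => Set.finite_singleton a)) ?_
  intro b hb
  have hbm : b ∈ F ∧ ¬ b = 0 := by
    have := hF hb
    simpa using this
  exact Set.mem_biUnion hbm.1 (by simp)

include hS hlc hrc in
lemma U0_infinite (hnd : ¬ DiscreteTopology S) {U₀ : Set S} (hU : U₀ ∈ nhds 0) :
    (U₀ \ {0}).Infinite := by
  by_contra hfin
  rw [Set.not_infinite] at hfin
  have hop : IsOpen (interior U₀ \ (U₀ \ {0})) := isOpen_interior.sdiff hfin.isClosed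
  have heq : interior U₀ \ (U₀ \ {0}) = {(0 : S)} := by
    apply Set.eq_of_subset_of_subset
    · rintro x ⟨hx1, hx2⟩
      by_contra hx0
      exact hx2 ⟨interior_subset hx1, hx0⟩
    · intro x hx
      rw [Set.mem_singleton_iff] at hx
      subst hx
      exact ⟨mem_interior_iff_mem_nhds.mpr hU, fun hc => hc.2 rfl⟩
  exact not_isOpen_zero hS hlc hrc hnd (heq ▸ hop)

end Topo


omit hS in
lemma iter_enc (α : ↥Λ) (g h : List ↥Λ) (m : ℕ) :
    (fun d => inv (α : S) * d)^[m] (encW inv Λ g h)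
      = encW inv Λ (List.replicate m α ++ g) h := by
  induction m with
  | zero => simp
  | succ m ih =>
    rw [Function.iterate_succ_apply', ih, List.replicate_succ, List.cons_append,
      encW, encW, nrW_cons, mul_assoc]

include hS in
lemma orbit_rec (α : ↥Λ) : ∀ (m : ℕ) (s : S),
    prW Λ (List.replicate m α) * ((fun d => inv (α : S) * d)^[m] s) = s := by
  intro m
  induction m with
  | zero => intro s; simp
  | succ m ih =>
    intro s
    rw [Function.iterate_succ_apply, List.replicate_succ', prW_append, mul_assoc,
      ih (inv (α : S) * s)]
    show prW Λ [α] * (inv (α : S) * s) = s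
    rw [prW_cons, prW_nil, one_mul, ← mul_assoc, unit' hS, one_mul]

include hS in
lemma greenR_shape {u v : List ↥Λ} {y : S}
    (hy : y ∈ greenR (encW inv Λ u v)) : ∃ z, y = encW inv Λ u z := by
  have hiff : ∀ t : S, (∃ s, t = y * s) ↔ (∃ s, t = encW inv Λ u v * s) :=
    fun t => Set.ext_iff.mp hy t
  have hnr : ∃ s, nrW inv Λ u = y * s := by
    refine (hiff _).mpr ⟨nrW inv Λ v, ?_⟩
    rw [encW, mul_assoc, prW_mul_nrW hS, mul_one]
  obtain ⟨s₁, hs₁⟩ := hnr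
  have hy0 : y ≠ 0 := by
    intro h0; rw [h0, zero_mul] at hs₁; exact nrW_ne_zero hS u hs₁
  obtain ⟨w, z, rfl⟩ := (rep hS y).resolve_left hy0
  refine ⟨z, ?_⟩
  suffices hwu : w = u by rw [hwu]
  rcases rep hS s₁ with rfl | ⟨a, b, rfl⟩
  · rw [mul_zero] at hs₁; exact absurd hs₁ (nrW_ne_zero hS u)
  rcases mid hS z a with ⟨r, hza, he⟩ | ⟨r, hza, he⟩ | he
  · -- z = a ++ r : Nr u = enc w (b ++ r)
    have h2 : encW inv Λ u ([] : List ↥Λ) = encW inv Λ w (b ++ r) := by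
      rw [encW, prW_nil, mul_one, hs₁, encW, encW, encW, mul_assoc,
        ← mul_assoc (prW Λ z), he, ← prW_append]
    exact ((encW_inj hS h2).1).symm
  · -- a = z ++ r : u = w ++ r
    have h2 : encW inv Λ u ([] : List ↥Λ) = encW inv Λ (w ++ r) b := by
      rw [encW, prW_nil, mul_one, hs₁, encW, encW, encW, mul_assoc,
        ← mul_assoc (prW Λ z), he, ← mul_assoc, ← nrW_append]
    obtain ⟨h3, -⟩ := encW_inj hS h2
    have hnw : ∃ s, nrW inv Λ w = encW inv Λ u v * s := by
      refine (hiff _).mp ⟨nrW inv Λ z, ?_⟩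
      rw [encW, mul_assoc, prW_mul_nrW hS, mul_one]
    obtain ⟨s₂, hs₂⟩ := hnw
    rcases rep hS s₂ with rfl | ⟨c, d, rfl⟩
    · rw [mul_zero] at hs₂; exact absurd hs₂ (nrW_ne_zero hS w)
    rcases mid hS v c with ⟨ρ, hvc, he2⟩ | ⟨ρ, hvc, he2⟩ | he2
    · have h4 : encW inv Λ w ([] : List ↥Λ) = encW inv Λ u (d ++ ρ) := by
        rw [encW, prW_nil, mul_one, hs₂, encW, encW, encW, mul_assoc,
          ← mul_assoc (prW Λ v), he2, ← prW_append]
      exact (encW_inj hS h4).1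
    · have h4 : encW inv Λ w ([] : List ↥Λ) = encW inv Λ (u ++ ρ) d := by
        rw [encW, prW_nil, mul_one, hs₂, encW, encW, encW, mul_assoc,
          ← mul_assoc (prW Λ v), he2, ← mul_assoc, ← nrW_append]
      obtain ⟨h5, -⟩ := encW_inj hS h4
      have h6 : u = (u ++ ρ) ++ r := by rw [← h5]; exact h3
      have hlen := congrArg List.length h6
      simp only [List.length_append] at hlen
      have hρ : ρ = [] := List.length_eq_zero_iff.mp (by omega)
      have hrr : r = [] := List.length_eq_zero_iff.mp (by omega)
      subst hρ
      rw [List.append_nil] at h5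
      exact h5
    · have hcontra : nrW inv Λ w = 0 := by
        rw [hs₂, encW, encW, mul_assoc, ← mul_assoc (prW Λ v), he2, zero_mul, mul_zero]
      exact absurd hcontra (nrW_ne_zero hS w)
  · have hcontra : nrW inv Λ u = 0 := by
      rw [hs₁, encW, encW, mul_assoc, ← mul_assoc (prW Λ z), he, zero_mul, mul_zero]
    exact absurd hcontra (nrW_ne_zero hS u)

end Poly13


/-- For an arbitrary generating set, a compact neighborhood of zero in a
non-discrete locally compact semitopological polycyclic monoid contains all but
finitely many points of every Green R-class. -/
theorem stmt13 {S : Type*} [MonoidWithZero S] (inv : S → S) (Λ : Set S)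
    (hS : IsPolycyclicMonoid S inv Λ)
    [TopologicalSpace S] [T2Space S] [LocallyCompactSpace S]
    (hl : ∀ a : S, Continuous (fun x : S => a * x))
    (hr : ∀ a : S, Continuous (fun x : S => x * a))
    (hnd : ¬ DiscreteTopology S)
    (U₀ : Set S) (hU : U₀ ∈ nhds (0 : S)) (hUc : IsCompact U₀) :
    ∀ x : S, (greenR x \ U₀).Finite := by

  classical
  intro x
  have h0int : (0 : S) ∈ interior U₀ := mem_interior_iff_mem_nhds.mpr hU
  have hfinK : ∀ {K : Set S}, IsCompact K → (K \ U₀).Finite := by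
    intro K hK
    refine Set.Finite.subset
      (Poly13.compact_diff_finite hS hl hr hK isOpen_interior h0int) ?_
    exact Set.diff_subset_diff_right interior_subset
  rcases Poly13.rep hS x with rfl | ⟨u, v, rfl⟩
  · refine Set.Finite.subset (Set.finite_singleton (0 : S)) ?_
    intro y hy
    obtain ⟨s, hs⟩ : ∃ s : S, y = 0 * s := (Set.ext_iff.mp hy.1 y).mp ⟨1, (mul_one y).symm⟩
    rw [zero_mul] at hs
    simp [hs]
  · obtain ⟨α, β, hαβ⟩ := Poly13.exists_pair hS
    set Φ : S → S := fun d => inv (α : S) * d with hΦ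
    have hDinf : (U₀ \ {0}).Infinite := Poly13.U0_infinite hS hl hr hnd hU
    set Bad : Set S := {d | d ∈ U₀ ∧ d ≠ 0 ∧ Φ d ∉ U₀} with hBad
    have hBadfin : Bad.Finite := by
      have himg : Φ '' Bad ⊆ (Φ '' U₀) \ U₀ := by
        rintro _ ⟨d, hd, rfl⟩
        exact ⟨Set.mem_image_of_mem _ hd.1, hd.2.2⟩
      have hinj : Set.InjOn Φ Bad := by
        intro d1 _ d2 _ he
        have h2 := congrArg (fun z => (α : S) * z) he
        simpa [hΦ, ← mul_assoc, Poly13.unit' hS α] using h2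
      exact Set.Finite.of_finite_image
        (Set.Finite.subset (hfinK (hUc.image (hl (inv (α : S))))) himg) hinj
    -- a full orbit staying in U₀
    have horb : ∃ d₀ ∈ U₀ \ {(0 : S)}, ∀ k : ℕ, Φ^[k] d₀ ∈ U₀ := by
      by_contra hcon
      push_neg at hcon
      apply hDinf
      set glen : S → ℕ := fun b =>
        if hb : ∃ gh : List ↥Λ × List ↥Λ, b = Poly13.encW inv Λ gh.1 gh.2
        then hb.choose.1.length else 0 with hglen
      have hglen_spec : ∀ g h : List ↥Λ, glen (Poly13.encW inv Λ g h) = g.length := by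
        intro g h
        have hb : ∃ gh : List ↥Λ × List ↥Λ,
            Poly13.encW inv Λ g h = Poly13.encW inv Λ gh.1 gh.2 := ⟨(g, h), rfl⟩
        simp only [hglen]
        rw [dif_pos hb]
        obtain ⟨h1, h2⟩ := Poly13.encW_inj hS hb.choose_spec
        rw [← h1]
      refine Set.Finite.subset
        (hBadfin.biUnion (fun b _ => Set.Finite.image
          (fun j => Poly13.prW Λ (List.replicate j α) * b) (Set.finite_Iic (glen b)))) ?_
      intro d hd
      obtain ⟨g, h, hdgh⟩ := (Poly13.rep hS d).resolve_left hd.2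
      have hk : ∃ k, Φ^[k] d ∉ U₀ := hcon d hd
      set k := Nat.find hk with hkdef
      have hkspec : Φ^[k] d ∉ U₀ := Nat.find_spec hk
      have hk0 : k ≠ 0 := by
        intro h0; rw [h0] at hkspec; exact hkspec hd.1
      set j := k - 1 with hj
      have hjk : j + 1 = k := by omega
      have hbU : Φ^[j] d ∈ U₀ := by
        by_contra hc
        exact Nat.find_min hk (show j < k by omega) hc
      have hbenc : Φ^[j] d = Poly13.encW inv Λ (List.replicate j α ++ g) h := by
        rw [hdgh, hΦ]
        exact Poly13.iter_enc α g h j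
      have hbBad : Φ^[j] d ∈ Bad := by
        refine ⟨hbU, ?_, ?_⟩
        · rw [hbenc]; exact Poly13.encW_ne_zero hS _ _
        · have h2 : Φ (Φ^[j] d) = Φ^[k] d := by
            rw [← hjk]
            exact (Function.iterate_succ_apply' Φ j d).symm
          rw [h2]; exact hkspec
      refine Set.mem_biUnion hbBad ?_
      refine ⟨j, ?_, ?_⟩
      · rw [hbenc, hglen_spec (List.replicate j α ++ g) h]
        simp only [Set.mem_Iic, List.length_append, List.length_replicate]
        omega
      · exact Poly13.orbit_rec hS α j d
    obtain ⟨d₀, hd₀U, hd₀orb⟩ := horb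
    obtain ⟨g₀, h₀, hd₀⟩ := (Poly13.rep hS d₀).resolve_left hd₀U.2
    set Gc : ℕ → List ↥Λ := fun k => List.replicate k α ++ g₀ with hGL
    have hGLsucc : ∀ k, Gc (k + 1) = α :: Gc k := by
      intro k; simp only [hGL, List.replicate_succ, List.cons_append]
    have hGLlen : ∀ k, (Gc k).length = k + g₀.length := by
      intro k; simp [hGL]
    have hGLinj : ∀ k k', Gc k = Gc k' → k = k' := by
      intro k k' he
      have h2 := congrArg List.length he
      rw [hGLlen, hGLlen] at h2
      omega
    have hdk : ∀ k, Poly13.encW inv Λ (Gc k) h₀ ∈ U₀ := by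
      intro k
      have h2 := hd₀orb k
      rw [hd₀, hΦ, Poly13.iter_enc] at h2
      exact h2
    set T : ℕ → Set (List ↥Λ) := fun k => {z | Poly13.encW inv Λ (Gc k) z ∈ U₀} with hT
    have hencsucc : ∀ (k : ℕ) (z : List ↥Λ),
        inv (α : S) * Poly13.encW inv Λ (Gc k) z = Poly13.encW inv Λ (Gc (k + 1)) z := by
      intro k z
      rw [hGLsucc k, Poly13.encW, Poly13.encW, Poly13.nrW_cons, mul_assoc]
    have hencpred : ∀ (k : ℕ) (z : List ↥Λ),
        (α : S) * Poly13.encW inv Λ (Gc (k + 1)) z = Poly13.encW inv Λ (Gc k) z := by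
      intro k z
      rw [hGLsucc k, Poly13.encW, Poly13.encW, Poly13.nrW_cons, ← mul_assoc, ← mul_assoc,
        Poly13.unit' hS, one_mul]
    have hS1 : {k : ℕ | ¬ T k ⊆ T (k + 1)}.Finite := by
      set F1 : ℕ → S := fun k =>
        if hk : ∃ z, z ∈ T k ∧ z ∉ T (k + 1)
        then Poly13.encW inv Λ (Gc (k + 1)) hk.choose else 0 with hF1
      have himg : F1 '' {k | ¬ T k ⊆ T (k + 1)}
          ⊆ ((fun s : S => inv (α : S) * s) '' U₀) \ U₀ := by
        rintro _ ⟨k, hk, rfl⟩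
        have hex : ∃ z, z ∈ T k ∧ z ∉ T (k + 1) := by
          obtain ⟨z, hz1, hz2⟩ := Set.not_subset.mp hk
          exact ⟨z, hz1, hz2⟩
        obtain ⟨hz1, hz2⟩ := hex.choose_spec
        simp only [hF1]
        rw [dif_pos hex]
        exact ⟨⟨Poly13.encW inv Λ (Gc k) hex.choose, hz1, hencsucc k hex.choose⟩, hz2⟩
      have hinj : Set.InjOn F1 {k | ¬ T k ⊆ T (k + 1)} := by
        intro k1 h1 k2 h2 he
        have hex1 : ∃ z, z ∈ T k1 ∧ z ∉ T (k1 + 1) := by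
          obtain ⟨z, hz1, hz2⟩ := Set.not_subset.mp h1; exact ⟨z, hz1, hz2⟩
        have hex2 : ∃ z, z ∈ T k2 ∧ z ∉ T (k2 + 1) := by
          obtain ⟨z, hz1, hz2⟩ := Set.not_subset.mp h2; exact ⟨z, hz1, hz2⟩
        simp only [hF1] at he
        rw [dif_pos hex1, dif_pos hex2] at he
        have h3 := hGLinj _ _ (Poly13.encW_inj hS he).1
        omega
      exact Set.Finite.of_finite_image
        (Set.Finite.subset (hfinK (hUc.image (hl (inv (α : S))))) himg) hinj
    have hS2 : {k : ℕ | ¬ T (k + 1) ⊆ T k}.Finite := by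
      set F2 : ℕ → S := fun k =>
        if hk : ∃ z, z ∈ T (k + 1) ∧ z ∉ T k
        then Poly13.encW inv Λ (Gc k) hk.choose else 0 with hF2
      have himg : F2 '' {k | ¬ T (k + 1) ⊆ T k}
          ⊆ ((fun s : S => (α : S) * s) '' U₀) \ U₀ := by
        rintro _ ⟨k, hk, rfl⟩
        have hex : ∃ z, z ∈ T (k + 1) ∧ z ∉ T k := by
          obtain ⟨z, hz1, hz2⟩ := Set.not_subset.mp hk
          exact ⟨z, hz1, hz2⟩
        obtain ⟨hz1, hz2⟩ := hex.choose_spec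
        simp only [hF2]
        rw [dif_pos hex]
        exact ⟨⟨Poly13.encW inv Λ (Gc (k + 1)) hex.choose, hz1, hencpred k hex.choose⟩, hz2⟩
      have hinj : Set.InjOn F2 {k | ¬ T (k + 1) ⊆ T k} := by
        intro k1 h1 k2 h2 he
        have hex1 : ∃ z, z ∈ T (k1 + 1) ∧ z ∉ T k1 := by
          obtain ⟨z, hz1, hz2⟩ := Set.not_subset.mp h1; exact ⟨z, hz1, hz2⟩
        have hex2 : ∃ z, z ∈ T (k2 + 1) ∧ z ∉ T k2 := by
          obtain ⟨z, hz1, hz2⟩ := Set.not_subset.mp h2; exact ⟨z, hz1, hz2⟩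
        simp only [hF2] at he
        rw [dif_pos hex1, dif_pos hex2] at he
        exact hGLinj _ _ (Poly13.encW_inj hS he).1
      exact Set.Finite.of_finite_image
        (Set.Finite.subset (hfinK (hUc.image (hl (α : S)))) himg) hinj
    have hQ : ∀ q : List ↥Λ, {k : ℕ | Poly13.encW inv Λ (Gc k) q ∉ U₀}.Finite := by
      intro q
      set aq : S := Poly13.nrW inv Λ h₀ * Poly13.prW Λ q with haq
      have hmulq : ∀ k, Poly13.encW inv Λ (Gc k) h₀ * aq = Poly13.encW inv Λ (Gc k) q := by
        intro k
        rw [haq, Poly13.encW, Poly13.encW, mul_assoc, ← mul_assoc (Poly13.prW Λ h₀),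
          Poly13.prW_mul_nrW hS, one_mul]
      have himg : (fun k => Poly13.encW inv Λ (Gc k) q) '' {k | Poly13.encW inv Λ (Gc k) q ∉ U₀}
          ⊆ ((fun s : S => s * aq) '' U₀) \ U₀ := by
        rintro _ ⟨k, hk, rfl⟩
        exact ⟨⟨Poly13.encW inv Λ (Gc k) h₀, hdk k, hmulq k⟩, hk⟩
      have hinj : Set.InjOn (fun k => Poly13.encW inv Λ (Gc k) q)
          {k | Poly13.encW inv Λ (Gc k) q ∉ U₀} := by
        intro k1 _ k2 _ he
        exact hGLinj _ _ (Poly13.encW_inj hS he).1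
      exact Set.Finite.of_finite_image
        (Set.Finite.subset (hfinK (hUc.image (hr aq))) himg) hinj
    obtain ⟨N1, hN1⟩ := (hS1.union hS2).bddAbove
    set N : ℕ := N1 + 1 with hN
    have hTeq : ∀ k, N ≤ k → T k = T N := by
      intro k hk
      refine Nat.le_induction rfl ?_ k hk
      intro m hm ih
      have h12 : T m ⊆ T (m + 1) := by
        by_contra hc
        have := hN1 (Set.mem_union_left _ (show m ∈ {k : ℕ | ¬ T k ⊆ T (k + 1)} from hc))
        omega
      have h21 : T (m + 1) ⊆ T m := by
        by_contra hc
        have := hN1 (Set.mem_union_right _ (show m ∈ {k : ℕ | ¬ T (k + 1) ⊆ T k} from hc))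
        omega
      rw [Set.Subset.antisymm h21 h12, ih]
    have hfull : ∀ q : List ↥Λ, Poly13.encW inv Λ (Gc N) q ∈ U₀ := by
      intro q
      obtain ⟨M, hM⟩ := (hQ q).bddAbove
      have hknot : Poly13.encW inv Λ (Gc (max N (M + 1))) q ∈ U₀ := by
        by_contra hc
        have := hM (show max N (M + 1) ∈ {k | Poly13.encW inv Λ (Gc k) q ∉ U₀} from hc)
        have := le_max_right N (M + 1)
        omega
      have hq2 : q ∈ T (max N (M + 1)) := hknot
      rw [hTeq _ (le_max_left _ _)] at hq2
      exact hq2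
    set ab : S := Poly13.nrW inv Λ u * Poly13.prW Λ (Gc N) with hab2
    have hmulb : ∀ z : List ↥Λ,
        ab * Poly13.encW inv Λ (Gc N) z = Poly13.encW inv Λ u z := by
      intro z
      rw [hab2, Poly13.encW, Poly13.encW, mul_assoc, ← mul_assoc (Poly13.prW Λ (Gc N)),
        Poly13.prW_mul_nrW hS, one_mul]
    have hZfin : {z : List ↥Λ | Poly13.encW inv Λ u z ∉ U₀}.Finite := by
      have himg : (fun z => Poly13.encW inv Λ u z) '' {z | Poly13.encW inv Λ u z ∉ U₀}
          ⊆ ((fun s : S => ab * s) '' U₀) \ U₀ := by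
        rintro _ ⟨z, hz, rfl⟩
        exact ⟨⟨Poly13.encW inv Λ (Gc N) z, hfull z, hmulb z⟩, hz⟩
      have hinj : Set.InjOn (fun z => Poly13.encW inv Λ u z)
          {z | Poly13.encW inv Λ u z ∉ U₀} := by
        intro z1 _ z2 _ he
        exact (Poly13.encW_inj hS he).2
      exact Set.Finite.of_finite_image
        (Set.Finite.subset (hfinK (hUc.image (hl ab))) himg) hinj
    refine Set.Finite.subset (hZfin.image (fun z => Poly13.encW inv Λ u z)) ?_
    intro y hy
    obtain ⟨z, rfl⟩ := Poly13.greenR_shape hS hy.1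
    exact ⟨z, hy.2, rfl⟩
end

section
/- Let S be a non-discrete locally compact semitopological polycyclic monoid with generating set Λ (of arbitrary cardinality), and let U₀ be a compact neighborhood of the zero 0 in S. Then the complement S∖U₀ is finite, and hence S is compact. -/
set_option linter.unusedSectionVars false
set_option linter.unusedVariables false

section PolyAux

variable {S : Type*} [MonoidWithZero S]

/-- Product of a word of generators, `MW (c :: l) = MW l * c`. -/
def MW : List S → S
  | [] => 1
  | c :: l => MW l * c

/-- Product of inverses of generators, `NW inv (c :: l) = inv c * NW inv l`. -/
def NW (inv : S → S) : List S → S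
  | [] => 1
  | c :: l => inv c * NW inv l

variable (inv : S → S)

/-- Normal form element `NW p * MW r`. -/
def EL (p r : List S) : S := NW inv p * MW r

@[simp] lemma MW_nil : (MW ([] : List S)) = 1 := rfl
@[simp] lemma MW_cons (c : S) (l : List S) : MW (c :: l) = MW l * c := rfl
@[simp] lemma NW_nil : NW inv ([] : List S) = 1 := rfl
@[simp] lemma NW_cons (c : S) (l : List S) : NW inv (c :: l) = inv c * NW inv l := rfl

variable {inv}

lemma MW_append (u v : List S) : MW (u ++ v) = MW v * MW u := by
  induction u with
  | nil => simp
  | cons c t ih => simp [ih, mul_assoc]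

lemma NW_append (u v : List S) : NW inv (u ++ v) = NW inv u * NW inv v := by
  induction u with
  | nil => simp
  | cons c t ih => simp [ih, mul_assoc]

variable {Λ : Set S} (hS : IsPolycyclicMonoid S inv Λ)
include hS

lemma MW_mul_NW {w : List S} (hw : ∀ x ∈ w, x ∈ Λ) : MW w * NW inv w = 1 := by
  induction w with
  | nil => simp
  | cons c t ih =>
    have hc : c ∈ Λ := hw c (by simp)
    have ht : ∀ x ∈ t, x ∈ Λ := fun x hx => hw x (by simp [hx])
    calc MW (c :: t) * NW inv (c :: t) = MW t * ((c * inv c) * NW inv t) := by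
          rw [MW_cons, NW_cons, mul_assoc, ← mul_assoc c]
      _ = MW t * NW inv t := by rw [hS.gen_unit c hc, one_mul]
      _ = 1 := ih ht

lemma MW_NW_cancel {w : List S} (hw : ∀ x ∈ w, x ∈ Λ) (x : S) :
    MW w * (NW inv w * x) = x := by
  rw [← mul_assoc, MW_mul_NW hS hw, one_mul]

lemma cancel_MW_NW {w : List S} (hw : ∀ x ∈ w, x ∈ Λ) (x : S) :
    x * MW w * NW inv w = x := by
  rw [mul_assoc, MW_mul_NW hS hw, mul_one]

lemma cancel : ∀ (r p : List S), (∀ x ∈ r, x ∈ Λ) → (∀ x ∈ p, x ∈ Λ) →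
    MW r * NW inv p = 0 ∨
    (∃ s, r = p ++ s ∧ MW r * NW inv p = MW s) ∨
    (∃ s, p = r ++ s ∧ MW r * NW inv p = NW inv s) := by
  intro r
  induction r with
  | nil =>
    intro p _ _
    right; right; exact ⟨p, rfl, by simp⟩
  | cons c t ih =>
    intro p hr hp
    have hc : c ∈ Λ := hr c (by simp)
    have ht : ∀ x ∈ t, x ∈ Λ := fun x hx => hr x (by simp [hx])
    match p with
    | [] => right; left; exact ⟨c :: t, rfl, by simp⟩
    | c' :: t' =>
      have hc' : c' ∈ Λ := hp c' (by simp)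
      have ht' : ∀ x ∈ t', x ∈ Λ := fun x hx => hp x (by simp [hx])
      have prodeq : MW (c :: t) * NW inv (c' :: t') = MW t * ((c * inv c') * NW inv t') := by
        rw [MW_cons, NW_cons, mul_assoc, ← mul_assoc c]
      by_cases hcc : c = c'
      · subst hcc
        have prodeq2 : MW (c :: t) * NW inv (c :: t') = MW t * NW inv t' := by
          rw [prodeq, hS.gen_unit c hc, one_mul]
        rcases ih t' ht ht' with h0 | ⟨s, hts, hv⟩ | ⟨s, hts, hv⟩
        · left; rw [prodeq2, h0]
        · right; left
          exact ⟨s, by rw [hts]; rfl, by rw [prodeq2, hv]⟩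
        · right; right
          exact ⟨s, by rw [hts]; rfl, by rw [prodeq2, hv]⟩
      · left
        rw [prodeq, hS.gen_zero c hc c' hc' hcc, zero_mul, mul_zero]

lemma nf_exists (s : S) :
    s = 0 ∨ ∃ p r : List S, (∀ x ∈ p, x ∈ Λ) ∧ (∀ x ∈ r, x ∈ Λ) ∧ s = EL inv p r := by
  have hs : s ∈ Subsemigroup.closure (Λ ∪ inv '' Λ) := by
    rw [hS.generates]; exact Subsemigroup.mem_top s
  refine Subsemigroup.closure_induction
    (p := fun x _ => x = 0 ∨ ∃ p r : List S,
      (∀ y ∈ p, y ∈ Λ) ∧ (∀ y ∈ r, y ∈ Λ) ∧ x = EL inv p r) ?_ ?_ hs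
  · rintro x (hx | ⟨y, hy, rfl⟩)
    · right
      exact ⟨[], [x], by simp, by simpa using hx, by simp [EL]⟩
    · right
      exact ⟨[y], [], by simpa using hy, by simp, by simp [EL]⟩
  · rintro x y hx hy (rfl | ⟨p, r, hp, hr, rfl⟩) hy'
    · left; rw [zero_mul]
    rcases hy' with rfl | ⟨p', r', hp', hr', rfl⟩
    · left; rw [mul_zero]
    have key : EL inv p r * EL inv p' r' = NW inv p * ((MW r * NW inv p') * MW r') := by
      rw [EL, EL, mul_assoc, ← mul_assoc (MW r)]
    rcases cancel hS r p' hr hp' with h0 | ⟨s, hrs, hv⟩ | ⟨s, hrs, hv⟩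
    · left; rw [key, h0, zero_mul, mul_zero]
    · right
      refine ⟨p, r' ++ s, hp, ?_, ?_⟩
      · intro x hx
        rcases List.mem_append.mp hx with h | h
        · exact hr' x h
        · exact hr x (hrs ▸ List.mem_append_right _ h)
      · rw [key, hv, ← MW_append, EL]
    · right
      refine ⟨p ++ s, r', ?_, hr', ?_⟩
      · intro x hx
        rcases List.mem_append.mp hx with h | h
        · exact hp x h
        · exact hp' x (hrs ▸ List.mem_append_right _ h)
      · rw [key, hv, ← mul_assoc, ← NW_append, EL]

lemma EL_ne_zero {p r : List S} (hp : ∀ x ∈ p, x ∈ Λ) (hr : ∀ x ∈ r, x ∈ Λ) :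
    EL inv p r ≠ 0 := by
  intro h
  have h1 : MW p * EL inv p r * NW inv r = 1 := by
    rw [EL, MW_NW_cancel hS hp, MW_mul_NW hS hr]
  rw [h, mul_zero, zero_mul] at h1
  exact hS.zero_ne_one h1

lemma inv_c_c_ne_one {c : S} (hc : c ∈ Λ) : inv c * c ≠ 1 := by
  intro h
  by_cases hd : ∃ d ∈ Λ, d ≠ c
  · obtain ⟨d, hdΛ, hdc⟩ := hd
    have h0 : d * inv c = 0 := hS.gen_zero d hdΛ c hc hdc
    have hd0 : d = 0 := by
      calc d = d * (inv c * c) := by rw [h, mul_one]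
        _ = (d * inv c) * c := by rw [mul_assoc]
        _ = 0 := by rw [h0, zero_mul]
    have h1 : (1 : S) = 0 := by rw [← hS.gen_unit d hdΛ, hd0, zero_mul]
    exact hS.zero_ne_one h1.symm
  · push_neg at hd
    have hcu : IsUnit c := ⟨⟨c, inv c, hS.gen_unit c hc, h⟩, rfl⟩
    set P : Subsemigroup S :=
      { carrier := {s | IsUnit s}, mul_mem' := fun ha hb => ha.mul hb } with hP
    have hle : Subsemigroup.closure (Λ ∪ inv '' Λ) ≤ P := by
      apply Subsemigroup.closure_le.mpr
      rintro x (hx | ⟨y, hy, rfl⟩)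
      · have hxc : x = c := hd x hx
        rw [hxc]; exact hcu
      · have hyc : y = c := hd y hy
        rw [hyc]
        exact ⟨⟨inv c, c, h, hS.gen_unit c hc⟩, rfl⟩
    have h0 : IsUnit (0 : S) := by
      have : (0 : S) ∈ Subsemigroup.closure (Λ ∪ inv '' Λ) := by
        rw [hS.generates]; exact Subsemigroup.mem_top 0
      exact hle this
    exact hS.zero_ne_one (isUnit_zero_iff.mp h0)

lemma MW_unit_contra {t : List S} {c : S} (hc : c ∈ Λ) (h : MW t * c = 1) : False := by
  have h3 : MW t = inv c := by
    calc MW t = MW t * (c * inv c) := by rw [hS.gen_unit c hc, mul_one]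
      _ = (MW t * c) * inv c := by rw [mul_assoc]
      _ = inv c := by rw [h, one_mul]
  have : inv c * c = 1 := by rw [← h3]; exact h
  exact inv_c_c_ne_one hS hc this

lemma MW_inj : ∀ (v v' : List S), (∀ x ∈ v, x ∈ Λ) → (∀ x ∈ v', x ∈ Λ) →
    MW v = MW v' → v = v' := by
  intro v
  induction v with
  | nil =>
    intro v' _ hv' h
    match v' with
    | [] => rfl
    | c' :: t' =>
      exfalso
      have h' : MW t' * c' = (1 : S) := h.symm
      exact MW_unit_contra hS (hv' c' (by simp)) h'
  | cons c t ih =>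
    intro v' hv hv' h
    have hc : c ∈ Λ := hv c (by simp)
    have ht : ∀ x ∈ t, x ∈ Λ := fun x hx => hv x (by simp [hx])
    match v' with
    | [] =>
      exfalso
      have h' : MW t * c = (1 : S) := h
      exact MW_unit_contra hS hc h'
    | c' :: t' =>
      have hc' : c' ∈ Λ := hv' c' (by simp)
      have ht' : ∀ x ∈ t', x ∈ Λ := fun x hx => hv' x (by simp [hx])
      have h' : MW t * c = MW t' * c' := h
      by_cases hcc : c' = c
      · subst hcc
        have hmt : MW t = MW t' := by
          calc MW t = (MW t * c') * inv c' := by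
                rw [mul_assoc, hS.gen_unit c' hc, mul_one]
            _ = (MW t' * c') * inv c' := by rw [h']
            _ = MW t' := by rw [mul_assoc, hS.gen_unit c' hc, mul_one]
        rw [ih t' ht ht' hmt]
      · exfalso
        have h0 : c * inv c' = 0 := hS.gen_zero c hc c' hc' (fun he => hcc he.symm)
        have hmt' : MW t' = 0 := by
          calc MW t' = (MW t' * c') * inv c' := by
                rw [mul_assoc, hS.gen_unit c' hc', mul_one]
            _ = (MW t * c) * inv c' := by rw [h']
            _ = MW t * (c * inv c') := by rw [mul_assoc]
            _ = 0 := by rw [h0, mul_zero]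
        have h1 := MW_mul_NW hS ht'
        rw [hmt', zero_mul] at h1
        exact hS.zero_ne_one h1

lemma NW_MW_one : ∀ (s : List S), (∀ x ∈ s, x ∈ Λ) → NW inv s * MW s = 1 → s = [] := by
  intro s
  induction s with
  | nil => intro _ _; rfl
  | cons c t ih =>
    intro hs h
    exfalso
    have hc : c ∈ Λ := hs c (by simp)
    have ht : ∀ x ∈ t, x ∈ Λ := fun x hx => hs x (by simp [hx])
    have e1 : c * (NW inv (c :: t) * MW (c :: t)) * inv c = NW inv t * MW t := by
      rw [NW_cons, MW_cons]
      calc c * ((inv c * NW inv t) * (MW t * c)) * inv c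
          = (c * (inv c * (NW inv t * (MW t * c)))) * inv c := by
            rw [mul_assoc (inv c)]
        _ = (NW inv t * (MW t * c)) * inv c := by
            rw [← mul_assoc c, hS.gen_unit c hc, one_mul]
        _ = NW inv t * ((MW t * c) * inv c) := by rw [mul_assoc]
        _ = NW inv t * MW t := by rw [mul_assoc, hS.gen_unit c hc, mul_one]
    have h2 : NW inv t * MW t = 1 := by
      rw [← e1, h, mul_one, hS.gen_unit c hc]
    have htnil := ih ht h2
    subst htnil
    simp only [NW_cons, MW_cons, NW_nil, MW_nil, mul_one, one_mul] at h
    exact inv_c_c_ne_one hS hc h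

lemma EL_inj {p r p' r' : List S} (hp : ∀ x ∈ p, x ∈ Λ) (hr : ∀ x ∈ r, x ∈ Λ)
    (hp' : ∀ x ∈ p', x ∈ Λ) (hr' : ∀ x ∈ r', x ∈ Λ)
    (h : EL inv p r = EL inv p' r') : p = p' ∧ r = r' := by
  have step1 : MW r = MW p * NW inv p' * MW r' := by
    have h2 : MW p * EL inv p r = MW p * EL inv p' r' := by rw [h]
    rw [EL, EL, MW_NW_cancel hS hp, ← mul_assoc] at h2
    exact h2
  rcases cancel hS p p' hp hp' with h0 | ⟨s, hps, hv⟩ | ⟨s, hps, hv⟩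
  · exfalso
    rw [h0, zero_mul] at step1
    have h1 := MW_mul_NW hS hr
    rw [step1, zero_mul] at h1
    exact hS.zero_ne_one h1
  · -- p = p' ++ s
    have hs : ∀ x ∈ s, x ∈ Λ := fun x hx => hp x (hps ▸ List.mem_append_right _ hx)
    rw [hv, ← MW_append] at step1
    have hrr : r = r' ++ s := MW_inj hS r (r' ++ s) hr
      (fun x hx => by rcases List.mem_append.mp hx with h1 | h1
                      exacts [hr' x h1, hs x h1]) step1
    have e2 : MW p' * EL inv p' r' * NW inv r' = 1 := by
      rw [EL, MW_NW_cancel hS hp', MW_mul_NW hS hr']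
    have e3 : MW p' * EL inv p r * NW inv r' = NW inv s * MW s := by
      rw [EL, hps, hrr, NW_append, MW_append]
      calc MW p' * ((NW inv p' * NW inv s) * (MW s * MW r')) * NW inv r'
          = MW p' * (NW inv p' * (NW inv s * (MW s * MW r'))) * NW inv r' := by
            rw [mul_assoc (NW inv p')]
        _ = (NW inv s * (MW s * MW r')) * NW inv r' := by
            rw [MW_NW_cancel hS hp']
        _ = NW inv s * (MW s * (MW r' * NW inv r')) := by
            rw [mul_assoc, mul_assoc]
        _ = NW inv s * MW s := by rw [MW_mul_NW hS hr', mul_one]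
    have hone : NW inv s * MW s = 1 := by rw [← e3, h, e2]
    have hsnil := NW_MW_one hS s hs hone
    subst hsnil
    simp only [List.append_nil] at hps hrr
    exact ⟨hps, hrr⟩
  · -- p' = p ++ s
    have hs : ∀ x ∈ s, x ∈ Λ := fun x hx => hp' x (hps ▸ List.mem_append_right _ hx)
    rw [hv] at step1
    have step2 : MW (r ++ s) = MW r' := by
      rw [MW_append, step1, MW_NW_cancel hS hs]
    have hrr : r' = r ++ s := (MW_inj hS (r ++ s) r'
      (fun x hx => by rcases List.mem_append.mp hx with h1 | h1
                      exacts [hr x h1, hs x h1]) hr' step2).symm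
    have e2 : MW p * EL inv p r * NW inv r = 1 := by
      rw [EL, MW_NW_cancel hS hp, MW_mul_NW hS hr]
    have e3 : MW p * EL inv p' r' * NW inv r = NW inv s * MW s := by
      rw [EL, hps, hrr, NW_append, MW_append]
      calc MW p * ((NW inv p * NW inv s) * (MW s * MW r)) * NW inv r
          = MW p * (NW inv p * (NW inv s * (MW s * MW r))) * NW inv r := by
            rw [mul_assoc (NW inv p)]
        _ = (NW inv s * (MW s * MW r)) * NW inv r := by
            rw [MW_NW_cancel hS hp]
        _ = NW inv s * (MW s * (MW r * NW inv r)) := by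
            rw [mul_assoc, mul_assoc]
        _ = NW inv s * MW s := by rw [MW_mul_NW hS hr, mul_one]
    have hone : NW inv s * MW s = 1 := by rw [← e3, ← h, e2]
    have hsnil := NW_MW_one hS s hs hone
    subst hsnil
    simp only [List.append_nil] at hps hrr
    exact ⟨hps.symm, hrr.symm⟩

lemma cancel_single {c : S} (hc : c ∈ Λ) :
    ∀ (r p : List S), (∀ x ∈ r, x = c) → (∀ x ∈ p, x = c) →
    (∃ s, r = p ++ s ∧ (∀ x ∈ s, x = c) ∧ MW r * NW inv p = MW s) ∨
    (∃ s, p = r ++ s ∧ (∀ x ∈ s, x = c) ∧ MW r * NW inv p = NW inv s) := by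
  intro r
  induction r with
  | nil =>
    intro p _ hp
    right; exact ⟨p, rfl, hp, by simp⟩
  | cons a t ih =>
    intro p hr hp
    have ha : a = c := hr a (by simp)
    have ht : ∀ x ∈ t, x = c := fun x hx => hr x (by simp [hx])
    match p with
    | [] => left; exact ⟨a :: t, rfl, hr, by simp⟩
    | a' :: t' =>
      have ha' : a' = c := hp a' (by simp)
      have ht' : ∀ x ∈ t', x = c := fun x hx => hp x (by simp [hx])
      have prodeq : MW (a :: t) * NW inv (a' :: t') = MW t * NW inv t' := by
        rw [MW_cons, NW_cons, ha, ha', mul_assoc, ← mul_assoc c, hS.gen_unit c hc, one_mul]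
      rcases ih t' ht ht' with ⟨s, hts, hsl, hv⟩ | ⟨s, hts, hsl, hv⟩
      · left
        refine ⟨s, ?_, hsl, by rw [prodeq, hv]⟩
        rw [hts, ha, ha']
        rfl
      · right
        refine ⟨s, ?_, hsl, by rw [prodeq, hv]⟩
        rw [hts, ha, ha']
        rfl

lemma exists_two : ∃ a ∈ Λ, ∃ b ∈ Λ, a ≠ b := by
  by_contra hno
  push_neg at hno
  rcases Set.eq_empty_or_nonempty Λ with hΛ | ⟨c, hc⟩
  · have hcl : Subsemigroup.closure (Λ ∪ inv '' Λ) = ⊥ := by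
      rw [hΛ]; simp [Subsemigroup.closure_empty]
    have h1 : (1 : S) ∈ (⊥ : Subsemigroup S) := by
      rw [← hcl, hS.generates]; exact Subsemigroup.mem_top 1
    exact Subsemigroup.notMem_bot h1
  · have hall : ∀ x ∈ Λ, x = c := fun x hx => hno x hx c hc
    set T : Subsemigroup S :=
      { carrier := {s | ∃ p r : List S, (∀ x ∈ p, x = c) ∧ (∀ x ∈ r, x = c) ∧ s = EL inv p r}
        mul_mem' := by
          rintro x y ⟨p, r, hp, hr, rfl⟩ ⟨p', r', hp', hr', rfl⟩
          have key : EL inv p r * EL inv p' r' = NW inv p * ((MW r * NW inv p') * MW r') := by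
            rw [EL, EL, mul_assoc, ← mul_assoc (MW r)]
          rcases cancel_single hS hc r p' hr hp' with ⟨s, hrs, hsl, hv⟩ | ⟨s, hrs, hsl, hv⟩
          · refine ⟨p, r' ++ s, hp, ?_, ?_⟩
            · intro x hx
              rcases List.mem_append.mp hx with h1 | h1
              exacts [hr' x h1, hsl x h1]
            · rw [key, hv, ← MW_append, EL]
          · refine ⟨p ++ s, r', ?_, hr', ?_⟩
            · intro x hx
              rcases List.mem_append.mp hx with h1 | h1
              exacts [hp x h1, hsl x h1]
            · rw [key, hv, ← mul_assoc, ← NW_append, EL] } with hT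
    have hle : Subsemigroup.closure (Λ ∪ inv '' Λ) ≤ T := by
      apply Subsemigroup.closure_le.mpr
      rintro x (hx | ⟨y, hy, rfl⟩)
      · have hxc : x = c := hall x hx
        exact ⟨[], [x], by simp, by simp [hxc], by simp [EL]⟩
      · have hyc : y = c := hall y hy
        exact ⟨[y], [], by simp [hyc], by simp, by simp [EL]⟩
    have h0 : (0 : S) ∈ T := by
      apply hle
      rw [hS.generates]; exact Subsemigroup.mem_top 0
    obtain ⟨p, r, hp, hr, h0'⟩ := h0
    exact EL_ne_zero hS (fun x hx => (hp x hx) ▸ hc) (fun x hx => (hr x hx) ▸ hc) h0'.symm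

section Topo

variable [TopologicalSpace S] [T2Space S]

lemma c_mul_EL_cons {c : S} (hc : c ∈ Λ) (p₀ r : List S) :
    c * EL inv (c :: p₀) r = EL inv p₀ r := by
  rw [EL, EL, NW_cons, mul_assoc (inv c), ← mul_assoc c, hS.gen_unit c hc, one_mul]

lemma c_mul_EL_cons_ne {c c' : S} (hc : c ∈ Λ) (hc' : c' ∈ Λ) (hne : c ≠ c')
    (q₀ v : List S) : c * EL inv (c' :: q₀) v = 0 := by
  rw [EL, NW_cons, mul_assoc (inv c'), ← mul_assoc c, hS.gen_zero c hc c' hc' hne, zero_mul]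

lemma c_mul_EL_nil (c : S) (v : List S) :
    c * EL inv [] v = EL inv [] (v ++ [c]) := by
  simp [EL, MW_append, mul_assoc]

lemma EL_nil_mul_inv {c : S} (hc : c ∈ Λ) (r₀ : List S) :
    EL inv [] (c :: r₀) * inv c = EL inv [] r₀ := by
  simp only [EL, NW_nil, one_mul, MW_cons]
  rw [mul_assoc, hS.gen_unit c hc, mul_one]

lemma EL_mul_inv_cons {q : List S} {c c' : S} (hc' : c' ∈ Λ) (v₀ : List S) :
    EL inv q (c' :: v₀) * inv c = NW inv q * (MW v₀ * (c' * inv c)) := by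
  rw [EL, MW_cons, mul_assoc, mul_assoc]

lemma isolated_one (hlc : ∀ a : S, Continuous (fun x : S => a * x))
    (hrc : ∀ a : S, Continuous (fun x : S => x * a)) :
    IsOpen ({(1 : S)} : Set S) := by
  obtain ⟨a, ha, b, hb, hab⟩ := exists_two hS
  set Ha : S → S := fun x => (a * x) * inv a with hHa
  set Hb : S → S := fun x => (b * x) * inv b with hHb
  have hcHa : Continuous Ha := (hrc (inv a)).comp (hlc a)
  have hcHb : Continuous Hb := (hrc (inv b)).comp (hlc b)
  set V : Set S := {(0 : S)}ᶜ ∩ (Ha ⁻¹' {(0 : S)}ᶜ ∩ Hb ⁻¹' {(0 : S)}ᶜ) with hV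
  have hVopen : IsOpen V :=
    isOpen_compl_singleton.inter
      ((isOpen_compl_singleton.preimage hcHa).inter (isOpen_compl_singleton.preimage hcHb))
  have hkill : ∀ y ∈ Λ, ∀ x : S, y * x = 0 → (y * x) * inv y = 0 := by
    intro y _ x hx; rw [hx, zero_mul]
  have hsub : V ⊆ {(1 : S)} := by
    rintro x ⟨hx0, hxa, hxb⟩
    simp only [Set.mem_compl_iff, Set.mem_singleton_iff, Set.mem_preimage] at hx0 hxa hxb
    rcases nf_exists hS x with rfl | ⟨p, r, hp, hrl, rfl⟩
    · exact absurd rfl hx0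
    match p, hp with
    | c :: p₀, hp =>
      exfalso
      have hc : c ∈ Λ := hp c (by simp)
      by_cases hca : a = c
      · apply hxb
        have hbc : b ≠ c := fun h => hab (hca.trans h.symm)
        have h0 : b * EL inv (c :: p₀) r = 0 := c_mul_EL_cons_ne hS hb hc hbc p₀ r
        show (b * EL inv (c :: p₀) r) * inv b = 0
        rw [h0, zero_mul]
      · apply hxa
        have h0 : a * EL inv (c :: p₀) r = 0 := c_mul_EL_cons_ne hS ha hc hca p₀ r
        show (a * EL inv (c :: p₀) r) * inv a = 0
        rw [h0, zero_mul]
    | [], _ =>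
      match r, hrl with
      | c :: r₀, hrl =>
        exfalso
        have hc : c ∈ Λ := hrl c (by simp)
        have key : ∀ y ∈ Λ, y ≠ c → (y * EL inv [] (c :: r₀)) * inv y = 0 := by
          intro y hy hyc
          have h1 : EL inv [] (c :: r₀) * inv y = 0 := by
            simp only [EL, NW_nil, one_mul, MW_cons]
            rw [mul_assoc, hS.gen_zero c hc y hy (fun h => hyc h.symm), mul_zero]
          rw [mul_assoc, h1, mul_zero]
        by_cases hca : a = c
        · apply hxb
          have hbc : b ≠ c := fun h => hab (hca.trans h.symm)
          exact key b hb hbc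
        · exact hxa (key a ha hca)
      | [], _ =>
        show EL inv [] [] = 1
        simp [EL]
  have hmem : (1 : S) ∈ V := by
    refine ⟨?_, ?_, ?_⟩
    · simp only [Set.mem_compl_iff, Set.mem_singleton_iff]
      exact fun h => hS.zero_ne_one h.symm
    · simp only [Set.mem_preimage, Set.mem_compl_iff, Set.mem_singleton_iff, hHa]
      rw [mul_one, hS.gen_unit a ha]
      exact fun h => hS.zero_ne_one h.symm
    · simp only [Set.mem_preimage, Set.mem_compl_iff, Set.mem_singleton_iff, hHb]
      rw [mul_one, hS.gen_unit b hb]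
      exact fun h => hS.zero_ne_one h.symm
  have heq : ({(1 : S)} : Set S) = V := by
    apply subset_antisymm
    · intro x hx
      rw [Set.mem_singleton_iff] at hx
      rw [hx]; exact hmem
    · exact hsub
  rw [heq]; exact hVopen

lemma isolated_nf (hlc : ∀ a : S, Continuous (fun x : S => a * x))
    (hrc : ∀ a : S, Continuous (fun x : S => x * a)) :
    ∀ (p r : List S), (∀ x ∈ p, x ∈ Λ) → (∀ x ∈ r, x ∈ Λ) →
    IsOpen ({EL inv p r} : Set S) := by
  intro p
  induction p with
  | nil =>
    intro r
    induction r with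
    | nil =>
      intro _ _
      have h1 : EL inv ([] : List S) [] = 1 := by simp [EL]
      rw [h1]
      exact isolated_one hS hlc hrc
    | cons c r₀ ihr =>
      intro _ hrl
      have hc : c ∈ Λ := hrl c (by simp)
      have hr₀ : ∀ x ∈ r₀, x ∈ Λ := fun x hx => hrl x (by simp [hx])
      have ihr' := ihr (by simp) hr₀
      set t : S := EL inv [] (c :: r₀) with htdef
      set s : S := EL inv [] r₀ with hsdef
      have heq : ({t} : Set S) = (fun x : S => x * inv c) ⁻¹' {s} := by
        apply subset_antisymm
        · intro x hx
          rw [Set.mem_singleton_iff] at hx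
          subst hx
          simp only [Set.mem_preimage, Set.mem_singleton_iff]
          exact EL_nil_mul_inv hS hc r₀
        · intro x hx
          simp only [Set.mem_preimage, Set.mem_singleton_iff] at hx
          rw [Set.mem_singleton_iff]
          have hx0 : x ≠ 0 := by
            intro h
            rw [h, zero_mul] at hx
            exact EL_ne_zero hS (by simp) hr₀ hx.symm
          rcases nf_exists hS x with rfl | ⟨q, v, hq, hv, rfl⟩
          · exact absurd rfl hx0
          match v, hv with
          | c' :: v₀, hv =>
            have hc' : c' ∈ Λ := hv c' (by simp)
            have hv₀ : ∀ x ∈ v₀, x ∈ Λ := fun x hx => hv x (by simp [hx])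
            by_cases hcc : c' = c
            · subst hcc
              rw [EL_mul_inv_cons hS hc' v₀, hS.gen_unit c' hc', mul_one] at hx
              have := EL_inj hS hq hv₀ (by simp) hr₀ hx
              rw [this.1, this.2]
            · exfalso
              rw [EL_mul_inv_cons hS hc' v₀,
                hS.gen_zero c' hc' c hc hcc, mul_zero, mul_zero] at hx
              exact EL_ne_zero hS (by simp) hr₀ hx.symm
          | [], _ =>
            exfalso
            have hx' : EL inv (q ++ [c]) [] = s := by
              rw [← hx, EL, EL, NW_append]
              simp [mul_assoc]
            have := EL_inj hS (by
              intro x hxm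
              rcases List.mem_append.mp hxm with h1 | h1
              · exact hq x h1
              · simp at h1; rw [h1]; exact hc) (by simp) (by simp) hr₀ hx'
            have hnil := this.1
            simp at hnil
      rw [heq]
      exact ihr'.preimage (hrc (inv c))
  | cons c p₀ ihp =>
    intro r hp hrl
    have hc : c ∈ Λ := hp c (by simp)
    have hp₀ : ∀ x ∈ p₀, x ∈ Λ := fun x hx => hp x (by simp [hx])
    have ih := ihp r hp₀ hrl
    set t : S := EL inv (c :: p₀) r with htdef
    set s : S := EL inv p₀ r with hsdef
    set S1 : Set S := (fun x : S => c * x) ⁻¹' {s} with hS1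
    have hS1open : IsOpen S1 := ih.preimage (hlc c)
    have htS1 : t ∈ S1 := by
      simp only [hS1, Set.mem_preimage, Set.mem_singleton_iff]
      exact c_mul_EL_cons hS hc p₀ r
    have claim1 : ∀ x : S, x ∈ S1 → x = t ∨
        ∃ w : List S, (∀ y ∈ w, y ∈ Λ) ∧ p₀ = [] ∧ r = w ++ [c] ∧ x = EL inv [] w := by
      intro x hx
      simp only [hS1, Set.mem_preimage, Set.mem_singleton_iff] at hx
      have hx0 : x ≠ 0 := by
        intro h
        rw [h, mul_zero] at hx
        exact EL_ne_zero hS hp₀ hrl hx.symm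
      rcases nf_exists hS x with rfl | ⟨q, v, hq, hv, rfl⟩
      · exact absurd rfl hx0
      match q, hq with
      | c' :: q₀, hq =>
        have hc' : c' ∈ Λ := hq c' (by simp)
        have hq₀ : ∀ x ∈ q₀, x ∈ Λ := fun x hx => hq x (by simp [hx])
        by_cases hcc : c = c'
        · subst hcc
          rw [c_mul_EL_cons hS hc q₀ v] at hx
          have := EL_inj hS hq₀ hv hp₀ hrl hx
          left
          rw [this.1, this.2]
        · exfalso
          rw [c_mul_EL_cons_ne hS hc hc' hcc q₀ v] at hx
          exact EL_ne_zero hS hp₀ hrl hx.symm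
      | [], _ =>
        right
        rw [c_mul_EL_nil hS c v] at hx
        have := EL_inj hS (by simp) (by
          intro y hy
          rcases List.mem_append.mp hy with h1 | h1
          · exact hv y h1
          · simp at h1; rw [h1]; exact hc) hp₀ hrl hx
        exact ⟨v, hv, this.1.symm, this.2.symm, rfl⟩
    by_cases hsplit : ∃ w : List S, (∀ y ∈ w, y ∈ Λ) ∧ p₀ = [] ∧ r = w ++ [c]
    · obtain ⟨w, hw, hp0nil, hrw⟩ := hsplit
      have heq : ({t} : Set S) = S1 ∩ {EL inv [] w}ᶜ := by
        apply subset_antisymm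
        · intro x hx
          rw [Set.mem_singleton_iff] at hx
          subst hx
          refine ⟨htS1, ?_⟩
          simp only [Set.mem_compl_iff, Set.mem_singleton_iff]
          intro habs
          have := EL_inj hS hp hrl (by simp) hw habs
          simp at this
        · rintro x ⟨hx1, hx2⟩
          simp only [Set.mem_compl_iff, Set.mem_singleton_iff] at hx2
          rw [Set.mem_singleton_iff]
          rcases claim1 x hx1 with h | ⟨w', hw', _, hrw', rfl⟩
          · exact h
          · exfalso
            apply hx2
            have : w' = w := by
              have : w' ++ [c] = w ++ [c] := by rw [← hrw, ← hrw']
              exact List.append_cancel_right this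
            rw [this]
      rw [heq]
      exact hS1open.inter (isClosed_singleton.isOpen_compl)
    · have heq : ({t} : Set S) = S1 := by
        apply subset_antisymm
        · intro x hx
          rw [Set.mem_singleton_iff] at hx
          subst hx
          exact htS1
        · intro x hx1
          rw [Set.mem_singleton_iff]
          rcases claim1 x hx1 with h | ⟨w', hw', h1, h2, _⟩
          · exact h
          · exact absurd ⟨w', hw', h1, h2⟩ hsplit
      rw [heq]
      exact hS1open

lemma isolated_ne_zero (hlc : ∀ a : S, Continuous (fun x : S => a * x))
    (hrc : ∀ a : S, Continuous (fun x : S => x * a)) (x : S) (hx : x ≠ 0) :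
    IsOpen ({x} : Set S) := by
  rcases nf_exists hS x with rfl | ⟨p, r, hp, hrl, rfl⟩
  · exact absurd rfl hx
  · exact isolated_nf hS hlc hrc p r hp hrl

end Topo

section Topo2

variable [TopologicalSpace S] [T2Space S]
variable (hlc : ∀ a : S, Continuous (fun x : S => a * x))
variable (hrc : ∀ a : S, Continuous (fun x : S => x * a))
include hlc hrc

lemma zero_singleton_not_open (hnd : ¬ DiscreteTopology S) :
    ¬ IsOpen ({(0 : S)} : Set S) := by
  intro h0
  have hall : ∀ x : S, IsOpen ({x} : Set S) := by
    intro x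
    by_cases hx : x = 0
    · rw [hx]; exact h0
    · exact isolated_ne_zero hS hlc hrc x hx
  exact hnd (discreteTopology_iff_isOpen_singleton.mpr hall)

variable {U₀ : Set S} (hU : U₀ ∈ nhds (0 : S)) (hUc : IsCompact U₀)
include hU hUc

lemma nbhd_cofinite : ∀ P ∈ nhds (0 : S), (U₀ \ P).Finite := by
  intro P hP
  obtain ⟨O, hOP, hOopen, hO0⟩ := mem_nhds_iff.mp hP
  have hC : IsCompact (U₀ ∩ Oᶜ) := hUc.inter_right hOopen.isClosed_compl
  have hcov : (U₀ ∩ Oᶜ) ⊆ ⋃ (i : {x : S // x ≠ 0}), {i.1} := by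
    rintro x ⟨hxU, hxO⟩
    have hx0 : x ≠ 0 := fun h => hxO (h ▸ hO0)
    exact Set.mem_iUnion.mpr ⟨⟨x, hx0⟩, rfl⟩
  obtain ⟨t, ht⟩ := hC.elim_finite_subcover (fun i : {x : S // x ≠ 0} => ({i.1} : Set S))
    (fun i => isolated_ne_zero hS hlc hrc i.1 i.2) hcov
  have hfin : (U₀ ∩ Oᶜ).Finite :=
    Set.Finite.subset (t.finite_toSet.biUnion (fun i _ => Set.finite_singleton i.1)) ht
  apply hfin.subset
  rintro x ⟨hxU, hxP⟩
  exact ⟨hxU, fun hxO => hxP (hOP hxO)⟩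

lemma U0_infinite (hnd : ¬ DiscreteTopology S) : U₀.Infinite := by
  by_contra hni
  rw [Set.not_infinite] at hni
  have hfin := hni
  have hF : (U₀ \ {0}).Finite := hfin.subset Set.diff_subset
  have hFc : IsClosed (U₀ \ {0}) := hF.isClosed
  have hmem : (U₀ ∩ (U₀ \ {0})ᶜ) ∈ nhds (0 : S) := by
    refine Filter.inter_mem hU (hFc.isOpen_compl.mem_nhds ?_)
    simp
  have hsub : U₀ ∩ (U₀ \ {0})ᶜ ⊆ {0} := by
    rintro x ⟨hxU, hxn⟩
    by_contra hx0
    exact hxn ⟨hxU, hx0⟩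
  have h0n : ({0} : Set S) ∈ nhds (0 : S) := Filter.mem_of_superset hmem hsub
  obtain ⟨O, hO1, hO2, hO3⟩ := mem_nhds_iff.mp h0n
  have hOeq : O = ({0} : Set S) := by
    apply subset_antisymm hO1
    intro x hx
    rw [Set.mem_singleton_iff] at hx
    rwa [hx]
  exact zero_singleton_not_open hS hlc hrc hnd (hOeq ▸ hO2)

lemma CS_finite (a b : S) : {z ∈ U₀ | a * z * b ∈ U₀ᶜ}.Finite := by
  have hcont : Continuous (fun z : S => a * z * b) := (hrc b).comp (hlc a)
  have h00 : a * (0 : S) * b = 0 := by rw [mul_zero, zero_mul]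
  have hpre : (fun z : S => a * z * b) ⁻¹' U₀ ∈ nhds (0 : S) := by
    apply hcont.continuousAt.preimage_mem_nhds
    rw [h00]; exact hU
  apply (nbhd_cofinite hS hlc hrc hU hUc _ hpre).subset
  rintro z ⟨hz, hz'⟩
  exact ⟨hz, fun hmem => hz' hmem⟩

end Topo2

section Comb

variable [TopologicalSpace S] [T2Space S]
variable (hlc : ∀ a : S, Continuous (fun x : S => a * x))
variable (hrc : ∀ a : S, Continuous (fun x : S => x * a))
variable {U₀ : Set S} (hU : U₀ ∈ nhds (0 : S)) (hUc : IsCompact U₀)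
include hlc hrc hU hUc

-- abbreviation for the constraint sets, in convenient forms
lemma CSr_finite (b : S) : {z ∈ U₀ | z * b ∈ U₀ᶜ}.Finite := by
  have h := CS_finite hS hlc hrc hU hUc 1 b
  have he : {z ∈ U₀ | z * b ∈ U₀ᶜ} = {z ∈ U₀ | 1 * z * b ∈ U₀ᶜ} := by
    ext z; simp [one_mul]
  rw [he]; exact h

lemma CSl_finite (a : S) : {z ∈ U₀ | a * z ∈ U₀ᶜ}.Finite := by
  have h := CS_finite hS hlc hrc hU hUc a 1
  have he : {z ∈ U₀ | a * z ∈ U₀ᶜ} = {z ∈ U₀ | a * z * 1 ∈ U₀ᶜ} := by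
    ext z; simp [mul_one]
  rw [he]; exact h

omit hS hlc hrc hU hUc in
lemma EL_mul_c (p r : List S) (c : S) : EL inv p r * c = EL inv p (c :: r) := by
  rw [EL, EL, MW_cons, mul_assoc]

omit hlc hrc hU hUc in
lemma EL_cons_mul_invc {c : S} (hc : c ∈ Λ) (p s : List S) :
    EL inv p (c :: s) * inv c = EL inv p s := by
  rw [EL, EL, MW_cons, mul_assoc, mul_assoc, hS.gen_unit c hc, mul_one]

omit hS hlc hrc hU hUc in
lemma suffix_set_finite (s : List S) : {l : List S | l <:+ s}.Finite := by
  apply Set.Finite.subset (s.tails.finite_toSet)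
  intro l hl
  simp only [Set.mem_setOf_eq] at hl
  simpa [List.mem_tails] using hl

-- kill lemma for U₀ : some row fiber is infinite
lemma kill_U (hnd : ¬ DiscreteTopology S) :
    ∃ p : List S, (∀ x ∈ p, x ∈ Λ) ∧
      {r : List S | (∀ x ∈ r, x ∈ Λ) ∧ EL inv p r ∈ U₀}.Infinite := by
  by_contra hno
  push_neg at hno
  have hnofin : ∀ p : List S, (∀ x ∈ p, x ∈ Λ) →
      {r : List S | (∀ x ∈ r, x ∈ Λ) ∧ EL inv p r ∈ U₀}.Finite := by
    intro p hp
    have := hno p hp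
    exact this
  obtain ⟨c, hcΛ, -⟩ := exists_two hS
  set PR : Set (List S × List S) :=
    {q | (∀ x ∈ q.1, x ∈ Λ) ∧ (∀ x ∈ q.2, x ∈ Λ) ∧ EL inv q.1 q.2 ∈ U₀} with hPR
  have hPRinf : PR.Infinite := by
    have hU0inf : (U₀ \ {0}).Infinite :=
      (U0_infinite hS hlc hrc hU hUc hnd).diff (Set.finite_singleton 0)
    intro hPRfin
    apply hU0inf
    apply Set.Finite.subset (hPRfin.image (fun q => EL inv q.1 q.2))
    rintro x ⟨hxU, hx0⟩
    simp only [Set.mem_singleton_iff] at hx0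
    rcases nf_exists hS x with rfl | ⟨p, r, hp, hrl, rfl⟩
    · exact absurd rfl hx0
    · exact ⟨(p, r), ⟨hp, hrl, hxU⟩, rfl⟩
  set VIOL : Set (List S × List S × List S) :=
    {v | (∀ x ∈ v.1, x ∈ Λ) ∧ (∀ x ∈ v.2.1, x ∈ Λ) ∧ (∀ x ∈ v.2.2, x ∈ Λ) ∧
      EL inv v.1 (v.2.2 ++ v.2.1) ∈ U₀ ∧ EL inv v.1 (c :: (v.2.2 ++ v.2.1)) ∈ U₀ᶜ} with hVI
  have hVfin : VIOL.Finite := by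
    set CS := {z ∈ U₀ | z * c ∈ U₀ᶜ} with hCS
    have hCSfin : CS.Finite := CSr_finite hS hlc hrc hU hUc c
    have hsub : VIOL ⊆ ⋃ z ∈ CS, {v ∈ VIOL | EL inv v.1 (v.2.2 ++ v.2.1) = z} := by
      rintro ⟨p, r, y⟩ hv
      obtain ⟨hp, hrl, hy, hmem, hmem'⟩ := hv
      have hz : EL inv p (y ++ r) ∈ CS := by
        refine ⟨hmem, ?_⟩
        rw [EL_mul_c]
        exact hmem'
      exact Set.mem_biUnion hz ⟨⟨hp, hrl, hy, hmem, hmem'⟩, rfl⟩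
    apply Set.Finite.subset (Set.Finite.biUnion hCSfin ?_) hsub
    intro z hz
    by_cases hne : ({v ∈ VIOL | EL inv v.1 (v.2.2 ++ v.2.1) = z}).Nonempty
    · obtain ⟨⟨p₀, r₀, y₀⟩, hv₀, hz₀⟩ := hne
      apply Set.Finite.of_finite_image (f := fun v => v.2.1)
      · apply Set.Finite.subset (suffix_set_finite (y₀ ++ r₀))
        rintro l ⟨⟨p, r, y⟩, ⟨hv, hzeq⟩, rfl⟩
        obtain ⟨hp, hrl, hy, hmem, hmem'⟩ := hv
        obtain ⟨hp₀, hrl₀, hy₀, hmem₀, hmem₀'⟩ := hv₀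
        have heq := EL_inj hS hp (by
          intro x hx
          rcases List.mem_append.mp hx with h1 | h1
          exacts [hy x h1, hrl x h1]) hp₀ (by
          intro x hx
          rcases List.mem_append.mp hx with h1 | h1
          exacts [hy₀ x h1, hrl₀ x h1]) (hzeq.trans hz₀.symm)
        exact ⟨y, heq.2⟩
      · rintro ⟨p, r, y⟩ ⟨hv, hzeq⟩ ⟨p', r', y'⟩ ⟨hv', hzeq'⟩ hre
        obtain ⟨hp, hrl, hy, hmem, hmem'⟩ := hv
        obtain ⟨hp', hrl', hy', hmem2, hmem2'⟩ := hv'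
        simp only at hre
        have heq := EL_inj hS hp (by
          intro x hx
          rcases List.mem_append.mp hx with h1 | h1
          exacts [hy x h1, hrl x h1]) hp' (by
          intro x hx
          rcases List.mem_append.mp hx with h1 | h1
          exacts [hy' x h1, hrl' x h1]) (hzeq.trans hzeq'.symm)
        have h2 := heq.2
        rw [hre] at h2
        have := List.append_cancel_right h2
        simp only [Prod.mk.injEq]
        exact ⟨heq.1, hre, this⟩
    · rw [Set.not_nonempty_iff_eq_empty] at hne
      rw [hne]; exact Set.finite_empty
  -- every pair in PR yields a violation
  have hviol : ∀ q ∈ PR, ∃ y, (q.1, q.2, y) ∈ VIOL := by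
    rintro ⟨p, r⟩ ⟨hp, hrl, hmem⟩
    by_contra hnoy
    push_neg at hnoy
    have hstep : ∀ y : List S, (∀ x ∈ y, x ∈ Λ) → EL inv p (y ++ r) ∈ U₀ →
        EL inv p (c :: (y ++ r)) ∈ U₀ := by
      intro y hy hmemy
      have := hnoy y
      simp only [hVI, Set.mem_setOf_eq, not_and] at this
      have h2 := this hp hrl hy hmemy
      rwa [Set.notMem_compl_iff] at h2
    have hrep : ∀ n : ℕ, EL inv p (List.replicate n c ++ r) ∈ U₀ := by
      intro n
      induction n with
      | zero => simpa using hmem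
      | succ n ih =>
        have hy : ∀ x ∈ List.replicate n c, x ∈ Λ := by
          intro x hx
          rw [List.eq_of_mem_replicate hx]; exact hcΛ
        have := hstep (List.replicate n c) hy ih
        rwa [List.replicate_succ, List.cons_append]
    have : {r' : List S | (∀ x ∈ r', x ∈ Λ) ∧ EL inv p r' ∈ U₀}.Infinite := by
      apply Set.infinite_of_injective_forall_mem
        (f := fun n : ℕ => List.replicate n c ++ r)
      · intro m n hmn
        have : m + r.length = n + r.length := by
          have := congrArg List.length hmn
          simpa using this
        omega
      · intro n
        refine ⟨?_, hrep n⟩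
        intro x hx
        rcases List.mem_append.mp hx with h1 | h1
        · rw [List.eq_of_mem_replicate h1]; exact hcΛ
        · exact hrl x h1
    exact this (hnofin p hp)
  -- conclude
  apply hPRinf
  have hsub : PR ⊆ (fun v : List S × List S × List S => (v.1, v.2.1)) '' VIOL := by
    rintro q hq
    obtain ⟨y, hy⟩ := hviol q hq
    exact ⟨(q.1, q.2, y), hy, rfl⟩
  exact Set.Finite.subset (hVfin.image _) hsub

-- kill lemma for D = U₀ᶜ : some row fiber of the complement is infinite
lemma kill_D (hD : (U₀ᶜ).Infinite) :
    ∃ p : List S, (∀ x ∈ p, x ∈ Λ) ∧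
      {r : List S | (∀ x ∈ r, x ∈ Λ) ∧ EL inv p r ∈ U₀ᶜ}.Infinite := by
  by_contra hno
  push_neg at hno
  have hnofin : ∀ p : List S, (∀ x ∈ p, x ∈ Λ) →
      {r : List S | (∀ x ∈ r, x ∈ Λ) ∧ EL inv p r ∈ U₀ᶜ}.Finite := by
    intro p hp
    have := hno p hp
    exact this
  obtain ⟨c, hcΛ, -⟩ := exists_two hS
  have h0U : (0 : S) ∈ U₀ := mem_of_mem_nhds hU
  set PR : Set (List S × List S) :=
    {q | (∀ x ∈ q.1, x ∈ Λ) ∧ (∀ x ∈ q.2, x ∈ Λ) ∧ EL inv q.1 q.2 ∈ U₀ᶜ} with hPR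
  have hPRinf : PR.Infinite := by
    intro hPRfin
    apply hD
    apply Set.Finite.subset (hPRfin.image (fun q => EL inv q.1 q.2))
    intro x hxD
    have hx0 : x ≠ 0 := fun h => hxD (h ▸ h0U)
    rcases nf_exists hS x with rfl | ⟨p, r, hp, hrl, rfl⟩
    · exact absurd rfl hx0
    · exact ⟨(p, r), ⟨hp, hrl, hxD⟩, rfl⟩
  set VIOL : Set (List S × List S × List S) :=
    {v | (∀ x ∈ v.1, x ∈ Λ) ∧ (∀ x ∈ v.2.1, x ∈ Λ) ∧ (∀ x ∈ v.2.2, x ∈ Λ) ∧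
      EL inv v.1 (v.2.2 ++ v.2.1) ∈ U₀ᶜ ∧ EL inv v.1 (c :: (v.2.2 ++ v.2.1)) ∈ U₀} with hVI
  have hVfin : VIOL.Finite := by
    set CS := {z ∈ U₀ | z * inv c ∈ U₀ᶜ} with hCS
    have hCSfin : CS.Finite := CSr_finite hS hlc hrc hU hUc (inv c)
    have hsub : VIOL ⊆ ⋃ z ∈ CS, {v ∈ VIOL | EL inv v.1 (c :: (v.2.2 ++ v.2.1)) = z} := by
      rintro ⟨p, r, y⟩ hv
      obtain ⟨hp, hrl, hy, hmem, hmem'⟩ := hv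
      have hz : EL inv p (c :: (y ++ r)) ∈ CS := by
        refine ⟨hmem', ?_⟩
        rw [EL_cons_mul_invc hS hcΛ]
        exact hmem
      exact Set.mem_biUnion hz ⟨⟨hp, hrl, hy, hmem, hmem'⟩, rfl⟩
    apply Set.Finite.subset (Set.Finite.biUnion hCSfin ?_) hsub
    intro z hz
    by_cases hne : ({v ∈ VIOL | EL inv v.1 (c :: (v.2.2 ++ v.2.1)) = z}).Nonempty
    · obtain ⟨⟨p₀, r₀, y₀⟩, hv₀, hz₀⟩ := hne
      apply Set.Finite.of_finite_image (f := fun v => v.2.1)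
      · apply Set.Finite.subset (suffix_set_finite (y₀ ++ r₀))
        rintro l ⟨⟨p, r, y⟩, ⟨hv, hzeq⟩, rfl⟩
        obtain ⟨hp, hrl, hy, hmem, hmem'⟩ := hv
        obtain ⟨hp₀, hrl₀, hy₀, hmem₀, hmem₀'⟩ := hv₀
        have heq := EL_inj hS hp (by
          intro x hx
          simp only [List.mem_cons] at hx
          rcases hx with h1 | h1
          · rw [h1]; exact hcΛ
          rcases List.mem_append.mp h1 with h2 | h2
          exacts [hy x h2, hrl x h2]) hp₀ (by
          intro x hx
          simp only [List.mem_cons] at hx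
          rcases hx with h1 | h1
          · rw [h1]; exact hcΛ
          rcases List.mem_append.mp h1 with h2 | h2
          exacts [hy₀ x h2, hrl₀ x h2]) (hzeq.trans hz₀.symm)
        have h2 := heq.2
        rw [List.cons.injEq] at h2
        exact ⟨y, h2.2⟩
      · rintro ⟨p, r, y⟩ ⟨hv, hzeq⟩ ⟨p', r', y'⟩ ⟨hv', hzeq'⟩ hre
        obtain ⟨hp, hrl, hy, hmem, hmem'⟩ := hv
        obtain ⟨hp', hrl', hy', hmem2, hmem2'⟩ := hv'
        simp only at hre
        have heq := EL_inj hS hp (by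
          intro x hx
          simp only [List.mem_cons] at hx
          rcases hx with h1 | h1
          · rw [h1]; exact hcΛ
          rcases List.mem_append.mp h1 with h2 | h2
          exacts [hy x h2, hrl x h2]) hp' (by
          intro x hx
          simp only [List.mem_cons] at hx
          rcases hx with h1 | h1
          · rw [h1]; exact hcΛ
          rcases List.mem_append.mp h1 with h2 | h2
          exacts [hy' x h2, hrl' x h2]) (hzeq.trans hzeq'.symm)
        have h2 := heq.2
        rw [List.cons.injEq] at h2
        have h3 := h2.2
        rw [hre] at h3
        have := List.append_cancel_right h3
        simp only [Prod.mk.injEq]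
        exact ⟨heq.1, hre, this⟩
    · rw [Set.not_nonempty_iff_eq_empty] at hne
      rw [hne]; exact Set.finite_empty
  have hviol : ∀ q ∈ PR, ∃ y, (q.1, q.2, y) ∈ VIOL := by
    rintro ⟨p, r⟩ ⟨hp, hrl, hmem⟩
    by_contra hnoy
    push_neg at hnoy
    have hstep : ∀ y : List S, (∀ x ∈ y, x ∈ Λ) → EL inv p (y ++ r) ∈ U₀ᶜ →
        EL inv p (c :: (y ++ r)) ∈ U₀ᶜ := by
      intro y hy hmemy
      have := hnoy y
      simp only [hVI, Set.mem_setOf_eq, not_and] at this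
      have h2 := this hp hrl hy hmemy
      rwa [← Set.mem_compl_iff] at h2
    have hrep : ∀ n : ℕ, EL inv p (List.replicate n c ++ r) ∈ U₀ᶜ := by
      intro n
      induction n with
      | zero => simpa using hmem
      | succ n ih =>
        have hy : ∀ x ∈ List.replicate n c, x ∈ Λ := by
          intro x hx
          rw [List.eq_of_mem_replicate hx]; exact hcΛ
        have := hstep (List.replicate n c) hy ih
        rwa [List.replicate_succ, List.cons_append]
    have : {r' : List S | (∀ x ∈ r', x ∈ Λ) ∧ EL inv p r' ∈ U₀ᶜ}.Infinite := by
      apply Set.infinite_of_injective_forall_mem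
        (f := fun n : ℕ => List.replicate n c ++ r)
      · intro m n hmn
        have : m + r.length = n + r.length := by
          have := congrArg List.length hmn
          simpa using this
        omega
      · intro n
        refine ⟨?_, hrep n⟩
        intro x hx
        rcases List.mem_append.mp hx with h1 | h1
        · rw [List.eq_of_mem_replicate h1]; exact hcΛ
        · exact hrl x h1
    exact this (hnofin p hp)
  apply hPRinf
  have hsub : PR ⊆ (fun v : List S × List S × List S => (v.1, v.2.1)) '' VIOL := by
    rintro q hq
    obtain ⟨y, hy⟩ := hviol q hq
    exact ⟨(q.1, q.2, y), hy, rfl⟩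
  exact Set.Finite.subset (hVfin.image _) hsub

lemma fiberA_inf (hnd : ¬ DiscreteTopology S) :
    {r : List S | (∀ x ∈ r, x ∈ Λ) ∧ MW r ∈ U₀}.Infinite := by
  obtain ⟨p, hp, hinf⟩ := kill_U hS hlc hrc hU hUc hnd
  set EXC := {r : List S | (∀ x ∈ r, x ∈ Λ) ∧ EL inv p r ∈ U₀ ∧ MW r ∈ U₀ᶜ} with hEXC
  have hEXCfin : EXC.Finite := by
    apply Set.Finite.of_finite_image (f := fun r => EL inv p r)
    · apply Set.Finite.subset (CSl_finite hS hlc hrc hU hUc (MW p))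
      rintro z ⟨r, ⟨hrl, hmem, hmem'⟩, rfl⟩
      refine ⟨hmem, ?_⟩
      have he : MW p * EL inv p r = MW r := by rw [EL, MW_NW_cancel hS hp]
      rw [he]; exact hmem'
    · rintro r ⟨hrl, -, -⟩ r' ⟨hrl', -, -⟩ he
      exact (EL_inj hS hp hrl hp hrl' he).2
  apply Set.Infinite.mono ?_ (hinf.diff hEXCfin)
  rintro r ⟨⟨hrl, hmem⟩, hnotexc⟩
  refine ⟨hrl, ?_⟩
  by_contra hcm
  exact hnotexc ⟨hrl, hmem, hcm⟩

lemma fiberB_inf (hD : (U₀ᶜ).Infinite) :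
    {r : List S | (∀ x ∈ r, x ∈ Λ) ∧ MW r ∈ U₀ᶜ}.Infinite := by
  obtain ⟨p, hp, hinf⟩ := kill_D hS hlc hrc hU hUc hD
  set EXC := {r : List S | (∀ x ∈ r, x ∈ Λ) ∧ EL inv p r ∈ U₀ᶜ ∧ MW r ∈ U₀} with hEXC
  have hEXCfin : EXC.Finite := by
    apply Set.Finite.of_finite_image (f := fun r => MW r)
    · apply Set.Finite.subset (CSl_finite hS hlc hrc hU hUc (NW inv p))
      rintro z ⟨r, ⟨hrl, hmem, hmem'⟩, rfl⟩
      exact ⟨hmem', hmem⟩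
    · rintro r ⟨hrl, -, -⟩ r' ⟨hrl', -, -⟩ he
      exact MW_inj hS r r' hrl hrl' he
  apply Set.Infinite.mono ?_ (hinf.diff hEXCfin)
  rintro r ⟨⟨hrl, hmem⟩, hnotexc⟩
  refine ⟨hrl, ?_⟩
  intro hcm
  exact hnotexc ⟨hrl, hmem, hcm⟩

lemma battle (hnd : ¬ DiscreteTopology S) (hD : (U₀ᶜ).Infinite) : False := by
  have hA := fiberA_inf hS hlc hrc hU hUc hnd
  have hB := fiberB_inf hS hlc hrc hU hUc hD
  set A := {r : List S | (∀ x ∈ r, x ∈ Λ) ∧ MW r ∈ U₀} with hAdef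
  set B := {r : List S | (∀ x ∈ r, x ∈ Λ) ∧ MW r ∈ U₀ᶜ} with hBdef
  -- the three families of finite "bad" sets
  have F1 : ∀ u : List S, {v : List S | (∀ x ∈ v, x ∈ Λ) ∧ MW v ∈ U₀ ∧
      MW (u ++ v) ∈ U₀ᶜ}.Finite := by
    intro u
    apply Set.Finite.of_finite_image (f := fun v => MW v)
    · apply Set.Finite.subset (CSr_finite hS hlc hrc hU hUc (MW u))
      rintro z ⟨v, ⟨hv, hmem, hmem'⟩, rfl⟩
      refine ⟨hmem, ?_⟩
      rw [← MW_append]; exact hmem'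
    · rintro v ⟨hv, -, -⟩ v' ⟨hv', -, -⟩ he
      exact MW_inj hS v v' hv hv' he
  have F2 : ∀ u : List S, (∀ x ∈ u, x ∈ Λ) →
      {v : List S | (∀ x ∈ v, x ∈ Λ) ∧ MW v ∈ U₀ᶜ ∧ MW (u ++ v) ∈ U₀}.Finite := by
    intro u hu
    apply Set.Finite.of_finite_image (f := fun v => MW (u ++ v))
    · apply Set.Finite.subset (CSr_finite hS hlc hrc hU hUc (NW inv u))
      rintro z ⟨v, ⟨hv, hmem, hmem'⟩, rfl⟩
      refine ⟨hmem', ?_⟩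
      show MW (u ++ v) * NW inv u ∈ U₀ᶜ
      rw [MW_append, cancel_MW_NW hS hu]
      exact hmem
    · rintro v ⟨hv, -, -⟩ v' ⟨hv', -, -⟩ he
      have := MW_inj hS (u ++ v) (u ++ v')
        (fun x hx => by rcases List.mem_append.mp hx with h | h
                        exacts [hu x h, hv x h])
        (fun x hx => by rcases List.mem_append.mp hx with h | h
                        exacts [hu x h, hv' x h]) he
      exact List.append_cancel_left this
  have F3 : ∀ α : List S, {w : List S | (∀ x ∈ w, x ∈ Λ) ∧ MW w ∈ U₀ ∧
      MW (w ++ α) ∈ U₀ᶜ}.Finite := by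
    intro α
    apply Set.Finite.of_finite_image (f := fun w => MW w)
    · apply Set.Finite.subset (CSl_finite hS hlc hrc hU hUc (MW α))
      rintro z ⟨w, ⟨hw, hmem, hmem'⟩, rfl⟩
      refine ⟨hmem, ?_⟩
      rw [← MW_append]; exact hmem'
    · rintro w ⟨hw, -, -⟩ w' ⟨hw', -, -⟩ he
      exact MW_inj hS w w' hw hw' he
  -- chain construction
  obtain ⟨c₁, hc₁, -⟩ := exists_two hS
  have hBAD : {r : List S | (∀ x ∈ r, x ∈ Λ) ∧ MW r ∈ U₀ᶜ ∧
      MW (c₁ :: r) ∈ U₀}.Finite := by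
    have := F2 [c₁] (by simpa using hc₁)
    simpa using this
  set DEAD := {r : List S | ∃ β ∈ {r : List S | (∀ x ∈ r, x ∈ Λ) ∧ MW r ∈ U₀ᶜ ∧
      MW (c₁ :: r) ∈ U₀}, ∃ n : ℕ, List.replicate n c₁ ++ r = β} with hDEAD
  have hDEADfin : DEAD.Finite := by
    apply Set.Finite.subset (Set.Finite.biUnion hBAD
      (fun β _ => suffix_set_finite β))
    rintro r ⟨β, hβ, n, hn⟩
    exact Set.mem_biUnion hβ ⟨List.replicate n c₁, hn⟩
  obtain ⟨r₀, hr₀B, hr₀D⟩ := (hB.diff hDEADfin).nonempty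
  have chain_mem : ∀ n : ℕ, (List.replicate n c₁ ++ r₀) ∈ B := by
    intro n
    induction n with
    | zero => simpa using hr₀B
    | succ n ih =>
      obtain ⟨hll, hmem⟩ := ih
      rw [List.replicate_succ, List.cons_append]
      refine ⟨?_, ?_⟩
      · intro x hx
        simp only [List.mem_cons] at hx
        rcases hx with h | h
        · rw [h]; exact hc₁
        · exact hll x h
      · by_contra hcm
        rw [Set.notMem_compl_iff] at hcm
        exact hr₀D ⟨List.replicate n c₁ ++ r₀, ⟨hll, hmem, hcm⟩, n, rfl⟩
  -- the alphabet of the chain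
  set SIG : Set S := insert c₁ {x | x ∈ r₀} with hSIG
  have hSIGfin : SIG.Finite := (r₀.finite_toSet).insert c₁
  have hSIGΛ : SIG ⊆ Λ := by
    rintro x (rfl | hx)
    · exact hc₁
    · exact hr₀B.1 x hx
  -- bound on lengths of deep-append bad sets over SIG
  set GU := ⋃ c ∈ SIG, {w : List S | (∀ x ∈ w, x ∈ Λ) ∧ MW w ∈ U₀ ∧
      MW (w ++ [c]) ∈ U₀ᶜ} with hGU
  have hGUfin : GU.Finite := Set.Finite.biUnion hSIGfin (fun cc _ => F3 [cc])
  obtain ⟨L, hL⟩ := (hGUfin.image List.length).bddAbove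
  simp only [mem_upperBounds, Set.mem_image] at hL
  have hLbound : ∀ w ∈ GU, w.length ≤ L := fun w hw => hL _ ⟨w, hw, rfl⟩
  -- a long element of A
  set ustar := List.replicate (L + 1) c₁ with hustar
  have hustarΛ : ∀ x ∈ ustar, x ∈ Λ := by
    intro x hx
    rw [List.eq_of_mem_replicate hx]; exact hc₁
  obtain ⟨v, hvA, hvF1⟩ := (hA.diff (F1 ustar)).nonempty
  set w₀ := ustar ++ v with hw₀
  have hw₀Λ : ∀ x ∈ w₀, x ∈ Λ := by
    intro x hx
    rcases List.mem_append.mp hx with h | h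
    exacts [hustarΛ x h, hvA.1 x h]
  have hw₀U : MW w₀ ∈ U₀ := by
    by_contra hcm
    exact hvF1 ⟨hvA.1, hvA.2, hcm⟩
  have hw₀len : L + 1 ≤ w₀.length := by
    simp [hw₀, hustar]
  -- pick a chain element y avoiding the F2 w₀ bad set
  have hCHinf : {w : List S | ∃ n : ℕ, w = List.replicate n c₁ ++ r₀}.Infinite := by
    apply Set.infinite_of_injective_forall_mem
      (f := fun n : ℕ => List.replicate n c₁ ++ r₀)
    · intro m n hmn
      have : m + r₀.length = n + r₀.length := by
        have := congrArg List.length hmn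
        simpa using this
      omega
    · intro n; exact ⟨n, rfl⟩
  obtain ⟨y, ⟨n, hyn⟩, hyF2⟩ := (hCHinf.diff (F2 w₀ hw₀Λ)).nonempty
  have hyB : y ∈ B := hyn ▸ chain_mem n
  have hySIG : ∀ x ∈ y, x ∈ SIG := by
    intro x hx
    rw [hyn] at hx
    rcases List.mem_append.mp hx with h | h
    · rw [List.eq_of_mem_replicate h]; exact Set.mem_insert _ _
    · exact Set.mem_insert_of_mem _ h
  have hw₀yD : MW (w₀ ++ y) ∈ U₀ᶜ := by
    by_contra hcm
    rw [Set.notMem_compl_iff] at hcm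
    exact hyF2 ⟨hyB.1, hyB.2, hcm⟩
  -- the walk
  set P : ℕ → Prop := fun k => MW (w₀ ++ y.take k) ∈ U₀ with hP
  have hP0 : P 0 := by simpa [hP] using hw₀U
  have hPlen : ¬ P y.length := by
    simp only [hP, List.take_length]
    exact fun h => hw₀yD h
  have hstepex : ∃ k, k < y.length ∧ P k ∧ ¬ P (k + 1) := by
    by_contra hcon
    push_neg at hcon
    have hall : ∀ k, k ≤ y.length → P k := by
      intro k
      induction k with
      | zero => intro _; exact hP0
      | succ k ih =>
        intro hk
        have hk' : k < y.length := Nat.lt_of_succ_le hk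
        exact hcon k hk' (ih (Nat.le_of_lt hk'))
    exact hPlen (hall y.length le_rfl)
  obtain ⟨k, hk, hPk, hPk1⟩ := hstepex
  set cc := y[k] with hcc
  have hccSIG : cc ∈ SIG := hySIG _ (List.getElem_mem hk)
  set w := w₀ ++ y.take k with hwdef
  have hwG : w ∈ GU := by
    apply Set.mem_biUnion hccSIG
    refine ⟨?_, hPk, ?_⟩
    · intro x hx
      rcases List.mem_append.mp hx with h | h
      · exact hw₀Λ x h
      · exact hSIGΛ (hySIG x (List.mem_of_mem_take h))
    · have hconc : w ++ [cc] = w₀ ++ y.take (k + 1) := by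
        rw [hwdef, List.append_assoc]
        congr 1
        exact List.take_concat_get' y k hk
      rw [hconc]
      by_contra hcm
      rw [Set.notMem_compl_iff] at hcm
      exact hPk1 hcm
  have hwlen : w.length ≤ L := hLbound w hwG
  have : L + 1 ≤ w.length := le_trans hw₀len (by simp [hwdef])
  omega

end Comb

end PolyAux

/-- The complement of a compact neighborhood of zero in a non-discrete
locally compact semitopological polycyclic monoid is finite, hence S is compact. -/
theorem stmt14 {S : Type*} [MonoidWithZero S] (inv : S → S) (Λ : Set S)
    (hS : IsPolycyclicMonoid S inv Λ)
    [TopologicalSpace S] [T2Space S] [LocallyCompactSpace S]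
    (hl : ∀ a : S, Continuous (fun x : S => a * x))
    (hr : ∀ a : S, Continuous (fun x : S => x * a))
    (hnd : ¬ DiscreteTopology S)
    (U₀ : Set S) (hU : U₀ ∈ nhds (0 : S)) (hUc : IsCompact U₀) :
    (U₀ᶜ).Finite ∧ CompactSpace S := by
  have hDfin : (U₀ᶜ).Finite := by
    rcases Set.finite_or_infinite (U₀ᶜ) with hfin | hinf
    · exact hfin
    · exact (battle hS hl hr hU hUc hnd hinf).elim
  refine ⟨hDfin, ?_⟩
  have hcompact : IsCompact (Set.univ : Set S) := by
    rw [← Set.union_compl_self U₀]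
    exact hUc.union hDfin.isCompact
  exact isCompact_univ_iff.mp hcompact
end
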